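/- arXiv:1510.04614 — 7 statements merged into one kernel-verified Lean document; each statement's English description precedes it below -/
import Mathlib

section
/- Let f, g : ℝ → ℝ be C², strictly convex functions of superlinear growth, with unique minimizers θ_f of f and θ_g of g, and assume each of f and g satisfies: either its second derivative is bounded below by a positive constant, or every zero of its second derivative is a zero of its first derivative. Let B ∈ ℝ with f'(B) > 0 (so f(B) > f(θ_f)). Fix t > 0, R > 0, M > 0. Suppose τ : (0,R) → [0,t) is nonincreasing with τ(x) > 0 for all x, Y : (0,t) → [−M,0] is nonincreasing, and u : (0,R) → ℝ satisfies, for every x ∈ (0,R): u(x) ≥ θ_f, f'(u(x)) = x/(t − τ(x)), and f(u(x)) = max(G(τ(x)), f(B)), where G(s) = g((g')⁻¹(−Y(s)/s)) if Y(s) < 0 and G(s) = g(θ_g) if Y(s) = 0 (here (g')⁻¹ denotes the inverse of g', which is a strictly increasing bijection of ℝ). Then u has bounded (total) variation on (0,R). [This is the right-of-interface half of Theorem 3.1, stated with the Lax–Oleinik-type structure from the explicit solution formula (3.4) as hypotheses.] -/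
/-- Superlinear growth: `h u / |u| → ∞` as `|u| → ∞`. -/
def SuperlinearGrowth (h : ℝ → ℝ) : Prop :=
  Filter.Tendsto (fun q => h q / |q|) (Filter.cocompact ℝ) Filter.atTop

open Set Filter

/-- A quantitative criterion for bounded variation: if all increments of `u` on `s` are
dominated by increments of a fixed pair of functions in a telescoping way, with a uniform
bound on the telescoped quantity, then `u` has bounded variation on `s`. -/
private lemma bv_of_pq (u p q : ℝ → ℝ) (s : Set ℝ) (C : ℝ)
    (h : ∀ x ∈ s, ∀ y ∈ s, x ≤ y → |u y - u x| ≤ (p y - p x) + (q x - q y))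
    (hb : ∀ x ∈ s, ∀ y ∈ s, x ≤ y → (p y - p x) + (q x - q y) ≤ C) :
    BoundedVariationOn u s := by
  have key : eVariationOn u s ≤ ENNReal.ofReal C := by
    apply iSup_le
    rintro ⟨n, ⟨x, hmono, hmem⟩⟩
    have h1 : ∀ i : ℕ, |u (x (i + 1)) - u (x i)| ≤
        (p (x (i + 1)) - p (x i)) + (q (x i) - q (x (i + 1))) :=
      fun i => h _ (hmem i) _ (hmem (i + 1)) (hmono (Nat.le_succ i))
    calc (∑ i ∈ Finset.range n, edist (u (x (i + 1))) (u (x i)))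
        = ∑ i ∈ Finset.range n, ENNReal.ofReal (|u (x (i + 1)) - u (x i)|) := by
          refine Finset.sum_congr rfl fun i _ => ?_
          rw [edist_dist, Real.dist_eq]
      _ = ENNReal.ofReal (∑ i ∈ Finset.range n, |u (x (i + 1)) - u (x i)|) :=
          (ENNReal.ofReal_sum_of_nonneg fun i _ => abs_nonneg _).symm
      _ ≤ ENNReal.ofReal C := by
          apply ENNReal.ofReal_le_ofReal
          calc ∑ i ∈ Finset.range n, |u (x (i + 1)) - u (x i)|
              ≤ ∑ i ∈ Finset.range n,
                  ((p (x (i + 1)) - p (x i)) + (q (x i) - q (x (i + 1)))) :=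
                Finset.sum_le_sum fun i _ => h1 i
            _ = (p (x n) - p (x 0)) + (q (x 0) - q (x n)) := by
                rw [Finset.sum_add_distrib, Finset.sum_range_sub (fun i => p (x i)),
                  Finset.sum_range_sub' (fun i => q (x i))]
            _ ≤ C := hb _ (hmem 0) _ (hmem n) (hmono (Nat.zero_le n))
  exact ne_top_of_le_ne_top ENNReal.ofReal_ne_top key

/-- The second derivative of a function whose derivative is monotone is nonnegative. -/
private lemma deriv2_nonneg (h : ℝ → ℝ) (hd : Differentiable ℝ (deriv h))
    (hm : Monotone (deriv h)) (x : ℝ) : 0 ≤ deriv (deriv h) x := by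
  have hder := (hd x).hasDerivAt
  rw [hasDerivAt_iff_tendsto_slope] at hder
  refine ge_of_tendsto hder ?_
  filter_upwards [self_mem_nhdsWithin] with y hy
  have hy' : y ≠ x := hy
  rw [slope_def_field]
  rcases hy'.lt_or_gt with hxy | hxy
  · rw [div_nonneg_iff]
    right
    exact ⟨sub_nonpos.2 (hm hxy.le), by linarith⟩
  · exact div_nonneg (sub_nonneg.2 (hm hxy.le)) (by linarith)

set_option maxHeartbeats 4000000 in
/-- Right-of-interface half of Theorem 3.1: BV bound on `(0, R)` for a noncritical
connection `B ≠ θ_f`, with the Lax–Oleinik-type structure as hypotheses. -/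
theorem bv_right_of_interface_noncritical
    (f g : ℝ → ℝ) (θf θg : ℝ)
    (hf : ContDiff ℝ 2 f) (hg : ContDiff ℝ 2 g)
    (hfconv : StrictConvexOn ℝ Set.univ f) (hgconv : StrictConvexOn ℝ Set.univ g)
    (hfsup : SuperlinearGrowth f) (hgsup : SuperlinearGrowth g)
    (hθf : ∀ z : ℝ, z ≠ θf → f θf < f z) (hθg : ∀ z : ℝ, z ≠ θg → g θg < g z)
    (hfH : (∃ α > (0:ℝ), ∀ p : ℝ, α ≤ deriv (deriv f) p) ∨
      (∀ p : ℝ, deriv (deriv f) p = 0 → deriv f p = 0))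
    (hgH : (∃ α > (0:ℝ), ∀ p : ℝ, α ≤ deriv (deriv g) p) ∨
      (∀ p : ℝ, deriv (deriv g) p = 0 → deriv g p = 0))
    -- `ginv` is the inverse of `g'`, the strictly increasing bijection of ℝ
    (ginv : ℝ → ℝ)
    (hginv₁ : Function.LeftInverse ginv (deriv g))
    (hginv₂ : Function.RightInverse ginv (deriv g))
    (B t R M : ℝ) (hB : 0 < deriv f B) (ht : 0 < t) (hR : 0 < R) (hM : 0 < M)
    (τ Y u : ℝ → ℝ)
    (hτmem : ∀ x ∈ Set.Ioo (0:ℝ) R, τ x ∈ Set.Ico (0:ℝ) t)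
    (hτpos : ∀ x ∈ Set.Ioo (0:ℝ) R, 0 < τ x)
    (hτanti : AntitoneOn τ (Set.Ioo (0:ℝ) R))
    (hYmem : ∀ s ∈ Set.Ioo (0:ℝ) t, Y s ∈ Set.Icc (-M) (0:ℝ))
    (hYanti : AntitoneOn Y (Set.Ioo (0:ℝ) t))
    (hu₁ : ∀ x ∈ Set.Ioo (0:ℝ) R, θf ≤ u x)
    (hu₂ : ∀ x ∈ Set.Ioo (0:ℝ) R, deriv f (u x) = x / (t - τ x))
    (hu₃ : ∀ x ∈ Set.Ioo (0:ℝ) R,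
      f (u x) = max (if Y (τ x) < 0 then g (ginv (-(Y (τ x)) / τ x)) else g θg) (f B)) :
    BoundedVariationOn u (Set.Ioo (0:ℝ) R) := by
  classical
  -- ## Differentiability facts
  have two_eq : (2 : WithTop ℕ∞) = 1 + 1 := by norm_num
  have hf2 : ContDiff ℝ ((1:WithTop ℕ∞) + 1) f := by rw [← two_eq]; exact hf
  have hg2 : ContDiff ℝ ((1:WithTop ℕ∞) + 1) g := by rw [← two_eq]; exact hg
  have fdiff : Differentiable ℝ f := (contDiff_succ_iff_deriv.mp hf2).1
  have gdiff : Differentiable ℝ g := (contDiff_succ_iff_deriv.mp hg2).1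
  have hf1 : ContDiff ℝ 1 (deriv f) := (contDiff_succ_iff_deriv.mp hf2).2.2
  have hg1 : ContDiff ℝ 1 (deriv g) := (contDiff_succ_iff_deriv.mp hg2).2.2
  have f'diff : Differentiable ℝ (deriv f) := (contDiff_one_iff_deriv.mp hf1).1
  have g'diff : Differentiable ℝ (deriv g) := (contDiff_one_iff_deriv.mp hg1).1
  have f''cont : Continuous (deriv (deriv f)) := (contDiff_one_iff_deriv.mp hf1).2
  have g''cont : Continuous (deriv (deriv g)) := (contDiff_one_iff_deriv.mp hg1).2
  -- ## Monotonicity of the derivatives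
  have fmono : StrictMono (deriv f) := by
    have h := hfconv.strictMonoOn_deriv (fun x _ => (fdiff x))
    exact fun a b hab => h (mem_univ a) (mem_univ b) hab
  have gmono : StrictMono (deriv g) := by
    have h := hgconv.strictMonoOn_deriv (fun x _ => (gdiff x))
    exact fun a b hab => h (mem_univ a) (mem_univ b) hab
  -- ## The derivative vanishes at the minimizer
  have fθ0 : deriv f θf = 0 := by
    have hmin : IsLocalMin f θf := by
      refine Filter.Eventually.of_forall fun z => ?_
      rcases eq_or_ne z θf with rfl | hz
      · exact le_rfl
      · exact (hθf z hz).le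
    exact hmin.deriv_eq_zero
  have gθ0 : deriv g θg = 0 := by
    have hmin : IsLocalMin g θg := by
      refine Filter.Eventually.of_forall fun z => ?_
      rcases eq_or_ne z θg with rfl | hz
      · exact le_rfl
      · exact (hθg z hz).le
    exact hmin.deriv_eq_zero
  -- ## Strict monotonicity of f, g to the right of their minimizers
  have fInc : ∀ a b : ℝ, θf ≤ a → a < b → f a < f b := by
    intro a b ha hab
    obtain ⟨ξ, hξ, hs⟩ := exists_deriv_eq_slope f hab fdiff.continuous.continuousOn
      fdiff.differentiableOn
    have h1 : 0 < deriv f ξ := by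
      have h2 : deriv f θf < deriv f ξ := fmono (lt_of_le_of_lt ha hξ.1)
      rwa [fθ0] at h2
    rw [hs] at h1
    rcases div_pos_iff.mp h1 with ⟨h2, _⟩ | ⟨_, h3⟩
    · linarith
    · linarith [hξ.1, hξ.2]
  have gInc : ∀ a b : ℝ, θg ≤ a → a < b → g a < g b := by
    intro a b ha hab
    obtain ⟨ξ, hξ, hs⟩ := exists_deriv_eq_slope g hab gdiff.continuous.continuousOn
      gdiff.differentiableOn
    have h1 : 0 < deriv g ξ := by
      have h2 : deriv g θg < deriv g ξ := gmono (lt_of_le_of_lt ha hξ.1)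
      rwa [gθ0] at h2
    rw [hs] at h1
    rcases div_pos_iff.mp h1 with ⟨h2, _⟩ | ⟨_, h3⟩
    · linarith
    · linarith [hξ.1, hξ.2]
  have gIncLe : ∀ a b : ℝ, θg ≤ a → a ≤ b → g a ≤ g b := by
    intro a b ha hab
    rcases eq_or_lt_of_le hab with rfl | h
    · exact le_rfl
    · exact (gInc a b ha h).le
  have hBθf : θf < B := by
    by_contra hc
    push_neg at hc
    have h := fmono.monotone hc
    rw [fθ0] at h
    linarith
  have ginvmono : StrictMono ginv := by
    intro a b hab
    by_contra hc
    push_neg at hc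
    have h := gmono.monotone hc
    rw [hginv₂ a, hginv₂ b] at h
    linarith
  have ginv0 : ginv 0 = θg := by
    have h := hginv₁ θg
    rwa [gθ0] at h
  set S : Set ℝ := Set.Ioo (0:ℝ) R with hSdef
  -- ## Basic facts about τ and u
  have hτS : ∀ x ∈ S, τ x ∈ Set.Ioo (0:ℝ) t := fun x hx => ⟨hτpos x hx, (hτmem x hx).2⟩
  have htmτ : ∀ x ∈ S, 0 < t - τ x := fun x hx => by
    have h := (hτmem x hx).2; linarith
  have huB : ∀ x ∈ S, B ≤ u x := by
    intro x hx
    by_contra hc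
    push_neg at hc
    have h1 : f (u x) < f B := fInc (u x) B (hu₁ x hx) hc
    have h2 : f B ≤ f (u x) := by rw [hu₃ x hx]; exact le_max_right _ _
    linarith
  have hw_lb : ∀ x ∈ S, deriv f B ≤ deriv f (u x) := fun x hx => fmono.monotone (huB x hx)
  -- key inequality coming from antitonicity of τ
  have hT : ∀ x ∈ S, ∀ y ∈ S, x ≤ y → deriv f (u y) * x ≤ deriv f (u x) * y := by
    intro x hx y hy hxy
    have hτxy : τ y ≤ τ x := hτanti hx hy hxy
    have h1 : 0 < t - τ x := htmτ x hx
    have h2 : 0 < t - τ y := htmτ y hy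
    rw [hu₂ x hx, hu₂ y hy, div_mul_eq_mul_div, div_mul_eq_mul_div, div_le_div_iff₀ h2 h1]
    linarith [mul_le_mul_of_nonneg_left (by linarith : t - τ x ≤ t - τ y)
      (mul_nonneg hx.1.le hy.1.le)]
  have hτlow : ∀ x ∈ S, t - τ x ≤ x / deriv f B := by
    intro x hx
    have h1 := hu₂ x hx
    have h2 := hw_lb x hx
    have h3 := htmτ x hx
    rw [h1] at h2
    rw [le_div_iff₀ hB]
    have h4 := (le_div_iff₀ h3).mp h2
    linarith [h4]
  -- ## The point x0 and the lower bound τ ≥ t/2 to its left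
  set x0 : ℝ := min (R/2) (deriv f B * t / 2) with hx0def
  have hx0pos : 0 < x0 := lt_min (by linarith) (by positivity)
  have hx0S : x0 ∈ S := ⟨hx0pos, lt_of_le_of_lt (min_le_left _ _) (by linarith)⟩
  have hτhalf : ∀ x ∈ S, x ≤ x0 → t/2 ≤ τ x := by
    intro x hx hxx0
    have h1 := hτlow x hx
    have h2 : x / deriv f B ≤ t / 2 := by
      rw [div_le_iff₀ hB]
      have h3 := min_le_right (R/2) (deriv f B * t / 2)
      linarith
    linarith
  -- ## Bound on the flux value to the left of x0
  have hψnonneg : ∀ x ∈ S, 0 ≤ -(Y (τ x)) / τ x := fun x hx =>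
    div_nonneg (by have h := (hYmem (τ x) (hτS x hx)).2; linarith) (hτS x hx).1.le
  have hψub : ∀ x ∈ S, x ≤ x0 → -(Y (τ x)) / τ x ≤ 2*M/t := by
    intro x hx hxx0
    have hY := hYmem (τ x) (hτS x hx)
    have h1 : -(Y (τ x)) ≤ M := by have h := hY.1; linarith
    have h2 : t/2 ≤ τ x := hτhalf x hx hxx0
    have h3 : 0 < τ x := (hτS x hx).1
    rw [div_le_div_iff₀ h3 ht]
    have h4 : -(Y (τ x)) * t ≤ M * t := mul_le_mul_of_nonneg_right h1 ht.le
    have h5 : M * t ≤ M * (2 * τ x) := mul_le_mul_of_nonneg_left (by linarith) hM.le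
    linarith
  have hθgginv : ∀ p : ℝ, 0 ≤ p → θg ≤ ginv p := by
    intro p hp
    rcases eq_or_lt_of_le hp with h | h
    · rw [← h, ginv0]
    · exact le_of_lt (ginv0 ▸ ginvmono h)
  set C0 : ℝ := max (g (ginv (2*M/t))) (f B) with hC0def
  have hfuC0 : ∀ x ∈ S, x ≤ x0 → f (u x) ≤ C0 := by
    intro x hx hxx0
    rw [hu₃ x hx]
    apply max_le_max _ le_rfl
    by_cases hYx : Y (τ x) < 0
    · rw [if_pos hYx]
      exact gIncLe _ _ (hθgginv _ (hψnonneg x hx)) (ginvmono.monotone (hψub x hx hxx0))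
    · rw [if_neg hYx]
      exact gIncLe θg _ le_rfl (hθgginv _ (by positivity))
  -- ## Bound on the derivative value to the right of x0
  have hτx0t : 0 < t - τ x0 := htmτ x0 hx0S
  set V1 : ℝ := R / (t - τ x0) with hV1def
  have hV1pos : 0 < V1 := div_pos hR hτx0t
  have hwub : ∀ x ∈ S, x0 ≤ x → deriv f (u x) ≤ V1 := by
    intro x hx hx0x
    rw [hu₂ x hx]
    have h2 : t - τ x0 ≤ t - τ x := by
      have h := hτanti hx0S hx hx0x; linarith
    rw [div_le_div_iff₀ (htmτ x hx) hτx0t]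
    have h3 : x * (t - τ x0) ≤ x * (t - τ x) :=
      mul_le_mul_of_nonneg_left h2 hx.1.le
    have h4 : x * (t - τ x) ≤ R * (t - τ x) :=
      mul_le_mul_of_nonneg_right hx.2.le (htmτ x hx).le
    linarith
  -- ## Construction of a global upper bound U for u, using superlinearity
  obtain ⟨U, hUB, hU1, hfU, hf'U⟩ :
      ∃ U : ℝ, B + 1 ≤ U ∧ 1 ≤ U ∧ C0 ≤ f U ∧ V1 ≤ deriv f U := by
    have hsl : Tendsto (fun q => f q / |q|) (Filter.cocompact ℝ) atTop := hfsup
    have hcoc : Tendsto (fun q => f q / |q|) atTop atTop :=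
      hsl.mono_left atTop_le_cocompact
    have hev : ∀ᶠ q in atTop,
        V1 + |f B| + V1 * |B| + |C0| + 1 ≤ f q / |q| :=
      hcoc.eventually_ge_atTop _
    obtain ⟨U, hU⟩ := (hev.and (eventually_ge_atTop (max (B+1) 1))).exists
    have hU1 : (1:ℝ) ≤ U := le_trans (le_max_right _ _) hU.2
    have hUB : B + 1 ≤ U := le_trans (le_max_left _ _) hU.2
    have hUpos : (0:ℝ) < U := by linarith
    have hfUD : (V1 + |f B| + V1 * |B| + |C0| + 1) * U ≤ f U := by
      have h := hU.1
      rw [abs_of_pos hUpos] at h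
      exact (le_div_iff₀ hUpos).mp h
    have e1 : f B ≤ |f B| := le_abs_self (f B)
    have e2 : -|B| ≤ B := neg_abs_le B
    have e3 : (0:ℝ) ≤ |f B| + V1 * |B| + |C0| + 1 := by positivity
    
    refine ⟨U, hUB, hU1, ?_, ?_⟩
    · have e5 : (V1 + |f B| + V1 * |B| + |C0| + 1) * 1 ≤
          (V1 + |f B| + V1 * |B| + |C0| + 1) * U :=
        mul_le_mul_of_nonneg_left hU1 (by positivity)
      have e6 : C0 ≤ |C0| := le_abs_self C0
      have e7 : (0:ℝ) ≤ V1 * |B| := by positivity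
      have e8 : (0:ℝ) ≤ |f B| := abs_nonneg _
      linarith [abs_nonneg C0, hV1pos.le]
    · have hBU : B < U := by linarith
      have hslope := (hfconv.convexOn).slope_le_deriv (mem_univ B) (mem_univ U) hBU
        (fdiff U)
      rw [slope_def_field] at hslope
      have key : V1 ≤ (f U - f B) / (U - B) := by
        rw [le_div_iff₀ (by linarith : (0:ℝ) < U - B)]
        have e4' : (|f B| + V1 * |B| + |C0| + 1) * 1 ≤
            (|f B| + V1 * |B| + |C0| + 1) * U :=
          mul_le_mul_of_nonneg_left hU1 e3
        have e5 : V1 * (-|B|) ≤ V1 * B := mul_le_mul_of_nonneg_left e2 hV1pos.le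
        have e6 : V1 * (-|B|) = -(V1 * |B|) := by ring
        rw [e6] at e5
        linarith [abs_nonneg C0]
      linarith
  have hθfU : θf ≤ U := by linarith
  have huU : ∀ x ∈ S, u x ≤ U := by
    intro x hx
    rcases le_total x x0 with hle | hge
    · by_contra hc
      push_neg at hc
      have h1 := fInc U (u x) hθfU hc
      have h2 := hfuC0 x hx hle
      linarith
    · by_contra hc
      push_neg at hc
      have h1 := fmono hc
      have h2 := hwub x hx hge
      linarith
  have hBU : B ≤ U := by linarith
  -- ## Positive lower bound for f'' on [B, U]
  obtain ⟨ξf, hξf, hξfmin⟩ := isCompact_Icc.exists_isMinOn (Set.nonempty_Icc.mpr hBU)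
    (f''cont.continuousOn : ContinuousOn (deriv (deriv f)) (Set.Icc B U))
  set cf : ℝ := deriv (deriv f) ξf with hcfdef
  have hcfmin : ∀ ξ ∈ Set.Icc B U, cf ≤ deriv (deriv f) ξ := fun ξ hξ =>
    (isMinOn_iff.mp hξfmin) ξ hξ
  have hcfpos : 0 < cf := by
    rcases hfH with ⟨α, hα, hap⟩ | hzero
    · exact lt_of_lt_of_le hα (hap ξf)
    · rcases lt_or_eq_of_le (deriv2_nonneg f f'diff fmono.monotone ξf) with h | h
      · exact h
      · exfalso
        have h1 : deriv f ξf = 0 := hzero ξf h.symm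
        have h2 : ξf = θf := fmono.injective (by rw [h1, fθ0])
        have h3 := hξf.1
        rw [h2] at h3
        linarith
  -- ## MVT estimates on [B, U]
  have fLip : ∀ a b : ℝ, a ∈ Set.Icc B U → b ∈ Set.Icc B U → a ≤ b →
      cf * (b - a) ≤ deriv f b - deriv f a := by
    intro a b ha hb hab
    rcases eq_or_lt_of_le hab with rfl | hlt
    · simp
    obtain ⟨ξ, hξ, hs⟩ := exists_deriv_eq_slope (deriv f) hlt
      f'diff.continuous.continuousOn f'diff.differentiableOn
    have hξicc : ξ ∈ Set.Icc B U := ⟨le_trans ha.1 hξ.1.le, le_trans hξ.2.le hb.2⟩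
    have h1 : cf ≤ deriv (deriv f) ξ := hcfmin ξ hξicc
    rw [hs] at h1
    have h2 := (le_div_iff₀ (by linarith : (0:ℝ) < b - a)).mp h1
    linarith
  have fMVT : ∀ a b : ℝ, a ∈ Set.Icc B U → b ∈ Set.Icc B U → a ≤ b →
      deriv f B * (b - a) ≤ f b - f a := by
    intro a b ha hb hab
    rcases eq_or_lt_of_le hab with rfl | hlt
    · simp
    obtain ⟨ξ, hξ, hs⟩ := exists_deriv_eq_slope f hlt fdiff.continuous.continuousOn
      fdiff.differentiableOn
    have h1 : deriv f B ≤ deriv f ξ := fmono.monotone (le_trans ha.1 hξ.1.le)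
    rw [hs] at h1
    have h2 := (le_div_iff₀ (by linarith : (0:ℝ) < b - a)).mp h1
    linarith
  have huIcc : ∀ x ∈ S, u x ∈ Set.Icc B U := fun x hx => ⟨huB x hx, huU x hx⟩
  have huabs : ∀ x ∈ S, ∀ y ∈ S, |u y - u x| * deriv f B ≤ |f (u y) - f (u x)| := by
    intro x hx y hy
    rcases le_total (u x) (u y) with h | h
    · have h1 := fMVT (u x) (u y) (huIcc x hx) (huIcc y hy) h
      have h2 : (0:ℝ) ≤ deriv f B * (u y - u x) := mul_nonneg hB.le (by linarith)
      rw [abs_of_nonneg (by linarith : (0:ℝ) ≤ u y - u x),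
        abs_of_nonneg (by linarith : (0:ℝ) ≤ f (u y) - f (u x))]
      linarith
    · have h1 := fMVT (u y) (u x) (huIcc y hy) (huIcc x hx) h
      have h2 : (0:ℝ) ≤ deriv f B * (u x - u y) := mul_nonneg hB.le (by linarith)
      rw [abs_of_nonpos (by linarith : u y - u x ≤ 0),
        abs_of_nonpos (by linarith : f (u y) - f (u x) ≤ 0)]
      linarith
  have hwabs : ∀ x ∈ S, ∀ y ∈ S, |u y - u x| * cf ≤ |deriv f (u y) - deriv f (u x)| := by
    intro x hx y hy
    rcases le_total (u x) (u y) with h | h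
    · have h1 := fLip (u x) (u y) (huIcc x hx) (huIcc y hy) h
      have h2 : (0:ℝ) ≤ cf * (u y - u x) := mul_nonneg hcfpos.le (by linarith)
      rw [abs_of_nonneg (by linarith : (0:ℝ) ≤ u y - u x),
        abs_of_nonneg (by linarith : (0:ℝ) ≤ deriv f (u y) - deriv f (u x))]
      linarith
    · have h1 := fLip (u y) (u x) (huIcc y hy) (huIcc x hx) h
      have h2 : (0:ℝ) ≤ cf * (u x - u y) := mul_nonneg hcfpos.le (by linarith)
      rw [abs_of_nonpos (by linarith : u y - u x ≤ 0),
        abs_of_nonpos (by linarith : deriv f (u y) - deriv f (u x) ≤ 0)]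
      linarith
  -- ## Part I: bounded variation on [a, R) for every a ∈ S
  have hf'Upos : 0 < deriv f U := lt_of_lt_of_le hB (fmono.monotone hBU)
  have partI : ∀ a : ℝ, a ∈ S → BoundedVariationOn u (Set.Ico a R) := by
    intro a ha
    have hsub : Set.Ico a R ⊆ S := fun z hz => ⟨lt_of_lt_of_le ha.1 hz.1, hz.2⟩
    set K : ℝ := deriv f U / a with hKdef
    have hKpos : 0 < K := div_pos hf'Upos ha.1
    apply bv_of_pq u (fun z => (3*K/cf) * z) (fun z => deriv f (u z) / cf) _
      ((3*K/cf)*R + deriv f U / cf)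
    · intro x hx y hy hxy
      have hxS := hsub hx
      have hyS := hsub hy
      have hwx : deriv f (u x) ≤ deriv f U := fmono.monotone (huU x hxS)
      have hwy : deriv f (u y) ≤ deriv f U := fmono.monotone (huU y hyS)
      have hwxB := hw_lb x hxS
      have hwyB := hw_lb y hyS
      -- step 1 : increment of deriv f (u ·) is ≤ K (y - x)
      have h1 : deriv f (u y) - deriv f (u x) ≤ K * (y - x) := by
        rcases le_total (deriv f (u y)) (deriv f (u x)) with hc | hc
        · have := mul_nonneg hKpos.le (sub_nonneg.mpr hxy)
          linarith
        · have hT' := hT x hxS y hyS hxy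
          have hax : a ≤ x := hx.1
          have hx0 : 0 < x := hxS.1
          rw [hKdef, div_mul_eq_mul_div, le_div_iff₀ ha.1]
          have p1 : (deriv f (u y) - deriv f (u x)) * a ≤
              (deriv f (u y) - deriv f (u x)) * x :=
            mul_le_mul_of_nonneg_left hax (by linarith)
          have p3 : deriv f (u x) * (y - x) ≤ deriv f U * (y - x) :=
            mul_le_mul_of_nonneg_right hwx (by linarith)
          linarith [p1, p3, hT']
      -- step 2 : |Δ(deriv f ∘ u)| ≤ 3K(y-x) - Δ(deriv f ∘ u)
      have h2 : |deriv f (u y) - deriv f (u x)| ≤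
          3*K*(y - x) + (deriv f (u x) - deriv f (u y)) := by
        have p0 : (0:ℝ) ≤ K * (y - x) := mul_nonneg hKpos.le (by linarith)
        rcases le_total (deriv f (u y)) (deriv f (u x)) with hc | hc
        · rw [abs_of_nonpos (by linarith)]
          linarith
        · rw [abs_of_nonneg (by linarith)]
          linarith
      have h3 := hwabs x hxS y hyS
      have h4 : |u y - u x| * cf ≤ 3*K*(y - x) + (deriv f (u x) - deriv f (u y)) := by
        linarith
      have h5 : |u y - u x| ≤ (3*K*(y - x) + (deriv f (u x) - deriv f (u y))) / cf :=
        (le_div_iff₀ hcfpos).mpr h4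
      calc |u y - u x| ≤ (3*K*(y - x) + (deriv f (u x) - deriv f (u y))) / cf := h5
        _ = ((3*K/cf) * y - (3*K/cf) * x) +
            (deriv f (u x) / cf - deriv f (u y) / cf) := by
          ring
    · intro x hx y hy hxy
      have hxS := hsub hx
      have hyS := hsub hy
      have hwx : deriv f (u x) ≤ deriv f U := fmono.monotone (huU x hxS)
      have hwyB := hw_lb y hyS
      have e1 : (3*K/cf) * y - (3*K/cf) * x ≤ (3*K/cf)*R := by
        have h6 : 0 ≤ 3*K/cf := by positivity
        have h7 : (3*K/cf) * (y - x) ≤ (3*K/cf) * R :=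
          mul_le_mul_of_nonneg_left (by linarith [hx.1, ha.1, hy.2]) h6
        linarith
      have e2 : deriv f (u x) / cf - deriv f (u y) / cf ≤ deriv f U / cf := by
        rw [div_sub_div_same]
        apply div_le_div_of_nonneg_right ?_ hcfpos.le
        linarith
      linarith
  -- ## A = -(Y ∘ τ)
  have hAanti : ∀ x ∈ S, ∀ y ∈ S, x ≤ y → -(Y (τ y)) ≤ -(Y (τ x)) := by
    intro x hx y hy hxy
    have h := hYanti (hτS y hy) (hτS x hx) (hτanti hx hy hxy)
    linarith
  have hArange : ∀ x ∈ S, 0 ≤ -(Y (τ x)) ∧ -(Y (τ x)) ≤ M := by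
    intro x hx
    have h := hYmem (τ x) (hτS x hx)
    exact ⟨by linarith [h.2], by linarith [h.1]⟩
  -- ## Case analysis : A ≡ 0 (constant solution) or not
  by_cases hconst : ∀ x ∈ S, -(Y (τ x)) = 0
  · -- u is constant on S
    have hval : ∀ x ∈ S, f (u x) = max (g θg) (f B) := by
      intro x hx
      rw [hu₃ x hx, if_neg]
      push_neg
      have h := hconst x hx
      linarith
    have hcc : ∀ x ∈ S, ∀ y ∈ S, u x = u y := by
      intro x hx y hy
      have h1 : f (u x) = f (u y) := by rw [hval x hx, hval y hy]
      by_contra hne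
      rcases lt_or_gt_of_ne hne with h | h
      · exact absurd h1 (ne_of_lt (fInc _ _ (hu₁ x hx) h))
      · exact absurd h1.symm (ne_of_lt (fInc _ _ (hu₁ y hy) h))
    have h0 : eVariationOn u S = 0 := by
      apply eVariationOn.constant_on
      rintro _ ⟨x, hx, rfl⟩ _ ⟨y, hy, rfl⟩
      exact hcc x hx y hy
    show eVariationOn u S ≠ ⊤
    rw [h0]
    exact ENNReal.zero_ne_top
  · -- there is a point with A > 0 ; close to 0 the value of A stays ≥ A a₀ > 0
    push_neg at hconst
    obtain ⟨x1, hx1S, hAx1ne⟩ := hconst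
    have hAx1 : 0 < -(Y (τ x1)) := lt_of_le_of_ne (hArange x1 hx1S).1 (Ne.symm hAx1ne)
    set a₀ : ℝ := min x1 x0 with ha₀def
    have ha₀S : a₀ ∈ S := ⟨lt_min hx1S.1 hx0pos,
      lt_of_le_of_lt (min_le_right _ _) hx0S.2⟩
    have ha₀x0 : a₀ ≤ x0 := min_le_right _ _
    have hA₀ : 0 < -(Y (τ a₀)) :=
      lt_of_lt_of_le hAx1 (hAanti a₀ ha₀S x1 hx1S (min_le_left _ _))
    set lam : ℝ := -(Y (τ a₀)) / t with hlamdef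
    set Lam : ℝ := 2*M/t with hLamdef
    have hlampos : 0 < lam := div_pos hA₀ ht
    have hLampos : 0 < Lam := by positivity
    have hlamLam : lam ≤ Lam := by
      rw [hlamdef, hLamdef, div_le_div_iff₀ ht ht]
      have h1 : -(Y (τ a₀)) * t ≤ M * t :=
        mul_le_mul_of_nonneg_right (hArange a₀ ha₀S).2 ht.le
      linarith [h1, mul_pos hM ht]
    have hqθ : θg < ginv lam := ginv0 ▸ ginvmono hlampos
    have hqq : ginv lam ≤ ginv Lam := ginvmono.monotone hlamLam
    -- positive lower bound for g'' on [ginv lam, ginv Lam]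
    obtain ⟨ξg, hξg, hξgmin⟩ := isCompact_Icc.exists_isMinOn (Set.nonempty_Icc.mpr hqq)
      (g''cont.continuousOn : ContinuousOn (deriv (deriv g)) (Set.Icc (ginv lam) (ginv Lam)))
    set cg : ℝ := deriv (deriv g) ξg with hcgdef
    have hcgmin : ∀ ξ ∈ Set.Icc (ginv lam) (ginv Lam), cg ≤ deriv (deriv g) ξ := fun ξ hξ =>
      (isMinOn_iff.mp hξgmin) ξ hξ
    have hcgpos : 0 < cg := by
      rcases hgH with ⟨α, hα, hap⟩ | hzero
      · exact lt_of_lt_of_le hα (hap ξg)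
      · rcases lt_or_eq_of_le (deriv2_nonneg g g'diff gmono.monotone ξg) with h | h
        · exact h
        · exfalso
          have h1 : deriv g ξg = 0 := hzero ξg h.symm
          have h2 : ξg = θg := gmono.injective (by rw [h1, gθ0])
          have h3 := hξg.1
          rw [h2] at h3
          linarith
    -- Lipschitz estimates for p ↦ g (ginv p) on [lam, Lam]
    have gLipLow : ∀ p p' : ℝ, lam ≤ p → p ≤ p' → p' ≤ Lam →
        cg * (ginv p' - ginv p) ≤ p' - p := by
      intro p p' h1 h2 h3
      rcases eq_or_lt_of_le h2 with rfl | hlt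
      · simp
      have hgi : ginv p < ginv p' := ginvmono hlt
      obtain ⟨ξ, hξ, hs⟩ := exists_deriv_eq_slope (deriv g) hgi
        g'diff.continuous.continuousOn g'diff.differentiableOn
      have hξmem : ξ ∈ Set.Icc (ginv lam) (ginv Lam) :=
        ⟨le_trans (ginvmono.monotone h1) hξ.1.le,
         le_trans hξ.2.le (ginvmono.monotone h3)⟩
      have h4 : cg ≤ deriv (deriv g) ξ := hcgmin ξ hξmem
      rw [hs, hginv₂ p', hginv₂ p] at h4
      have h5 := (le_div_iff₀ (by linarith : (0:ℝ) < ginv p' - ginv p)).mp h4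
      linarith
    have gphi : ∀ p p' : ℝ, lam ≤ p → p ≤ p' → p' ≤ Lam →
        0 ≤ g (ginv p') - g (ginv p) ∧
        cg * (g (ginv p') - g (ginv p)) ≤ Lam * (p' - p) := by
      intro p p' h1 h2 h3
      rcases eq_or_lt_of_le h2 with rfl | hlt
      · constructor <;> simp
      have hgi : ginv p < ginv p' := ginvmono hlt
      obtain ⟨ξ, hξ, hs⟩ := exists_deriv_eq_slope g hgi gdiff.continuous.continuousOn
        gdiff.differentiableOn
      have hθξ : θg < ξ := lt_of_lt_of_le hqθ (le_trans (ginvmono.monotone h1) hξ.1.le)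
      have h5 : 0 ≤ deriv g ξ := by
        have h := gmono hθξ
        rw [gθ0] at h
        exact h.le
      have h6 : deriv g ξ ≤ Lam := by
        have h := gmono.monotone hξ.2.le
        rw [hginv₂ p'] at h
        linarith
      have hΔpos : 0 < ginv p' - ginv p := by linarith
      have hval : deriv g ξ * (ginv p' - ginv p) = g (ginv p') - g (ginv p) := by
        rw [hs]
        field_simp
      have h7 := gLipLow p p' h1 h2 h3
      constructor
      · linarith [mul_nonneg h5 hΔpos.le]
      · calc cg * (g (ginv p') - g (ginv p))
            = deriv g ξ * (cg * (ginv p' - ginv p)) := by rw [← hval]; ring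
          _ ≤ deriv g ξ * (p' - p) := mul_le_mul_of_nonneg_left h7 h5
          _ ≤ Lam * (p' - p) := mul_le_mul_of_nonneg_right h6 (by linarith)
    -- the set s₂ near the interface
    set s₂ : Set ℝ := Set.Ioc (0:ℝ) a₀ with hs₂def
    have hs₂S : s₂ ⊆ S := fun z hz => ⟨hz.1, lt_of_le_of_lt hz.2 ha₀S.2⟩
    have hA₀le : ∀ x ∈ s₂, -(Y (τ a₀)) ≤ -(Y (τ x)) := fun x hx =>
      hAanti x (hs₂S hx) a₀ ha₀S hx.2
    have hψmem : ∀ x ∈ s₂, lam ≤ -(Y (τ x)) / τ x ∧ -(Y (τ x)) / τ x ≤ Lam := by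
      intro x hx
      have hxS := hs₂S hx
      have hτx := hτS x hxS
      have h1 := hA₀le x hx
      have h2 : t/2 ≤ τ x := hτhalf x hxS (le_trans hx.2 ha₀x0)
      have h3 := (hArange x hxS).2
      have h4 := (hArange x hxS).1
      constructor
      · rw [hlamdef, div_le_div_iff₀ ht hτx.1]
        have c1 : -(Y (τ a₀)) * τ x ≤ -(Y (τ x)) * τ x :=
          mul_le_mul_of_nonneg_right h1 hτx.1.le
        have c2 : -(Y (τ x)) * τ x ≤ -(Y (τ x)) * t :=
          mul_le_mul_of_nonneg_left hτx.2.le h4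
        linarith
      · rw [hLamdef, div_le_div_iff₀ hτx.1 ht]
        have c1 : -(Y (τ x)) * t ≤ M * t := mul_le_mul_of_nonneg_right h3 ht.le
        have c2 : M * t ≤ M * (2 * τ x) := mul_le_mul_of_nonneg_left (by linarith) hM.le
        linarith
    have hψpos : ∀ x ∈ s₂, 0 < -(Y (τ x)) := fun x hx => lt_of_lt_of_le hA₀ (hA₀le x hx)
    have hvalue : ∀ x ∈ s₂, f (u x) = max (g (ginv (-(Y (τ x)) / τ x))) (f B) := by
      intro x hx
      have hxS := hs₂S hx
      have hYx : Y (τ x) < 0 := by have h := hψpos x hx; linarith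
      rw [hu₃ x hxS, if_pos hYx]
    -- pointwise increment estimate on s₂
    have hkey : ∀ x ∈ s₂, ∀ y ∈ s₂, x ≤ y →
        |u y - u x| * (cg * deriv f B) ≤
        Lam * (M * (1/τ y - 1/τ x) + (2/t) * (-(Y (τ x)) - -(Y (τ y)))) := by
      intro x hx y hy hxy
      have hxS := hs₂S hx
      have hyS := hs₂S hy
      have hτx := hτS x hxS
      have hτy := hτS y hyS
      have hτxy : τ y ≤ τ x := hτanti hxS hyS hxy
      have hτxhalf : t/2 ≤ τ x := hτhalf x hxS (le_trans hx.2 ha₀x0)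
      have hτyhalf : t/2 ≤ τ y := hτhalf y hyS (le_trans hy.2 ha₀x0)
      have hAyx : -(Y (τ y)) ≤ -(Y (τ x)) := hAanti x hxS y hyS hxy
      have hAy0 : 0 < -(Y (τ y)) := hψpos y hy
      have hAxM : -(Y (τ x)) ≤ M := (hArange x hxS).2
      have hAyM : -(Y (τ y)) ≤ M := (hArange y hyS).2
      set ψx : ℝ := -(Y (τ x)) / τ x with hψxdef
      set ψy : ℝ := -(Y (τ y)) / τ y with hψydef
      have hψxm := hψmem x hx
      have hψym := hψmem y hy
      -- |ψ y - ψ x| ≤ M (1/τy - 1/τx) + (2/t)(A x - A y)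
      have hrxy : 1/τ x ≤ 1/τ y := by
        rw [div_le_div_iff₀ hτx.1 hτy.1]
        linarith
      have hrx2t : 1/τ x ≤ 2/t := by
        rw [div_le_div_iff₀ hτx.1 ht]
        linarith
      have e4 : |ψy - ψx| ≤ M * (1/τ y - 1/τ x) + (2/t) * (-(Y (τ x)) - -(Y (τ y))) := by
        have hup : ψy - ψx ≤ M * (1/τ y - 1/τ x) := by
          have c1 : ψy = -(Y (τ y)) * (1/τ y) := by rw [hψydef]; ring
          have c2 : ψx = -(Y (τ x)) * (1/τ x) := by rw [hψxdef]; ring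
          rw [c1, c2]
          have c3 : -(Y (τ y)) * (1/τ x) ≤ -(Y (τ x)) * (1/τ x) :=
            mul_le_mul_of_nonneg_right hAyx (one_div_pos.mpr hτx.1).le
          have c5 : -(Y (τ y)) * (1/τ y - 1/τ x) ≤ M * (1/τ y - 1/τ x) :=
            mul_le_mul_of_nonneg_right hAyM (by linarith)
          linarith [c3, c5]
        have hdown : ψx - ψy ≤ (2/t) * (-(Y (τ x)) - -(Y (τ y))) := by
          have c1 : ψy = -(Y (τ y)) * (1/τ y) := by rw [hψydef]; ring
          have c2 : ψx = -(Y (τ x)) * (1/τ x) := by rw [hψxdef]; ring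
          rw [c1, c2]
          have c3 : -(Y (τ y)) * (1/τ x) ≤ -(Y (τ y)) * (1/τ y) :=
            mul_le_mul_of_nonneg_left hrxy hAy0.le
          have c4 : 0 ≤ -(Y (τ x)) - -(Y (τ y)) := by linarith
          have c6 : (-(Y (τ x)) - -(Y (τ y))) * (1/τ x) ≤
              (-(Y (τ x)) - -(Y (τ y))) * (2/t) :=
            mul_le_mul_of_nonneg_left hrx2t c4
          linarith [c3, c6]
        have hM1 : 0 ≤ M * (1/τ y - 1/τ x) := mul_nonneg hM.le (by linarith)
        have hM2 : 0 ≤ (2/t) * (-(Y (τ x)) - -(Y (τ y))) := by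
          apply mul_nonneg (by positivity)
          linarith
        rcases le_total ψx ψy with hc | hc
        · rw [abs_of_nonneg (by linarith)]
          linarith
        · rw [abs_of_nonpos (by linarith)]
          linarith
      -- cg |φy - φx| ≤ Lam |ψy - ψx|
      have e3 : cg * |g (ginv ψy) - g (ginv ψx)| ≤ Lam * |ψy - ψx| := by
        rcases le_total ψx ψy with hc | hc
        · obtain ⟨d1, d2⟩ := gphi ψx ψy hψxm.1 hc hψym.2
          rw [abs_of_nonneg d1, abs_of_nonneg (by linarith)]
          exact d2
        · obtain ⟨d1, d2⟩ := gphi ψy ψx hψym.1 hc hψxm.2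
          rw [abs_of_nonpos (by linarith), abs_of_nonpos (by linarith)]
          calc cg * -(g (ginv ψy) - g (ginv ψx))
              = cg * (g (ginv ψx) - g (ginv ψy)) := by ring
            _ ≤ Lam * (ψx - ψy) := d2
            _ = Lam * -(ψy - ψx) := by ring
      -- |Δ f(u)| ≤ |φy - φx|
      have e2 : |f (u y) - f (u x)| ≤ |g (ginv ψy) - g (ginv ψx)| := by
        rw [hvalue x hx, hvalue y hy]
        exact abs_max_sub_max_le_abs _ _ _
      have e1 := huabs x hxS y hyS
      -- chain everything
      calc |u y - u x| * (cg * deriv f B)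
          = cg * (|u y - u x| * deriv f B) := by ring
        _ ≤ cg * |f (u y) - f (u x)| :=
            mul_le_mul_of_nonneg_left e1 hcgpos.le
        _ ≤ cg * |g (ginv ψy) - g (ginv ψx)| :=
            mul_le_mul_of_nonneg_left e2 hcgpos.le
        _ ≤ Lam * |ψy - ψx| := e3
        _ ≤ Lam * (M * (1/τ y - 1/τ x) + (2/t) * (-(Y (τ x)) - -(Y (τ y)))) :=
            mul_le_mul_of_nonneg_left e4 hLampos.le
    -- bounded variation on s₂ via bv_of_pq
    have hcb : 0 < cg * deriv f B := mul_pos hcgpos hB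
    have partII : BoundedVariationOn u s₂ := by
      apply bv_of_pq u
        (fun z => Lam * M * (1/τ z) / (cg * deriv f B))
        (fun z => Lam * (2/t) * (-(Y (τ z))) / (cg * deriv f B))
        s₂ ((Lam * M * (2/t) + Lam * (2/t) * M) / (cg * deriv f B))
      · intro x hx y hy hxy
        have h1 := hkey x hx y hy hxy
        have h2 : |u y - u x| ≤
            Lam * (M * (1/τ y - 1/τ x) + (2/t) * (-(Y (τ x)) - -(Y (τ y)))) /
              (cg * deriv f B) := (le_div_iff₀ hcb).mpr h1
        calc |u y - u x| ≤ _ := h2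
          _ = (Lam * M * (1/τ y) / (cg * deriv f B) -
                Lam * M * (1/τ x) / (cg * deriv f B)) +
              (Lam * (2/t) * (-(Y (τ x))) / (cg * deriv f B) -
                Lam * (2/t) * (-(Y (τ y))) / (cg * deriv f B)) := by
            ring
      · intro x hx y hy hxy
        have hxS := hs₂S hx
        have hyS := hs₂S hy
        have hτx := hτS x hxS
        have hτy := hτS y hyS
        have hτxhalf : t/2 ≤ τ x := hτhalf x hxS (le_trans hx.2 ha₀x0)
        have hτyhalf : t/2 ≤ τ y := hτhalf y hyS (le_trans hy.2 ha₀x0)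
        have b1 : 1/τ y ≤ 2/t := by
          rw [div_le_div_iff₀ hτy.1 ht]
          linarith
        have b2 : 0 < 1/τ x := one_div_pos.mpr hτx.1
        have b3 : 0 ≤ -(Y (τ y)) := (hArange y hyS).1
        have b4 : -(Y (τ x)) ≤ M := (hArange x hxS).2
        rw [div_sub_div_same, div_sub_div_same, ← add_div]
        apply div_le_div_of_nonneg_right ?_ hcb.le
        have hLM : 0 ≤ Lam * M := by positivity
        have hL2t : 0 ≤ Lam * (2/t) := by positivity
        have d1 : Lam * M * (1/τ y) ≤ Lam * M * (2/t) :=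
          mul_le_mul_of_nonneg_left b1 hLM
        have d2 : Lam * (2/t) * (-(Y (τ x))) ≤ Lam * (2/t) * M :=
          mul_le_mul_of_nonneg_left b4 hL2t
        have d3 : 0 ≤ Lam * M * (1/τ x) := mul_nonneg hLM b2.le
        have d4 : 0 ≤ Lam * (2/t) * (-(Y (τ y))) := mul_nonneg hL2t b3
        linarith
    -- glue the two parts
    have h1 : BoundedVariationOn u (Set.Ico a₀ R) := partI a₀ ha₀S
    have hunion : S = s₂ ∪ Set.Ico a₀ R := by
      ext z
      simp only [hSdef, hs₂def, Set.mem_Ioo, Set.mem_union, Set.mem_Ioc, Set.mem_Ico]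
      constructor
      · rintro ⟨h0, hz⟩
        rcases le_total z a₀ with h | h
        · exact Or.inl ⟨h0, h⟩
        · exact Or.inr ⟨h, hz⟩
      · rintro (⟨h0, h⟩ | ⟨h, hz⟩)
        · exact ⟨h0, lt_of_le_of_lt h ha₀S.2⟩
        · exact ⟨lt_of_lt_of_le ha₀S.1 h, hz⟩
    have hgr : IsGreatest s₂ a₀ := ⟨⟨ha₀S.1, le_rfl⟩, fun z hz => hz.2⟩
    have hls : IsLeast (Set.Ico a₀ R) a₀ := ⟨⟨le_rfl, ha₀S.2⟩, fun z hz => hz.1⟩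
    show eVariationOn u S ≠ ⊤
    rw [hunion, eVariationOn.union u hgr hls]
    exact ENNReal.add_ne_top.mpr ⟨partII, h1⟩
end

section
/- Let f, g : ℝ → ℝ be C², strictly convex functions of superlinear growth, with unique minimizers θ_f of f and θ_g of g, and assume each of f and g satisfies: either its second derivative is bounded below by a positive constant, or every zero of its second derivative is a zero of its first derivative. Let A ∈ ℝ with g'(A) < 0 (so g(A) > g(θ_g)). Fix t > 0, L < 0, M > 0. Suppose τ : (L,0) → [0,t) is nondecreasing with τ(x) > 0 for all x, Z : (0,t) → [0,M] is nondecreasing, and u : (L,0) → ℝ satisfies, for every x ∈ (L,0): u(x) ≤ θ_g, g'(u(x)) = x/(t − τ(x)), and g(u(x)) = max(F(τ(x)), g(A)), where F(s) = f((f')⁻¹(−Z(s)/s)) if Z(s) > 0 and F(s) = f(θ_f) if Z(s) = 0 (here (f')⁻¹ denotes the inverse of f', which is a strictly increasing bijection of ℝ). Then u has bounded (total) variation on (L,0). [This is the left-of-interface half of Theorem 3.1, stated with the Lax–Oleinik-type structure from the explicit solution formula (3.5) as hypotheses.] -/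
open Set Filter
open scoped Topology

private lemma slope_ge_aux (h : ℝ → ℝ) (hd : Differentiable ℝ h) {a b κ : ℝ}
    (hab : a ≤ b) (hκ : ∀ ξ ∈ Set.Icc a b, κ ≤ deriv h ξ) :
    κ * (b - a) ≤ h b - h a := by
  rcases eq_or_lt_of_le hab with rfl | hlt
  · simp
  · obtain ⟨c, hc, hceq⟩ := exists_hasDerivAt_eq_slope h (deriv h) hlt
      (hd.continuous.continuousOn) (fun x _ => (hd x).hasDerivAt)
    have hb := hκ c ⟨hc.1.le, hc.2.le⟩
    rw [hceq] at hb
    have hba : (0:ℝ) < b - a := by linarith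
    calc κ * (b - a) ≤ ((h b - h a) / (b - a)) * (b - a) :=
          mul_le_mul_of_nonneg_right hb hba.le
      _ = h b - h a := div_mul_cancel₀ _ hba.ne'

private lemma slope_le_aux (h : ℝ → ℝ) (hd : Differentiable ℝ h) {a b κ : ℝ}
    (hab : a ≤ b) (hκ : ∀ ξ ∈ Set.Icc a b, deriv h ξ ≤ κ) :
    h b - h a ≤ κ * (b - a) := by
  rcases eq_or_lt_of_le hab with rfl | hlt
  · simp
  · obtain ⟨c, hc, hceq⟩ := exists_hasDerivAt_eq_slope h (deriv h) hlt
      (hd.continuous.continuousOn) (fun x _ => (hd x).hasDerivAt)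
    have hb := hκ c ⟨hc.1.le, hc.2.le⟩
    rw [hceq] at hb
    have hba : (0:ℝ) < b - a := by linarith
    calc h b - h a = ((h b - h a) / (b - a)) * (b - a) := (div_mul_cancel₀ _ hba.ne').symm
      _ ≤ κ * (b - a) := mul_le_mul_of_nonneg_right hb hba.le

private lemma deriv_nonneg_of_monotone {φ : ℝ → ℝ} {p : ℝ} (hm : Monotone φ)
    (hd : DifferentiableAt ℝ φ p) : 0 ≤ deriv φ p := by
  have h1 : Tendsto (slope φ p) (𝓝[>] p) (𝓝 (deriv φ p)) :=
    (hasDerivAt_iff_tendsto_slope.mp hd.hasDerivAt).mono_left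
      (nhdsWithin_mono p fun y hy => by simpa using (ne_of_gt hy))
  refine ge_of_tendsto h1 ?_
  filter_upwards [self_mem_nhdsWithin] with y hy
  rw [slope_def_field]
  exact div_nonneg (sub_nonneg.mpr (hm (le_of_lt hy))) (sub_nonneg.mpr (le_of_lt hy))

private lemma exists_deriv2_lb (h : ℝ → ℝ) (hd2 : Differentiable ℝ (deriv h))
    (hcont : Continuous (deriv (deriv h))) (hmono : Monotone (deriv h))
    (hH : (∃ α > (0:ℝ), ∀ p, α ≤ deriv (deriv h) p) ∨
      (∀ p, deriv (deriv h) p = 0 → deriv h p = 0))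
    {a b : ℝ} (hab : a ≤ b) (hne : ∀ ξ ∈ Set.Icc a b, deriv h ξ ≠ 0) :
    ∃ κ > (0:ℝ), ∀ ξ ∈ Set.Icc a b, κ ≤ deriv (deriv h) ξ := by
  rcases hH with ⟨α, hα, hball⟩ | hH2
  · exact ⟨α, hα, fun ξ _ => hball ξ⟩
  · obtain ⟨p₀, hp₀mem, hp₀min⟩ := (isCompact_Icc : IsCompact (Set.Icc a b)).exists_isMinOn
      (Set.nonempty_Icc.mpr hab) hcont.continuousOn
    refine ⟨deriv (deriv h) p₀, ?_, fun ξ hξ => isMinOn_iff.mp hp₀min ξ hξ⟩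
    rcases lt_or_eq_of_le (deriv_nonneg_of_monotone hmono (hd2 p₀)) with hpos | heq
    · exact hpos
    · exact absurd (hH2 p₀ heq.symm) (hne p₀ hp₀mem)

set_option maxHeartbeats 2000000

/-- Left-of-interface half of Theorem 3.1: BV bound on `(L, 0)` for a noncritical
connection `A ≠ θ_g`, with the Lax–Oleinik-type structure as hypotheses. -/
theorem bv_left_of_interface_noncritical
    (f g : ℝ → ℝ) (θf θg : ℝ)
    (hf : ContDiff ℝ 2 f) (hg : ContDiff ℝ 2 g)
    (hfconv : StrictConvexOn ℝ Set.univ f) (hgconv : StrictConvexOn ℝ Set.univ g)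
    (hfsup : SuperlinearGrowth f) (hgsup : SuperlinearGrowth g)
    (hθf : ∀ z : ℝ, z ≠ θf → f θf < f z) (hθg : ∀ z : ℝ, z ≠ θg → g θg < g z)
    (hfH : (∃ α > (0:ℝ), ∀ p : ℝ, α ≤ deriv (deriv f) p) ∨
      (∀ p : ℝ, deriv (deriv f) p = 0 → deriv f p = 0))
    (hgH : (∃ α > (0:ℝ), ∀ p : ℝ, α ≤ deriv (deriv g) p) ∨
      (∀ p : ℝ, deriv (deriv g) p = 0 → deriv g p = 0))
    -- `finv` is the inverse of `f'`, the strictly increasing bijection of ℝ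
    (finv : ℝ → ℝ)
    (hfinv₁ : Function.LeftInverse finv (deriv f))
    (hfinv₂ : Function.RightInverse finv (deriv f))
    (A t L M : ℝ) (hA : deriv g A < 0) (ht : 0 < t) (hL : L < 0) (hM : 0 < M)
    (τ Z u : ℝ → ℝ)
    (hτmem : ∀ x ∈ Set.Ioo L (0:ℝ), τ x ∈ Set.Ico (0:ℝ) t)
    (hτpos : ∀ x ∈ Set.Ioo L (0:ℝ), 0 < τ x)
    (hτmono : MonotoneOn τ (Set.Ioo L (0:ℝ)))
    (hZmem : ∀ s ∈ Set.Ioo (0:ℝ) t, Z s ∈ Set.Icc (0:ℝ) M)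
    (hZmono : MonotoneOn Z (Set.Ioo (0:ℝ) t))
    (hu₁ : ∀ x ∈ Set.Ioo L (0:ℝ), u x ≤ θg)
    (hu₂ : ∀ x ∈ Set.Ioo L (0:ℝ), deriv g (u x) = x / (t - τ x))
    (hu₃ : ∀ x ∈ Set.Ioo L (0:ℝ),
      g (u x) = max (if 0 < Z (τ x) then f (finv (-(Z (τ x)) / τ x)) else f θf) (g A)) :
    BoundedVariationOn u (Set.Ioo L (0:ℝ)) := by
  -- Differentiability package
  have h2eq : (2 : WithTop ℕ∞) = 1 + 1 := by norm_num
  have hfd : Differentiable ℝ f := hf.differentiable (by norm_num)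
  have hgd : Differentiable ℝ g := hg.differentiable (by norm_num)
  have hf1 : ContDiff ℝ 1 (deriv f) := (contDiff_succ_iff_deriv.mp (h2eq ▸ hf)).2.2
  have hg1 : ContDiff ℝ 1 (deriv g) := (contDiff_succ_iff_deriv.mp (h2eq ▸ hg)).2.2
  have hfd' : Differentiable ℝ (deriv f) := hf1.differentiable one_ne_zero
  have hgd' : Differentiable ℝ (deriv g) := hg1.differentiable one_ne_zero
  have hfc2 : Continuous (deriv (deriv f)) := hf1.continuous_deriv le_rfl
  have hgc2 : Continuous (deriv (deriv g)) := hg1.continuous_deriv le_rfl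
  have hg'mono : StrictMono (deriv g) := by
    have h := hgconv.strictMonoOn_deriv (fun x _ => hgd x)
    exact fun a b hab => h (mem_univ a) (mem_univ b) hab
  have hf'mono : StrictMono (deriv f) := by
    have h := hfconv.strictMonoOn_deriv (fun x _ => hfd x)
    exact fun a b hab => h (mem_univ a) (mem_univ b) hab
  have hθg0 : deriv g θg = 0 := by
    have hloc : IsLocalMin g θg := by
      refine Filter.Eventually.of_forall (fun z => ?_)
      rcases eq_or_ne z θg with rfl | hz
      · exact le_rfl
      · exact (hθg z hz).le
    exact hloc.deriv_eq_zero
  have hθf0 : deriv f θf = 0 := by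
    have hloc : IsLocalMin f θf := by
      refine Filter.Eventually.of_forall (fun z => ?_)
      rcases eq_or_ne z θf with rfl | hz
      · exact le_rfl
      · exact (hθf z hz).le
    exact hloc.deriv_eq_zero
  have hfinv0 : finv 0 = θf := by
    have h := hfinv₁ θf
    rwa [hθf0] at h
  have hAθg : A < θg := by
    by_contra hcon; push_neg at hcon
    have h := hg'mono.monotone hcon
    rw [hθg0] at h; linarith
  have hgstrict : ∀ a b : ℝ, a < b → b ≤ θg → g b < g a := by
    intro a b hab hbθ
    obtain ⟨c, hc, hceq⟩ := exists_hasDerivAt_eq_slope g (deriv g) hab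
      hgd.continuous.continuousOn (fun x _ => (hgd x).hasDerivAt)
    have hlt : deriv g c < 0 := by
      have h := hg'mono (lt_of_lt_of_le hc.2 hbθ)
      rwa [hθg0] at h
    have hba : (0:ℝ) < b - a := by linarith
    rw [eq_div_iff hba.ne'] at hceq
    nlinarith [mul_neg_of_neg_of_pos hlt hba]
  have hfanti : ∀ a b : ℝ, a ≤ b → b ≤ θf → f b ≤ f a := by
    intro a b hab hbθ
    have h : f b - f a ≤ 0 * (b - a) := slope_le_aux f hfd hab (fun ξ hξ => by
      have h2 := hf'mono.monotone (le_trans hξ.2 hbθ)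
      rwa [hθf0] at h2)
    have h' : f b - f a ≤ 0 := by simpa using h
    linarith
  have hfinvmono : Monotone finv := by
    intro a b hab
    by_contra hcon; push_neg at hcon
    have h := hf'mono hcon
    rw [hfinv₂ a, hfinv₂ b] at h; linarith
  by_cases hZex : ∃ s, s ∈ Set.Ioo (0:ℝ) t ∧ 0 < Z s
  swap
  · -- Z vanishes identically: u is constant
    push_neg at hZex
    have hconst : ∀ x ∈ Set.Ioo L (0:ℝ), g (u x) = max (f θf) (g A) := by
      intro x hx
      have hτx : τ x ∈ Set.Ioo (0:ℝ) t := ⟨hτpos x hx, (hτmem x hx).2⟩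
      have h := hu₃ x hx
      rwa [if_neg (not_lt.mpr (hZex (τ x) hτx))] at h
    have huconst : ∀ x ∈ Set.Ioo L (0:ℝ), ∀ x' ∈ Set.Ioo L (0:ℝ), u x = u x' := by
      intro x hx x' hx'
      by_contra hne
      rcases lt_or_gt_of_ne hne with hlt | hlt
      · have h := hgstrict (u x) (u x') hlt (hu₁ x' hx')
        rw [hconst x hx, hconst x' hx'] at h; linarith
      · have h := hgstrict (u x') (u x) hlt (hu₁ x hx)
        rw [hconst x hx, hconst x' hx'] at h; linarith
    have hvar : eVariationOn u (Set.Ioo L 0) = 0 :=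
      eVariationOn.constant_on
        (by rintro _ ⟨x, hx, rfl⟩ _ ⟨x', hx', rfl⟩; exact huconst x hx x' hx')
    rw [BoundedVariationOn, hvar]
    exact ENNReal.zero_ne_top
  obtain ⟨s₃, hs₃, hzpos⟩ := hZex
  have hs₃0 : 0 < s₃ := hs₃.1
  have hs₃t : s₃ < t := hs₃.2
  have hts₃ : 0 < t - s₃ := by linarith
  obtain ⟨z, hz_def⟩ : ∃ z : ℝ, z = Z s₃ := ⟨_, rfl⟩
  rw [← hz_def] at hzpos
  have hzM : z ≤ M := hz_def ▸ (hZmem s₃ hs₃).2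
  have hK'pos : 0 < M / s₃ := div_pos hM hs₃0
  have hzt : 0 < z / t := div_pos hzpos ht
  have hwlb : -(M/s₃) ≤ -(z/t) := by
    have h1 : z / t ≤ M / t := by gcongr
    have h2 : M / t ≤ M / s₃ := div_le_div_of_nonneg_left hM.le hs₃0 hs₃t.le
    linarith
  have hJle : finv (-(M/s₃)) ≤ finv (-(z/t)) := hfinvmono hwlb
  have hfJub : ∀ ξ ∈ Set.Icc (finv (-(M/s₃))) (finv (-(z/t))), deriv f ξ ≤ -(z/t) := by
    intro ξ hξ
    have h := hf'mono.monotone hξ.2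
    rwa [hfinv₂] at h
  have hfJlb : ∀ ξ ∈ Set.Icc (finv (-(M/s₃))) (finv (-(z/t))), -(M/s₃) ≤ deriv f ξ := by
    intro ξ hξ
    have h := hf'mono.monotone hξ.1
    rwa [hfinv₂] at h
  obtain ⟨β, hβ, hβle⟩ := exists_deriv2_lb f hfd' hfc2 hf'mono.monotone hfH hJle
    (fun ξ hξ => ne_of_lt (lt_of_le_of_lt (hfJub ξ hξ) (by linarith)))
  obtain ⟨Cg, hCg_def⟩ : ∃ C : ℝ, C = max (f (finv (-(M/s₃)))) (g A) := ⟨_, rfl⟩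
  -- construction of the lower bound m for u
  have hcoc : Filter.Tendsto (fun q => g q / |q|) Filter.atBot Filter.atTop := by
    have h := hgsup
    rw [SuperlinearGrowth, cocompact_eq_atBot_atTop] at h
    exact h.mono_left le_sup_left
  obtain ⟨c, hc_def⟩ : ∃ c : ℝ, c = |g 0| + (-L) / (t - s₃) + |Cg| + 1 := ⟨_, rfl⟩
  have hLdiv : 0 < (-L) / (t - s₃) := div_pos (by linarith) hts₃
  have hc_pos : 0 < c := by
    have h1 := abs_nonneg (g 0); have h2 := abs_nonneg Cg; rw [hc_def]; linarith
  obtain ⟨R, hR⟩ := eventually_atBot.mp (hcoc.eventually (eventually_ge_atTop c))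
  obtain ⟨m, hm_def⟩ : ∃ m : ℝ, m = min R (min (A - 1) (-1)) := ⟨_, rfl⟩
  have hmR : m ≤ R := hm_def ▸ min_le_left _ _
  have hmA1 : m ≤ A - 1 := hm_def ▸ le_trans (min_le_right _ _) (min_le_left _ _)
  have hmneg : m ≤ -1 := hm_def ▸ le_trans (min_le_right _ _) (min_le_right _ _)
  have hmA : m < A := by linarith
  have hm0 : m < 0 := by linarith
  have hgm_lb : c * (-m) ≤ g m := by
    have h1 := hR m hmR
    rw [abs_of_neg hm0] at h1
    have hpos : (0:ℝ) < -m := by linarith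
    calc c * (-m) ≤ (g m / (-m)) * (-m) := mul_le_mul_of_nonneg_right h1 hpos.le
      _ = g m := div_mul_cancel₀ _ hpos.ne'
  have hgmCg : Cg < g m := by
    have h1 : (1:ℝ) ≤ -m := by linarith
    have h2 : c ≤ c * (-m) := le_mul_of_one_le_right hc_pos.le h1
    have h3 : Cg ≤ |Cg| := le_abs_self _
    have h4 := abs_nonneg (g 0)
    have hcge : |Cg| < c := by rw [hc_def]; linarith
    linarith
  have hgm_deriv : deriv g m < L / (t - s₃) := by
    obtain ⟨ξ, hξ, hξeq⟩ := exists_hasDerivAt_eq_slope g (deriv g) hm0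
      hgd.continuous.continuousOn (fun x _ => (hgd x).hasDerivAt)
    have h2 : deriv g m < deriv g ξ := hg'mono hξ.1
    rw [hξeq] at h2
    have h3 : (g 0 - g m) / (0 - m) < L / (t - s₃) := by
      rw [div_lt_div_iff₀ (by linarith : (0:ℝ) < 0 - m) hts₃]
      have h1m : (1:ℝ) ≤ -m := by linarith
      have hq : ((-L) / (t - s₃)) * (t - s₃) = -L := div_mul_cancel₀ _ hts₃.ne'
      have hg0 : g 0 ≤ |g 0| := le_abs_self _
      have hCgnn : (0:ℝ) ≤ |Cg| := abs_nonneg _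
      have hgm_lb' : (|g 0| + (-L) / (t - s₃) + |Cg| + 1) * (-m) ≤ g m := by
        rw [← hc_def]; exact hgm_lb
      nlinarith [mul_le_mul_of_nonneg_left h1m (abs_nonneg (g 0)),
        mul_le_mul_of_nonneg_left h1m hLdiv.le,
        mul_le_mul_of_nonneg_left h1m hCgnn, hts₃]
    linarith
  -- second derivative lower bound for g on [m, A]
  obtain ⟨α, hαpos, hαle⟩ := exists_deriv2_lb g hgd' hgc2 hg'mono.monotone hgH hmA.le
    (fun ξ hξ => ne_of_lt (lt_of_le_of_lt (hg'mono.monotone hξ.2) hA))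
  obtain ⟨c₁, hc₁_def⟩ : ∃ c : ℝ, c = -deriv g A := ⟨_, rfl⟩
  have hc₁pos : 0 < c₁ := by rw [hc₁_def]; linarith
  obtain ⟨c₂, hc₂_def⟩ : ∃ c : ℝ, c = -deriv g m := ⟨_, rfl⟩
  have hLneg : L / (t - s₃) < 0 := div_neg_of_neg_of_pos hL hts₃
  have hc₂pos : 0 < c₂ := by rw [hc₂_def]; linarith
  have hτIoo : ∀ x ∈ Set.Ioo L (0:ℝ), τ x ∈ Set.Ioo (0:ℝ) t :=
    fun x hx => ⟨hτpos x hx, (hτmem x hx).2⟩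
  have huA : ∀ x ∈ Set.Ioo L (0:ℝ), u x ≤ A := by
    intro x hx
    by_contra hcon; push_neg at hcon
    have h1 := hgstrict A (u x) hcon (hu₁ x hx)
    have h2 : g A ≤ g (u x) := (hu₃ x hx) ▸ le_max_right _ _
    linarith
  have hwmem : ∀ x ∈ Set.Ioo L (0:ℝ), s₃ < τ x →
      -(M/s₃) ≤ -(Z (τ x)) / τ x ∧ -(Z (τ x)) / τ x ≤ -(z/t) := by
    intro x hx hsx
    have hτx := hτIoo x hx
    have hZx := hZmem (τ x) hτx
    have hZz : z ≤ Z (τ x) := hz_def ▸ hZmono hs₃ hτx hsx.le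
    constructor
    · rw [neg_div, neg_le_neg_iff]
      exact div_le_div₀ hM.le hZx.2 hs₃0 hsx.le
    · rw [neg_div, neg_le_neg_iff]
      exact div_le_div₀ hZx.1 hZz hτx.1 hτx.2.le
  have hum : ∀ x ∈ Set.Ioo L (0:ℝ), m ≤ u x := by
    intro x hx
    rcases le_or_gt (τ x) s₃ with hcase | hcase
    · by_contra hcon; push_neg at hcon
      have h1 : deriv g (u x) ≤ deriv g m := hg'mono.monotone hcon.le
      have hτx := hτmem x hx
      have htτ : 0 < t - τ x := by have := hτx.2; linarith
      have h3 : L / (t - s₃) ≤ x / (t - τ x) := by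
        have hLx : L / (t - τ x) ≤ x / (t - τ x) := (div_le_div_iff_of_pos_right htτ).mpr hx.1.le
        have hLL : L / (t - s₃) ≤ L / (t - τ x) := by
          rw [div_le_div_iff₀ hts₃ htτ]
          nlinarith [mul_le_mul_of_nonneg_left (show t - s₃ ≤ t - τ x by linarith)
            (neg_nonneg.mpr hL.le)]
        linarith
      rw [hu₂ x hx] at h1
      linarith
    · by_contra hcon; push_neg at hcon
      have h1 := hgstrict (u x) m hcon (by linarith : m ≤ θg)
      have hτx := hτIoo x hx
      have hZz : z ≤ Z (τ x) := hz_def ▸ hZmono hs₃ hτx hcase.le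
      have hif : 0 < Z (τ x) := lt_of_lt_of_le hzpos hZz
      have h2 := hu₃ x hx
      rw [if_pos hif] at h2
      obtain ⟨hw1, hw2⟩ := hwmem x hx hcase
      have h3 : f (finv (-(Z (τ x)) / τ x)) ≤ f (finv (-(M/s₃))) := by
        apply hfanti _ _ (hfinvmono hw1)
        calc finv (-(Z (τ x)) / τ x) ≤ finv (-(z/t)) := hfinvmono hw2
          _ ≤ finv 0 := hfinvmono (by linarith)
          _ = θf := hfinv0
      have h4 : g (u x) ≤ Cg := by
        rw [h2, hCg_def]
        exact max_le (le_trans h3 (le_max_left _ _)) (le_max_right _ _)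
      linarith
  -- Lipschitz bound for finv on the relevant interval
  have hLipfinv : ∀ w w', -(M/s₃) ≤ w → w ≤ -(z/t) → -(M/s₃) ≤ w' → w' ≤ -(z/t) →
      |finv w' - finv w| ≤ |w' - w| / β := by
    have key : ∀ w w', -(M/s₃) ≤ w → w ≤ -(z/t) → -(M/s₃) ≤ w' → w' ≤ -(z/t) → w ≤ w' →
        finv w' - finv w ≤ (w' - w) / β := by
      intro w w' h1 h2 h3 h4 hc
      have hmm := hfinvmono hc
      have hs := slope_ge_aux (deriv f) hfd' hmm (κ := β) (fun ξ hξ =>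
        hβle ξ ⟨le_trans (hfinvmono h1) hξ.1, le_trans hξ.2 (hfinvmono h4)⟩)
      rw [hfinv₂ w, hfinv₂ w'] at hs
      rw [le_div_iff₀ hβ]
      linarith [hs]
    intro w w' h1 h2 h3 h4
    rcases le_total w w' with hc | hc
    · have hmm := hfinvmono hc
      rw [abs_of_nonneg (sub_nonneg.mpr hmm), abs_of_nonneg (sub_nonneg.mpr hc)]
      exact key w w' h1 h2 h3 h4 hc
    · have hmm := hfinvmono hc
      rw [abs_of_nonpos (sub_nonpos.mpr hmm), abs_of_nonpos (sub_nonpos.mpr hc)]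
      have h5 := key w' w h3 h4 h1 h2 hc
      have h6 : -(w' - w) / β = (w - w') / β := by ring
      rw [h6]
      linarith [h5]
  -- Lipschitz bound for f on the relevant interval
  have hLipf : ∀ p p', p ∈ Set.Icc (finv (-(M/s₃))) (finv (-(z/t))) →
      p' ∈ Set.Icc (finv (-(M/s₃))) (finv (-(z/t))) →
      |f p' - f p| ≤ (M/s₃) * |p' - p| := by
    have key : ∀ p p', p ∈ Set.Icc (finv (-(M/s₃))) (finv (-(z/t))) →
        p' ∈ Set.Icc (finv (-(M/s₃))) (finv (-(z/t))) → p ≤ p' →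
        |f p' - f p| ≤ (M/s₃) * (p' - p) := by
      intro p p' hp hp' hc
      have hsub : Set.Icc p p' ⊆ Set.Icc (finv (-(M/s₃))) (finv (-(z/t))) :=
        fun ξ hξ => ⟨le_trans hp.1 hξ.1, le_trans hξ.2 hp'.2⟩
      have h1 := slope_ge_aux f hfd hc (κ := -(M/s₃)) (fun ξ hξ => hfJlb ξ (hsub hξ))
      have h2 := slope_le_aux f hfd hc (κ := 0) (fun ξ hξ => le_trans (hfJub ξ (hsub hξ)) (by linarith))
      rw [abs_of_nonpos (by linarith)]
      linarith
    intro p p' hp hp'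
    rcases le_total p p' with hc | hc
    · rw [abs_of_nonneg (sub_nonneg.mpr hc)]
      exact key p p' hp hp' hc
    · calc |f p' - f p| = |f p - f p'| := abs_sub_comm _ _
        _ ≤ (M/s₃) * (p - p') := key p' p hp' hp hc
        _ = (M/s₃) * |p' - p| := by
            rw [abs_sub_comm, abs_of_nonneg (sub_nonneg.mpr hc)]
  -- per-pair drop bounds
  obtain ⟨κa, hκa_def⟩ : ∃ k : ℝ, k = c₂ / (α * (t - s₃)) := ⟨_, rfl⟩
  obtain ⟨κb, hκb_def⟩ : ∃ k : ℝ, k = ((M/s₃) / β) / c₁ := ⟨_, rfl⟩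
  have hκa_nonneg : 0 ≤ κa := by
    rw [hκa_def]; positivity
  have hκb_nonneg : 0 ≤ κb := by
    rw [hκb_def]; positivity
  have hdropQ : ∀ x ∈ Set.Ioo L (0:ℝ), ∀ x' ∈ Set.Ioo L (0:ℝ), x ≤ x' → τ x' ≤ s₃ →
      u x - u x' ≤ κa * (τ x' - τ x) := by
    intro x hx x' hx' hxx' hcase
    have hτm : τ x ≤ τ x' := hτmono hx hx' hxx'
    have hτx := hτIoo x hx
    have hτx' := hτIoo x' hx'
    have htτ : 0 < t - τ x := by have := hτx.2; linarith
    have htτ' : 0 < t - τ x' := by have := hτx'.2; linarith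
    have hts' : t - s₃ ≤ t - τ x' := by linarith
    rcases le_or_gt (u x) (u x') with hord | hord
    · have h0 : 0 ≤ κa * (τ x' - τ x) := mul_nonneg hκa_nonneg (by linarith)
      linarith
    · have h1 := slope_ge_aux (deriv g) hgd' hord.le (κ := α)
        (fun ξ hξ => hαle ξ ⟨le_trans (hum x' hx') hξ.1, le_trans hξ.2 (huA x hx)⟩)
      rw [hu₂ x hx, hu₂ x' hx'] at h1
      have hP : -x / (t - τ x) ≤ c₂ := by
        have h2 := hg'mono.monotone (hum x hx)
        rw [hu₂ x hx] at h2
        rw [hc₂_def, neg_div]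
        linarith
      have hPx : -x ≤ c₂ * (t - τ x) := by
        rw [div_le_iff₀ htτ] at hP
        linarith
      have key : x / (t - τ x) - x' / (t - τ x') ≤ c₂ * (τ x' - τ x) / (t - s₃) := by
        rw [div_sub_div _ _ htτ.ne' htτ'.ne', div_le_div_iff₀ (mul_pos htτ htτ') hts₃]
        have h_a : x * (t - τ x') - x' * (t - τ x) ≤ (-x) * (τ x' - τ x) := by
          linarith [mul_le_mul_of_nonneg_right hxx' htτ.le]
        have h_b : (-x) * (τ x' - τ x) ≤ c₂ * (t - τ x) * (τ x' - τ x) :=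
          mul_le_mul_of_nonneg_right hPx (by linarith)
        have h_c : (x * (t - τ x') - x' * (t - τ x)) * (t - s₃)
            ≤ (c₂ * (t - τ x) * (τ x' - τ x)) * (t - s₃) :=
          mul_le_mul_of_nonneg_right (h_a.trans h_b) hts₃.le
        have h_d : (c₂ * (t - τ x) * (τ x' - τ x)) * (t - s₃)
            ≤ (c₂ * (t - τ x) * (τ x' - τ x)) * (t - τ x') :=
          mul_le_mul_of_nonneg_left hts'
            (mul_nonneg (mul_nonneg hc₂pos.le htτ.le) (by linarith))
        have h_e : (c₂ * (t - τ x) * (τ x' - τ x)) * (t - τ x')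
            = c₂ * (τ x' - τ x) * ((t - τ x) * (t - τ x')) := by ring
        linarith [h_c.trans h_d, h_e]
      have hfin : α * (u x - u x') ≤ c₂ * (τ x' - τ x) / (t - s₃) := le_trans h1 key
      have heq : α * (κa * (τ x' - τ x)) = c₂ * (τ x' - τ x) / (t - s₃) := by
        rw [hκa_def]
        field_simp
      exact le_of_mul_le_mul_left (by linarith [hfin, heq]) hαpos
  have hdropD : ∀ x ∈ Set.Ioo L (0:ℝ), ∀ x' ∈ Set.Ioo L (0:ℝ), x ≤ x' → s₃ < τ x →
      u x - u x' ≤ κb * ((Z (τ x') - Z (τ x)) / s₃ + M * (1 / τ x - 1 / τ x')) := by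
    intro x hx x' hx' hxx' hcase
    have hτm : τ x ≤ τ x' := hτmono hx hx' hxx'
    have hτ's : s₃ < τ x' := lt_of_lt_of_le hcase hτm
    have hτx := hτIoo x hx
    have hτx' := hτIoo x' hx'
    have hZmm : Z (τ x) ≤ Z (τ x') := hZmono hτx hτx' hτm
    have t1 : 0 ≤ 1 / τ x - 1 / τ x' := by
      have := one_div_le_one_div_of_le hτx.1 hτm
      linarith
    have t2 : 0 ≤ Z (τ x') - Z (τ x) := by linarith
    have hB8 : 0 ≤ (Z (τ x') - Z (τ x)) / s₃ + M * (1 / τ x - 1 / τ x') :=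
      add_nonneg (div_nonneg t2 hs₃0.le) (mul_nonneg hM.le t1)
    rcases le_or_gt (u x) (u x') with hord | hord
    · have h0 := mul_nonneg hκb_nonneg hB8
      linarith
    · have hZzx : z ≤ Z (τ x) := hz_def ▸ hZmono hs₃ hτx hcase.le
      have hZzx' : z ≤ Z (τ x') := hz_def ▸ hZmono hs₃ hτx' hτ's.le
      have hifx : 0 < Z (τ x) := lt_of_lt_of_le hzpos hZzx
      have hifx' : 0 < Z (τ x') := lt_of_lt_of_le hzpos hZzx'
      have h2 := hu₃ x hx
      rw [if_pos hifx] at h2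
      have h2' := hu₃ x' hx'
      rw [if_pos hifx'] at h2'
      obtain ⟨hw1, hw2⟩ := hwmem x hx hcase
      obtain ⟨hw1', hw2'⟩ := hwmem x' hx' hτ's
      have h3 := slope_le_aux g hgd hord.le (κ := deriv g A)
        (fun ξ hξ => hg'mono.monotone (le_trans hξ.2 (huA x hx)))
      have h4 : c₁ * (u x - u x') ≤ g (u x') - g (u x) := by
        rw [hc₁_def]; linarith
      have h5 : g (u x') - g (u x)
          ≤ |f (finv (-(Z (τ x')) / τ x')) - f (finv (-(Z (τ x)) / τ x))| := by
        rw [h2, h2']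
        calc max (f (finv (-(Z (τ x')) / τ x'))) (g A)
              - max (f (finv (-(Z (τ x)) / τ x))) (g A)
            ≤ |max (f (finv (-(Z (τ x')) / τ x'))) (g A)
              - max (f (finv (-(Z (τ x)) / τ x))) (g A)| := le_abs_self _
          _ ≤ _ := abs_max_sub_max_le_abs _ _ _
      have h6 := hLipf (finv (-(Z (τ x)) / τ x)) (finv (-(Z (τ x')) / τ x'))
        ⟨hfinvmono hw1, hfinvmono hw2⟩ ⟨hfinvmono hw1', hfinvmono hw2'⟩
      have h7 := hLipfinv (-(Z (τ x)) / τ x) (-(Z (τ x')) / τ x') hw1 hw2 hw1' hw2'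
      have h8 : |(-(Z (τ x')) / τ x') - (-(Z (τ x)) / τ x)|
          ≤ (Z (τ x') - Z (τ x)) / s₃ + M * (1 / τ x - 1 / τ x') := by
        have e : (-(Z (τ x')) / τ x') - (-(Z (τ x)) / τ x)
            = Z (τ x) * (1 / τ x - 1 / τ x') + (Z (τ x) - Z (τ x')) / τ x' := by
          field_simp [hτx.1.ne', hτx'.1.ne']
          ring
        rw [e]
        calc |Z (τ x) * (1 / τ x - 1 / τ x') + (Z (τ x) - Z (τ x')) / τ x'|
            ≤ |Z (τ x) * (1 / τ x - 1 / τ x')| + |(Z (τ x) - Z (τ x')) / τ x'| :=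
              abs_add_le _ _
          _ = Z (τ x) * (1 / τ x - 1 / τ x') + (Z (τ x') - Z (τ x)) / τ x' := by
              rw [abs_of_nonneg (mul_nonneg (hZmem (τ x) hτx).1 t1), abs_div,
                abs_of_pos hτx'.1, abs_sub_comm, abs_of_nonneg t2]
          _ ≤ M * (1 / τ x - 1 / τ x') + (Z (τ x') - Z (τ x)) / s₃ :=
              add_le_add (mul_le_mul_of_nonneg_right (hZmem (τ x) hτx).2 t1)
                (div_le_div_of_nonneg_left t2 hs₃0 hτ's.le)
          _ = (Z (τ x') - Z (τ x)) / s₃ + M * (1 / τ x - 1 / τ x') := by ring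
      have h9 : c₁ * (u x - u x')
          ≤ (M/s₃) / β * ((Z (τ x') - Z (τ x)) / s₃ + M * (1 / τ x - 1 / τ x')) := by
        calc c₁ * (u x - u x') ≤ g (u x') - g (u x) := h4
          _ ≤ |f (finv (-(Z (τ x')) / τ x')) - f (finv (-(Z (τ x)) / τ x))| := h5
          _ ≤ (M/s₃) * |finv (-(Z (τ x')) / τ x') - finv (-(Z (τ x)) / τ x)| := h6
          _ ≤ (M/s₃) * (|(-(Z (τ x')) / τ x') - (-(Z (τ x)) / τ x)| / β) :=
              mul_le_mul_of_nonneg_left h7 hK'pos.le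
          _ = (M/s₃) / β * |(-(Z (τ x')) / τ x') - (-(Z (τ x)) / τ x)| := by ring
          _ ≤ (M/s₃) / β * ((Z (τ x') - Z (τ x)) / s₃ + M * (1 / τ x - 1 / τ x')) :=
              mul_le_mul_of_nonneg_left h8 (by positivity)
      have heq : c₁ * (κb * ((Z (τ x') - Z (τ x)) / s₃ + M * (1 / τ x - 1 / τ x')))
          = (M/s₃) / β * ((Z (τ x') - Z (τ x)) / s₃ + M * (1 / τ x - 1 / τ x')) := by
        rw [hκb_def]
        field_simp
      exact le_of_mul_le_mul_left (by linarith [h9, heq]) hc₁pos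
  -- the master bound for partitions
  obtain ⟨Cb, hCb_def⟩ : ∃ C : ℝ,
      C = (A - m) + 2 * (κa * t + κb * (M / s₃ + M * (1 / s₃)) + (A - m)) := ⟨_, rfl⟩
  have main : ∀ (n : ℕ) (y : ℕ → ℝ), Monotone y → (∀ i, y i ∈ Set.Ioo L (0:ℝ)) →
      ∑ i ∈ Finset.range n, |u (y (i+1)) - u (y i)| ≤ Cb := by
    intro n y hymono hymem
    have hτy : ∀ i j : ℕ, i ≤ j → τ (y i) ≤ τ (y j) :=
      fun i j hij => hτmono (hymem i) (hymem j) (hymono hij)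
    set T : ℕ → ℝ := fun i => max (τ (y i)) s₃ with hT_def
    have hTmem : ∀ i, T i ∈ Set.Ioo (0:ℝ) t :=
      fun i => ⟨lt_of_lt_of_le hs₃0 (le_max_right _ _),
        max_lt (hτIoo (y i) (hymem i)).2 hs₃t⟩
    have hTmono : ∀ i j : ℕ, i ≤ j → T i ≤ T j :=
      fun i j hij => max_le_max (hτy i j hij) le_rfl
    have hTlb : ∀ i, s₃ ≤ T i := fun i => le_max_right _ _
    have hZT : ∀ i j : ℕ, i ≤ j → Z (T i) ≤ Z (T j) :=
      fun i j hij => hZmono (hTmem i) (hTmem j) (hTmono i j hij)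
    have hinvT : ∀ i j : ℕ, i ≤ j → 1 / T j ≤ 1 / T i :=
      fun i j hij => one_div_le_one_div_of_le (hTmem i).1 (hTmono i j hij)
    set B : ℕ → ℝ := fun i => κa * (τ (y (i+1)) - τ (y i))
      + κb * ((Z (T (i+1)) - Z (T i)) / s₃ + M * (1 / T i - 1 / T (i+1)))
      + (if τ (y i) ≤ s₃ ∧ s₃ < τ (y (i+1)) then A - m else 0) with hB_def
    have hBa : ∀ i : ℕ, 0 ≤ κa * (τ (y (i+1)) - τ (y i)) := by
      intro i
      have t3 := hτy i (i+1) (Nat.le_succ i)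
      exact mul_nonneg hκa_nonneg (by linarith)
    have hBb : ∀ i : ℕ,
        0 ≤ κb * ((Z (T (i+1)) - Z (T i)) / s₃ + M * (1 / T i - 1 / T (i+1))) := by
      intro i
      have t1 := hZT i (i+1) (Nat.le_succ i)
      have t2 := hinvT i (i+1) (Nat.le_succ i)
      exact mul_nonneg hκb_nonneg (add_nonneg (div_nonneg (by linarith) hs₃0.le)
        (mul_nonneg hM.le (by linarith)))
    have hBc : ∀ i : ℕ,
        (0:ℝ) ≤ (if τ (y i) ≤ s₃ ∧ s₃ < τ (y (i+1)) then A - m else 0) := by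
      intro i
      split_ifs with h
      · linarith
      · exact le_rfl
    have hBnn : ∀ i, 0 ≤ B i := by
      intro i
      have := hBa i; have := hBb i; have := hBc i
      simp only [hB_def]
      linarith
    have hkey : ∀ i, u (y i) - u (y (i+1)) ≤ B i := by
      intro i
      have hx := hymem i
      have hx' := hymem (i+1)
      have hyle : y i ≤ y (i+1) := hymono (Nat.le_succ i)
      rcases le_or_gt (τ (y (i+1))) s₃ with hc1 | hc1
      · have hq := hdropQ (y i) hx (y (i+1)) hx' hyle hc1
        have := hBb i; have := hBc i
        simp only [hB_def]
        linarith
      · rcases le_or_gt (τ (y i)) s₃ with hc2 | hc2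
        · have h4 : u (y i) - u (y (i+1)) ≤ A - m := by
            have := huA (y i) hx
            have := hum (y (i+1)) hx'
            linarith
          have := hBa i; have := hBb i
          simp only [hB_def, if_pos (⟨hc2, hc1⟩ : τ (y i) ≤ s₃ ∧ s₃ < τ (y (i+1)))]
          linarith
        · have e1 : T i = τ (y i) := max_eq_left hc2.le
          have e2 : T (i+1) = τ (y (i+1)) := max_eq_left hc1.le
          have hd := hdropD (y i) hx (y (i+1)) hx' hyle hc2
          have := hBa i
          simp only [hB_def, e1, e2,
            if_neg (fun hcon => absurd hcon.1 (not_le.mpr hc2) :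
              ¬(τ (y i) ≤ s₃ ∧ s₃ < τ (y (i+1))))]
          linarith
    have habs : ∀ i, |u (y (i+1)) - u (y i)| ≤ (u (y (i+1)) - u (y i)) + 2 * B i := by
      intro i
      have h1 := hkey i
      have h2 := hBnn i
      rcases abs_cases (u (y (i+1)) - u (y i)) with ⟨he, _⟩ | ⟨he, _⟩ <;> rw [he] <;> linarith
    have hsum1 : ∑ i ∈ Finset.range n, ((u (y (i+1)) - u (y i)) + 2 * B i)
        = (u (y n) - u (y 0)) + 2 * ∑ i ∈ Finset.range n, B i := by
      rw [Finset.sum_add_distrib, Finset.sum_range_sub (fun i => u (y i)), ← Finset.mul_sum]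
    have hsplit : ∑ i ∈ Finset.range n, B i
        = κa * (τ (y n) - τ (y 0))
        + κb * ((Z (T n) - Z (T 0)) / s₃ + M * (1 / T 0 - 1 / T n))
        + ∑ i ∈ Finset.range n,
            (if τ (y i) ≤ s₃ ∧ s₃ < τ (y (i+1)) then A - m else 0) := by
      simp only [hB_def]
      rw [Finset.sum_add_distrib, Finset.sum_add_distrib]
      congr 2
      · rw [← Finset.mul_sum, Finset.sum_range_sub (fun i => τ (y i))]
      · rw [← Finset.mul_sum]
        congr 1
        rw [Finset.sum_add_distrib, ← Finset.sum_div,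
          Finset.sum_range_sub (fun i => Z (T i)), ← Finset.mul_sum,
          Finset.sum_range_sub' (fun i => 1 / T i)]
    have hsumB : ∑ i ∈ Finset.range n, B i
        ≤ κa * t + κb * (M / s₃ + M * (1 / s₃)) + (A - m) := by
      have hτ0 : 0 ≤ τ (y 0) := (hτmem (y 0) (hymem 0)).1
      have hτn : τ (y n) ≤ t := (hτmem (y n) (hymem n)).2.le
      have p1 : κa * (τ (y n) - τ (y 0)) ≤ κa * t :=
        mul_le_mul_of_nonneg_left (by linarith) hκa_nonneg
      have hZ0 : 0 ≤ Z (T 0) := (hZmem _ (hTmem 0)).1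
      have hZn : Z (T n) ≤ M := (hZmem _ (hTmem n)).2
      have hiT0 : 1 / T 0 ≤ 1 / s₃ := one_div_le_one_div_of_le hs₃0 (hTlb 0)
      have hiTn : 0 < 1 / T n := by
        have := (hTmem n).1
        positivity
      have p2 : κb * ((Z (T n) - Z (T 0)) / s₃ + M * (1 / T 0 - 1 / T n))
          ≤ κb * (M / s₃ + M * (1 / s₃)) := by
        apply mul_le_mul_of_nonneg_left ?_ hκb_nonneg
        have q1 : (Z (T n) - Z (T 0)) / s₃ ≤ M / s₃ :=
          (div_le_div_iff_of_pos_right hs₃0).mpr (by linarith)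
        have q2 : M * (1 / T 0 - 1 / T n) ≤ M * (1 / s₃) :=
          mul_le_mul_of_nonneg_left (by linarith) hM.le
        linarith
      have p3 : ∑ i ∈ Finset.range n,
          (if τ (y i) ≤ s₃ ∧ s₃ < τ (y (i+1)) then A - m else 0) ≤ A - m := by
        have hcard : (Finset.filter (fun i => τ (y i) ≤ s₃ ∧ s₃ < τ (y (i+1)))
            (Finset.range n)).card ≤ 1 := by
          rw [Finset.card_le_one]
          intro a ha b hb
          simp only [Finset.mem_filter] at ha hb
          by_contra hne
          rcases Nat.lt_or_ge a b with hab | hab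
          · have h5 := hτy (a+1) b hab
            linarith [ha.2.2, hb.2.1]
          · have hba : b < a := lt_of_le_of_ne hab (Ne.symm hne)
            have h5 := hτy (b+1) a hba
            linarith [hb.2.2, ha.2.1]
        calc ∑ i ∈ Finset.range n,
              (if τ (y i) ≤ s₃ ∧ s₃ < τ (y (i+1)) then A - m else 0)
            = ∑ i ∈ Finset.filter (fun i => τ (y i) ≤ s₃ ∧ s₃ < τ (y (i+1)))
                (Finset.range n), (A - m) := by
              rw [Finset.sum_filter]
          _ = ((Finset.filter (fun i => τ (y i) ≤ s₃ ∧ s₃ < τ (y (i+1)))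
                (Finset.range n)).card : ℝ) * (A - m) := by
              rw [Finset.sum_const, nsmul_eq_mul]
          _ ≤ 1 * (A - m) := by
              apply mul_le_mul_of_nonneg_right _ (by linarith)
              exact_mod_cast hcard
          _ = A - m := one_mul _
      rw [hsplit]
      linarith
    calc ∑ i ∈ Finset.range n, |u (y (i+1)) - u (y i)|
        ≤ ∑ i ∈ Finset.range n, ((u (y (i+1)) - u (y i)) + 2 * B i) :=
          Finset.sum_le_sum (fun i _ => habs i)
      _ = (u (y n) - u (y 0)) + 2 * ∑ i ∈ Finset.range n, B i := hsum1
      _ ≤ Cb := by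
          have h1 := huA (y n) (hymem n)
          have h2 := hum (y 0) (hymem 0)
          rw [hCb_def]
          linarith [hsumB]
  -- conclude
  have hfinal : eVariationOn u (Set.Ioo L (0:ℝ)) ≤ ENNReal.ofReal Cb := by
    apply iSup_le
    rintro ⟨n, y, hymono, hymem⟩
    calc (∑ i ∈ Finset.range n, edist (u (y (i + 1))) (u (y i)))
        = ∑ i ∈ Finset.range n, ENNReal.ofReal |u (y (i+1)) - u (y i)| := by
          refine Finset.sum_congr rfl (fun i _ => ?_)
          rw [edist_dist, Real.dist_eq]
      _ = ENNReal.ofReal (∑ i ∈ Finset.range n, |u (y (i+1)) - u (y i)|) :=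
          (ENNReal.ofReal_sum_of_nonneg (fun i _ => abs_nonneg _)).symm
      _ ≤ ENNReal.ofReal Cb := ENNReal.ofReal_le_ofReal (main n y hymono hymem)
  exact ne_top_of_le_ne_top ENNReal.ofReal_ne_top hfinal
end

section
/- Let f, g : ℝ → ℝ be C², strictly convex functions of superlinear growth, with unique minimizers θ_f of f and θ_g of g, satisfying f(θ_f) < g(θ_g), and assume each of f and g satisfies: either its second derivative is bounded below by a positive constant, or every zero of its second derivative is a zero of its first derivative. Fix t > 0, R > 0, M > 0. Suppose τ : (0,R) → [0,t) is nonincreasing, Y : (0,t) → [−M,0] is nonincreasing, u : (0,R) → ℝ satisfies u(x) ≥ θ_f for all x, and there exists ε ∈ (0,R) such that: τ(ε) > 0 and Y(τ(ε)) < 0; for every x ∈ (0,ε), f(u(x)) = g((g')⁻¹(−Y(τ(x))/τ(x))); and for every x ∈ (ε,R), f'(u(x)) = x/(t − τ(x)). Then u has bounded (total) variation on (0,R). [This is the right-of-interface content of Theorem 3.2, Case 1, stated with the Lax–Oleinik-type structure and Rankine–Hugoniot identity (3.31)–(3.32) as hypotheses.] -/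
set_option maxHeartbeats 1000000

open Set Filter

section Helpers




lemma evar_le_of_dist_le {s : Set ℝ} (q a b c : ℝ → ℝ) {K1 K2 K3 : ℝ}
    (h1 : 0 ≤ K1) (h2 : 0 ≤ K2) (h3 : 0 ≤ K3)
    (h : ∀ x ∈ s, ∀ y ∈ s, |q x - q y| ≤ K1 * |a x - a y| + K2 * |b x - b y| + K3 * |c x - c y|) :
    eVariationOn q s ≤ ENNReal.ofReal K1 * eVariationOn a s + ENNReal.ofReal K2 * eVariationOn b s
      + ENNReal.ofReal K3 * eVariationOn c s := by
  apply iSup_le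
  rintro ⟨n, u, hu, us⟩
  have key : ∀ i : ℕ, edist (q (u (i+1))) (q (u i)) ≤
      ENNReal.ofReal K1 * edist (a (u (i+1))) (a (u i)) +
      ENNReal.ofReal K2 * edist (b (u (i+1))) (b (u i)) +
      ENNReal.ofReal K3 * edist (c (u (i+1))) (c (u i)) := by
    intro i
    rw [edist_dist, edist_dist, edist_dist, edist_dist, Real.dist_eq, Real.dist_eq,
      Real.dist_eq, Real.dist_eq, ← ENNReal.ofReal_mul h1, ← ENNReal.ofReal_mul h2,
      ← ENNReal.ofReal_mul h3, ← ENNReal.ofReal_add (by positivity) (by positivity),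
      ← ENNReal.ofReal_add (by positivity) (by positivity)]
    exact ENNReal.ofReal_le_ofReal (h _ (us _) _ (us _))
  calc ∑ i ∈ Finset.range n, edist (q (u (i+1))) (q (u i))
      ≤ ∑ i ∈ Finset.range n, (ENNReal.ofReal K1 * edist (a (u (i+1))) (a (u i)) +
        ENNReal.ofReal K2 * edist (b (u (i+1))) (b (u i)) +
        ENNReal.ofReal K3 * edist (c (u (i+1))) (c (u i))) :=
        Finset.sum_le_sum fun i _ => key i
    _ = ENNReal.ofReal K1 * ∑ i ∈ Finset.range n, edist (a (u (i+1))) (a (u i)) +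
        ENNReal.ofReal K2 * ∑ i ∈ Finset.range n, edist (b (u (i+1))) (b (u i)) +
        ENNReal.ofReal K3 * ∑ i ∈ Finset.range n, edist (c (u (i+1))) (c (u i)) := by
        rw [Finset.sum_add_distrib, Finset.sum_add_distrib, Finset.mul_sum, Finset.mul_sum,
          Finset.mul_sum]
    _ ≤ _ := by
        gcongr <;> exact eVariationOn.sum_le hu us

lemma evar_le_of_monotoneOn {f : ℝ → ℝ} {s : Set ℝ} (hf : MonotoneOn f s) {lo hi : ℝ}
    (hb : ∀ x ∈ s, f x ∈ Set.Icc lo hi) : eVariationOn f s ≤ ENNReal.ofReal (hi - lo) := by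
  apply iSup_le
  rintro ⟨n, u, hu, us⟩
  calc (∑ i ∈ Finset.range n, edist (f (u (i+1))) (f (u i)))
      = ∑ i ∈ Finset.range n, ENNReal.ofReal (f (u (i+1)) - f (u i)) :=
        Finset.sum_congr rfl fun i _ => by
          rw [edist_dist, Real.dist_eq,
            abs_of_nonneg (sub_nonneg_of_le (hf (us i) (us (i+1)) (hu (Nat.le_succ _))))]
    _ = ENNReal.ofReal (∑ i ∈ Finset.range n, (f (u (i+1)) - f (u i))) :=
        (ENNReal.ofReal_sum_of_nonneg fun i _ =>
          sub_nonneg_of_le (hf (us i) (us (i+1)) (hu (Nat.le_succ _)))).symm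
    _ = ENNReal.ofReal (f (u n) - f (u 0)) := by rw [Finset.sum_range_sub fun i => f (u i)]
    _ ≤ ENNReal.ofReal (hi - lo) := ENNReal.ofReal_le_ofReal (by
        have h0 := hb _ (us 0); have hn := hb _ (us n)
        have := h0.1; have := hn.2; linarith)

lemma mvt_uIcc {h : ℝ → ℝ} (hd : Differentiable ℝ h) (x y : ℝ) :
    ∃ c ∈ Set.uIcc x y, h y - h x = deriv h c * (y - x) := by
  rcases lt_trichotomy x y with hxy | rfl | hxy
  · obtain ⟨c, hc, hc'⟩ := exists_deriv_eq_slope h hxy hd.continuous.continuousOn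
      hd.differentiableOn
    refine ⟨c, ?_, ?_⟩
    · rw [Set.uIcc_of_le hxy.le]; exact Set.Ioo_subset_Icc_self hc
    · rw [hc', div_mul_cancel₀ _ (sub_ne_zero.2 hxy.ne')]
  · exact ⟨x, Set.left_mem_uIcc, by ring⟩
  · obtain ⟨c, hc, hc'⟩ := exists_deriv_eq_slope h hxy hd.continuous.continuousOn
      hd.differentiableOn
    refine ⟨c, ?_, ?_⟩
    · rw [Set.uIcc_of_ge hxy.le]; exact Set.Ioo_subset_Icc_self hc
    · rw [hc']
      have hne : x - y ≠ 0 := sub_ne_zero.2 (ne_of_gt hxy)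
      rw [show y - x = -(x - y) by ring, mul_neg, div_mul_cancel₀ _ hne]
      ring

lemma abs_le_mul_abs_of_deriv_le {h : ℝ → ℝ} (hd : Differentiable ℝ h) {lo hi G : ℝ}
    (hG : ∀ c ∈ Set.Icc lo hi, |deriv h c| ≤ G) {x y : ℝ}
    (hx : x ∈ Set.Icc lo hi) (hy : y ∈ Set.Icc lo hi) :
    |h x - h y| ≤ G * |x - y| := by
  obtain ⟨c, hc, hc'⟩ := mvt_uIcc hd y x
  have hcm : c ∈ Set.Icc lo hi := Set.uIcc_subset_Icc hy hx hc
  rw [hc', abs_mul]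
  exact mul_le_mul_of_nonneg_right (hG c hcm) (abs_nonneg _)

lemma abs_le_inv_mul_abs_of_le_deriv {h : ℝ → ℝ} (hd : Differentiable ℝ h) {lo hi α : ℝ}
    (hα : 0 < α) (hle : ∀ c ∈ Set.Icc lo hi, α ≤ deriv h c) {x y : ℝ}
    (hx : x ∈ Set.Icc lo hi) (hy : y ∈ Set.Icc lo hi) :
    |x - y| ≤ (1/α) * |h x - h y| := by
  obtain ⟨c, hc, hc'⟩ := mvt_uIcc hd y x
  have hcm : c ∈ Set.Icc lo hi := Set.uIcc_subset_Icc hy hx hc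
  rw [hc', abs_mul]
  have h1 : α ≤ |deriv h c| := le_trans (hle c hcm) (le_abs_self _)
  rw [div_mul_eq_mul_div, le_div_iff₀ hα, one_mul]
  calc |x - y| * α = α * |x - y| := by ring
    _ ≤ |deriv h c| * |x - y| := by gcongr

lemma quot_diff_le {a1 a2 b1 b2 A c : ℝ} (hc : 0 < c) (ha1 : 0 ≤ a1) (ha1A : a1 ≤ A)
    (ha2 : 0 ≤ a2) (ha2A : a2 ≤ A) (hb1 : c ≤ b1) (hb2 : c ≤ b2) :
    |a1/b1 - a2/b2| ≤ (1/c) * |a1 - a2| + (A/c^2) * |b1 - b2| := by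
  have hb1p : 0 < b1 := lt_of_lt_of_le hc hb1
  have hb2p : 0 < b2 := lt_of_lt_of_le hc hb2
  have key : a1/b1 - a2/b2 = (a1 - a2)/b1 + a2 * (b2 - b1)/(b1*b2) := by
    field_simp
    ring
  rw [key]
  refine (abs_add_le _ _).trans (add_le_add ?_ ?_)
  · rw [abs_div, abs_of_pos hb1p, div_le_iff₀ hb1p]
    have h2 : (1:ℝ) ≤ (1/c) * b1 := by
      rw [one_div, ← div_eq_inv_mul, le_div_iff₀ hc]; linarith
    calc |a1 - a2| = |a1 - a2| * 1 := by ring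
      _ ≤ |a1 - a2| * ((1/c) * b1) := by gcongr
      _ = 1 / c * |a1 - a2| * b1 := by ring
  · rw [abs_div, abs_mul, abs_of_pos (mul_pos hb1p hb2p), abs_of_nonneg ha2]
    rw [div_le_iff₀ (mul_pos hb1p hb2p)]
    have hA : 0 ≤ A := le_trans ha1 ha1A
    have h1 : A/c^2 * |b2 - b1| * (b1*b2) ≥ A * |b2 - b1| := by
      have hcc : c^2 ≤ b1 * b2 := by nlinarith
      calc A * |b2 - b1| = A/c^2 * |b2 - b1| * c^2 := by field_simp
        _ ≤ A/c^2 * |b2 - b1| * (b1*b2) := by gcongr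
    calc a2 * |b2 - b1| ≤ A * |b2 - b1| := by gcongr
      _ ≤ A/c^2 * |b2 - b1| * (b1*b2) := h1
      _ = A/c^2 * |b1 - b2| * (b1*b2) := by rw [abs_sub_comm]

lemma deriv_nonneg_of_monotone_s2 {h : ℝ → ℝ} (hm : Monotone h) (hd : Differentiable ℝ h) (x : ℝ) :
    0 ≤ deriv h x := by
  have ht := hasDerivAt_iff_tendsto_slope.1 (hd x).hasDerivAt
  have ht2 : Tendsto (slope h x) (nhdsWithin x (Set.Ioi x)) (nhds (deriv h x)) :=
    ht.mono_left (nhdsWithin_mono _ fun y hy => ne_of_gt hy)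
  refine ge_of_tendsto ht2 (eventually_nhdsWithin_of_forall fun y hy => ?_)
  rw [slope_def_field, div_eq_mul_inv]
  have hxy : x < y := hy
  exact mul_nonneg (sub_nonneg.2 (hm hxy.le)) (inv_nonneg.2 (sub_nonneg.2 hxy.le))

lemma abs_neg_sub_neg (a b : ℝ) : |(-a) - (-b)| = |a - b| := by
  rw [show (-a) - (-b) = -(a - b) by ring, abs_neg]

end Helpers

/-- Right-of-interface content of Theorem 3.2, Case 1 (critical connection, large time):
BV bound on `(0, R)` with the Lax–Oleinik-type structure and the Rankine–Hugoniot
identity as hypotheses. -/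
theorem bv_right_of_interface_critical
    (f g : ℝ → ℝ) (θf θg : ℝ)
    (hf : ContDiff ℝ 2 f) (hg : ContDiff ℝ 2 g)
    (hfconv : StrictConvexOn ℝ Set.univ f) (hgconv : StrictConvexOn ℝ Set.univ g)
    (hfsup : SuperlinearGrowth f) (hgsup : SuperlinearGrowth g)
    (hθf : ∀ z : ℝ, z ≠ θf → f θf < f z) (hθg : ∀ z : ℝ, z ≠ θg → g θg < g z)
    (hfg : f θf < g θg)
    (hfH : (∃ α > (0:ℝ), ∀ p : ℝ, α ≤ deriv (deriv f) p) ∨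
      (∀ p : ℝ, deriv (deriv f) p = 0 → deriv f p = 0))
    (hgH : (∃ α > (0:ℝ), ∀ p : ℝ, α ≤ deriv (deriv g) p) ∨
      (∀ p : ℝ, deriv (deriv g) p = 0 → deriv g p = 0))
    -- `ginv` is the inverse of `g'`, the strictly increasing bijection of ℝ
    (ginv : ℝ → ℝ)
    (hginv₁ : Function.LeftInverse ginv (deriv g))
    (hginv₂ : Function.RightInverse ginv (deriv g))
    (t R M : ℝ) (ht : 0 < t) (hR : 0 < R) (hM : 0 < M)
    (τ Y u : ℝ → ℝ)
    (hτmem : ∀ x ∈ Set.Ioo (0:ℝ) R, τ x ∈ Set.Ico (0:ℝ) t)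
    (hτanti : AntitoneOn τ (Set.Ioo (0:ℝ) R))
    (hYmem : ∀ s ∈ Set.Ioo (0:ℝ) t, Y s ∈ Set.Icc (-M) (0:ℝ))
    (hYanti : AntitoneOn Y (Set.Ioo (0:ℝ) t))
    (hu₁ : ∀ x ∈ Set.Ioo (0:ℝ) R, θf ≤ u x)
    (hε : ∃ ε ∈ Set.Ioo (0:ℝ) R,
      0 < τ ε ∧ Y (τ ε) < 0 ∧
      (∀ x ∈ Set.Ioo (0:ℝ) ε, f (u x) = g (ginv (-(Y (τ x)) / τ x))) ∧
      (∀ x ∈ Set.Ioo ε R, deriv f (u x) = x / (t - τ x))) :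
    BoundedVariationOn u (Set.Ioo (0:ℝ) R) := by
  classical
  obtain ⟨ε, hεI, hτεpos, hYτε, hRH, hLO⟩ := hε
  have hε1 : (0:ℝ) < ε := hεI.1
  have hε2 : ε < R := hεI.2
  -- derivative facts
  have h21 : (2 : WithTop ℕ∞) = 1 + 1 := by norm_num
  have hfd : Differentiable ℝ f := (contDiff_succ_iff_deriv.1 (h21 ▸ hf)).1
  have hfd1 : ContDiff ℝ 1 (deriv f) := (contDiff_succ_iff_deriv.1 (h21 ▸ hf)).2.2
  have hfd' : Differentiable ℝ (deriv f) := (contDiff_one_iff_deriv.1 hfd1).1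
  have hfc2 : Continuous (deriv (deriv f)) := (contDiff_one_iff_deriv.1 hfd1).2
  have hgd : Differentiable ℝ g := (contDiff_succ_iff_deriv.1 (h21 ▸ hg)).1
  have hgd1 : ContDiff ℝ 1 (deriv g) := (contDiff_succ_iff_deriv.1 (h21 ▸ hg)).2.2
  have hgd' : Differentiable ℝ (deriv g) := (contDiff_one_iff_deriv.1 hgd1).1
  have hgc2 : Continuous (deriv (deriv g)) := (contDiff_one_iff_deriv.1 hgd1).2
  have hf'mono : StrictMono (deriv f) := by
    have := hfconv.strictMonoOn_deriv (fun x _ => hfd x)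
    exact fun a b hab => this (mem_univ a) (mem_univ b) hab
  have hg'mono : StrictMono (deriv g) := by
    have := hgconv.strictMonoOn_deriv (fun x _ => hgd x)
    exact fun a b hab => this (mem_univ a) (mem_univ b) hab
  have hfmin : ∀ z, f θf ≤ f z := by
    intro z; rcases eq_or_ne z θf with rfl | hz
    · exact le_rfl
    · exact (hθf z hz).le
  have hgmin : ∀ z, g θg ≤ g z := by
    intro z; rcases eq_or_ne z θg with rfl | hz
    · exact le_rfl
    · exact (hθg z hz).le
  have hf'θf : deriv f θf = 0 := by
    have hloc : IsLocalMin f θf := Filter.Eventually.of_forall hfmin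
    exact hloc.deriv_eq_zero
  have hg'θg : deriv g θg = 0 := by
    have hloc : IsLocalMin g θg := Filter.Eventually.of_forall hgmin
    exact hloc.deriv_eq_zero
  have hginvmono : Monotone ginv := by
    intro a b hab
    by_contra hlt
    push_neg at hlt
    have h := hg'mono hlt
    rw [hginv₂ a, hginv₂ b] at h
    exact absurd hab (not_le.2 h)
  have hfmonoIci : StrictMonoOn f (Set.Ici θf) := by
    apply strictMonoOn_of_deriv_pos (convex_Ici θf) hfd.continuous.continuousOn
    intro z hz
    rw [interior_Ici] at hz
    have := hf'mono hz
    rwa [hf'θf] at this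
  have hgmonoIci : StrictMonoOn g (Set.Ici θg) := by
    apply strictMonoOn_of_deriv_pos (convex_Ici θg) hgd.continuous.continuousOn
    intro z hz
    rw [interior_Ici] at hz
    have := hg'mono hz
    rwa [hg'θg] at this
  ------------------------------------------------------------------
  -- PIECE 1 : s₁ = Ioc 0 ε
  ------------------------------------------------------------------
  have hτε_mem := hτmem ε hεI
  have hτε_lt : τ ε < t := hτε_mem.2
  have hτIoo : τ ε ∈ Set.Ioo (0:ℝ) t := ⟨hτεpos, hτε_lt⟩
  have hYne : 0 < -Y (τ ε) := by linarith
  set c1 : ℝ := (-Y (τ ε))/t with hc1def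
  have hc1 : 0 < c1 := div_pos hYne ht
  set C1 : ℝ := M / τ ε with hC1def
  have hC1 : 0 < C1 := div_pos hM hτεpos
  have hYM : -Y (τ ε) ≤ M := by have := (hYmem _ hτIoo).1; linarith
  have hc1C1 : c1 ≤ C1 := div_le_div₀ hM.le hYM hτεpos hτε_lt.le
  have hq : ∀ x ∈ Set.Ioo (0:ℝ) ε, τ ε ≤ τ x ∧ τ x ∈ Set.Ioo (0:ℝ) t ∧
      0 ≤ -Y (τ x) ∧ -Y (τ x) ≤ M ∧ c1 ≤ -Y (τ x) / τ x ∧ -Y (τ x) / τ x ≤ C1 := by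
    intro x hx
    have hxR : x ∈ Set.Ioo (0:ℝ) R := ⟨hx.1, hx.2.trans hε2⟩
    have h1 : τ ε ≤ τ x := hτanti hxR hεI hx.2.le
    have h2 : τ x ∈ Set.Ioo (0:ℝ) t := ⟨lt_of_lt_of_le hτεpos h1, (hτmem x hxR).2⟩
    have h3 := hYmem _ h2
    have h4 : Y (τ x) ≤ Y (τ ε) := hYanti hτIoo h2 h1
    refine ⟨h1, h2, by linarith [h3.2], by linarith [h3.1], ?_, ?_⟩
    · exact div_le_div₀ (by linarith [h3.2]) (by linarith) h2.1 h2.2.le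
    · exact div_le_div₀ hM.le (by linarith [h3.1]) hτεpos h1
  set w₁ : ℝ := ginv c1 with hw₁def
  set w₂ : ℝ := ginv C1 with hw₂def
  have hw : w₁ ≤ w₂ := hginvmono hc1C1
  have hgw₁ : deriv g w₁ = c1 := hginv₂ c1
  have hgw₂ : deriv g w₂ = C1 := hginv₂ C1
  have hg'w : ∀ z ∈ Set.Icc w₁ w₂, c1 ≤ deriv g z ∧ deriv g z ≤ C1 := fun z hz =>
    ⟨hgw₁ ▸ hg'mono.monotone hz.1, hgw₂ ▸ hg'mono.monotone hz.2⟩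
  have hθgw₁ : θg < w₁ := by
    apply hg'mono.lt_iff_lt.1
    rw [hg'θg, hgw₁]; exact hc1
  obtain ⟨αg, hαg, hαgle⟩ : ∃ αg > (0:ℝ), ∀ z ∈ Set.Icc w₁ w₂, αg ≤ deriv (deriv g) z := by
    rcases hgH with ⟨α, hα, hall⟩ | hH
    · exact ⟨α, hα, fun z _ => hall z⟩
    · obtain ⟨z₀, hz₀, hz₀min⟩ := isCompact_Icc.exists_isMinOn (Set.nonempty_Icc.2 hw)
        hgc2.continuousOn
      refine ⟨deriv (deriv g) z₀, ?_, fun z hz => isMinOn_iff.1 hz₀min z hz⟩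
      have h0 : 0 ≤ deriv (deriv g) z₀ :=
        deriv_nonneg_of_monotone_s2 hg'mono.monotone hgd' z₀
      rcases h0.lt_or_eq with h | h
      · exact h
      · exfalso
        have h5 := hH z₀ h.symm
        have h6 := (hg'w z₀ hz₀).1
        rw [h5] at h6
        linarith
  -- lower bound L for u on (0, ε)
  have hev : ∀ᶠ z in nhds θf, f z < g θg :=
    Filter.Tendsto.eventually_lt_const hfg hfd.continuous.continuousAt
  obtain ⟨δ, hδpos, hδ⟩ := Metric.eventually_nhds_iff.1 hev
  set L : ℝ := θf + δ/2 with hLdef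
  have hLθ : θf < L := by rw [hLdef]; linarith
  have hqw : ∀ x ∈ Set.Ioo (0:ℝ) ε, ginv (-(Y (τ x)) / τ x) ∈ Set.Icc w₁ w₂ := by
    intro x hx
    obtain ⟨_, _, _, _, h5, h6⟩ := hq x hx
    exact ⟨hginvmono h5, hginvmono h6⟩
  have huL : ∀ x ∈ Set.Ioo (0:ℝ) ε, L ≤ u x := by
    intro x hx
    have hxR : x ∈ Set.Ioo (0:ℝ) R := ⟨hx.1, hx.2.trans hε2⟩
    by_contra hlt
    push_neg at hlt
    have h1 : θf ≤ u x := hu₁ x hxR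
    have hdst : dist (u x) θf < δ := by
      rw [Real.dist_eq, abs_of_nonneg (by linarith)]
      rw [hLdef] at hlt; linarith
    have h2 : f (u x) < g θg := hδ hdst
    have h3 : f (u x) = g (ginv (-(Y (τ x)) / τ x)) := hRH x hx
    have h4 := hgmin (ginv (-(Y (τ x)) / τ x))
    rw [← h3] at h4
    linarith
  -- upper bound U0 for u on (0, ε)
  set σ : ℝ := deriv f (θf + 1) with hσdef
  have hσ : 0 < σ := by
    have := hf'mono (show θf < θf + 1 by linarith)
    rwa [hf'θf] at this
  set V : ℝ := g w₂ with hVdef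
  set U0 : ℝ := θf + 1 + (max 0 (V - f (θf+1)))/σ with hU0def
  have hU0ge : θf + 1 ≤ U0 := le_add_of_nonneg_right (by positivity)
  have hfU0 : V ≤ f U0 := by
    obtain ⟨cc, hcc, hcc'⟩ := mvt_uIcc hfd (θf+1) U0
    have hccm : θf + 1 ≤ cc := by
      rw [Set.uIcc_of_le hU0ge] at hcc; exact hcc.1
    have h5 : σ ≤ deriv f cc := hf'mono.monotone hccm
    have h6 : σ * ((max 0 (V - f (θf+1)))/σ) ≤ deriv f cc * (U0 - (θf+1)) := by
      have he : U0 - (θf + 1) = (max 0 (V - f (θf+1)))/σ := by rw [hU0def]; ring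
      rw [he]
      have hnn : 0 ≤ (max 0 (V - f (θf+1)))/σ := by positivity
      exact mul_le_mul_of_nonneg_right h5 hnn
    have h7 : σ * ((max 0 (V - f (θf+1)))/σ) = max 0 (V - f (θf+1)) := by
      field_simp
    have h8 : V - f (θf+1) ≤ max 0 (V - f (θf+1)) := le_max_right _ _
    have h9 : f U0 - f (θf+1) = deriv f cc * (U0 - (θf+1)) := hcc'
    have h10 : 0 ⊔ (V - f (θf+1)) ≤ f U0 - f (θf + 1) := by
      rw [h9, ← h7]
      exact h6
    have h11 : max 0 (V - f (θf+1)) = 0 ⊔ (V - f (θf+1)) := rfl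
    rw [h11] at h8
    linarith
  have huU : ∀ x ∈ Set.Ioo (0:ℝ) ε, u x ≤ U0 := by
    intro x hx
    have hxR : x ∈ Set.Ioo (0:ℝ) R := ⟨hx.1, hx.2.trans hε2⟩
    by_contra hlt
    push_neg at hlt
    have h1 : θf ≤ u x := hu₁ x hxR
    have hgv : g (ginv (-(Y (τ x)) / τ x)) ≤ V := by
      have hm := hqw x hx
      have hθg1 : θg ≤ ginv (-(Y (τ x)) / τ x) := le_trans hθgw₁.le hm.1
      have hθg2 : θg ≤ w₂ := le_trans hθgw₁.le hw
      rcases hm.2.lt_or_eq with h | h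
      · exact (hgmonoIci hθg1 hθg2 h).le
      · rw [h]
    have hUθf : θf ≤ U0 := by linarith
    have h2 : f U0 < f (u x) := hfmonoIci hUθf h1 hlt
    have h3 : f (u x) = g (ginv (-(Y (τ x)) / τ x)) := hRH x hx
    linarith
  have hLU : L ≤ U0 := by
    have hmem : (ε/2) ∈ Set.Ioo (0:ℝ) ε := ⟨by linarith, by linarith⟩
    exact le_trans (huL _ hmem) (huU _ hmem)
  set β : ℝ := deriv f L with hβdef
  have hβ : 0 < β := by
    have := hf'mono hLθ
    rwa [hf'θf] at this
  have hf'L : ∀ z ∈ Set.Icc L U0, β ≤ deriv f z := fun z hz => hf'mono.monotone hz.1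
  set K1 : ℝ := (1/β) * (C1 * ((1/αg) * (1/(τ ε)))) with hK1def
  set K2 : ℝ := (1/β) * (C1 * ((1/αg) * (M/(τ ε)^2))) with hK2def
  have hK1 : 0 < K1 := by
    apply mul_pos (by positivity)
    exact mul_pos hC1 (mul_pos (by positivity) (by positivity))
  have hK2 : 0 < K2 := by
    apply mul_pos (by positivity)
    exact mul_pos hC1 (mul_pos (by positivity) (by positivity))
  set D1 : ℝ := |u ε - L| + (U0 - L) with hD1def
  have hD1 : 0 ≤ D1 := add_nonneg (abs_nonneg _) (by linarith)
  set ind1 : ℝ → ℝ := fun x => if x = ε then (1:ℝ) else 0 with hind1def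
  have hchain1 : ∀ x ∈ Set.Ioo (0:ℝ) ε, ∀ y ∈ Set.Ioo (0:ℝ) ε,
      |u x - u y| ≤ K1 * |Y (τ x) - Y (τ y)| + K2 * |τ x - τ y| := by
    intro x hx y hy
    obtain ⟨ha1, ha2, ha3, ha4, ha5, ha6⟩ := hq x hx
    obtain ⟨hb1, hb2, hb3, hb4, hb5, hb6⟩ := hq y hy
    have h1 : |u x - u y| ≤ (1/β) * |f (u x) - f (u y)| :=
      abs_le_inv_mul_abs_of_le_deriv hfd hβ hf'L ⟨huL x hx, huU x hx⟩ ⟨huL y hy, huU y hy⟩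
    have hmx : ginv (-(Y (τ x)) / τ x) ∈ Set.Icc w₁ w₂ := hqw x hx
    have hmy : ginv (-(Y (τ y)) / τ y) ∈ Set.Icc w₁ w₂ := hqw y hy
    have h4 : |g (ginv (-(Y (τ x)) / τ x)) - g (ginv (-(Y (τ y)) / τ y))| ≤
        C1 * |ginv (-(Y (τ x)) / τ x) - ginv (-(Y (τ y)) / τ y)| := by
      apply abs_le_mul_abs_of_deriv_le hgd ?_ hmx hmy
      intro z hz
      rw [abs_of_nonneg (le_trans hc1.le (hg'w z hz).1)]
      exact (hg'w z hz).2
    have h5 : |ginv (-(Y (τ x)) / τ x) - ginv (-(Y (τ y)) / τ y)| ≤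
        (1/αg) * |deriv g (ginv (-(Y (τ x)) / τ x)) - deriv g (ginv (-(Y (τ y)) / τ y))| :=
      abs_le_inv_mul_abs_of_le_deriv hgd' hαg hαgle hmx hmy
    rw [hginv₂ (-(Y (τ x)) / τ x), hginv₂ (-(Y (τ y)) / τ y)] at h5
    have h6 : |(-(Y (τ x)) / τ x) - (-(Y (τ y)) / τ y)| ≤
        (1/(τ ε)) * |(-Y (τ x)) - (-Y (τ y))| + (M/(τ ε)^2) * |τ x - τ y| :=
      quot_diff_le hτεpos ha3 ha4 hb3 hb4 ha1 hb1
    rw [abs_neg_sub_neg] at h6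
    calc |u x - u y| ≤ (1/β) * |f (u x) - f (u y)| := h1
      _ = (1/β) * |g (ginv (-(Y (τ x)) / τ x)) - g (ginv (-(Y (τ y)) / τ y))| := by
          rw [hRH x hx, hRH y hy]
      _ ≤ (1/β) * (C1 * |ginv (-(Y (τ x)) / τ x) - ginv (-(Y (τ y)) / τ y)|) :=
          mul_le_mul_of_nonneg_left h4 (by positivity)
      _ ≤ (1/β) * (C1 * ((1/αg) * |(-(Y (τ x)) / τ x) - (-(Y (τ y)) / τ y)|)) := by
          apply mul_le_mul_of_nonneg_left _ (by positivity)
          exact mul_le_mul_of_nonneg_left h5 hC1.le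
      _ ≤ (1/β) * (C1 * ((1/αg) * ((1/(τ ε)) * |Y (τ x) - Y (τ y)| +
          (M/(τ ε)^2) * |τ x - τ y|))) := by
          apply mul_le_mul_of_nonneg_left _ (by positivity)
          apply mul_le_mul_of_nonneg_left _ hC1.le
          exact mul_le_mul_of_nonneg_left h6 (by positivity)
      _ = K1 * |Y (τ x) - Y (τ y)| + K2 * |τ x - τ y| := by
          rw [hK1def, hK2def]; ring
  have hbound1 : ∀ x ∈ Set.Ioo (0:ℝ) ε, L ≤ u x ∧ u x ≤ U0 := fun x hx => ⟨huL x hx, huU x hx⟩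
  have hdist1 : ∀ x ∈ Set.Ioc (0:ℝ) ε, ∀ y ∈ Set.Ioc (0:ℝ) ε,
      |u x - u y| ≤ K1 * |Y (τ x) - Y (τ y)| + K2 * |(-τ x) - (-τ y)| +
        D1 * |ind1 x - ind1 y| := by
    have hDcase : ∀ y ∈ Set.Ioo (0:ℝ) ε, |u ε - u y| ≤ D1 := by
      intro y hy
      obtain ⟨hy1, hy2⟩ := hbound1 y hy
      calc |u ε - u y| = |(u ε - L) + (L - u y)| := by congr 1; ring
        _ ≤ |u ε - L| + |L - u y| := abs_add_le _ _
        _ ≤ D1 := by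
            rw [hD1def]
            have : |L - u y| = u y - L := by
              rw [abs_sub_comm, abs_of_nonneg (by linarith)]
            rw [this]; gcongr
    intro x hx y hy
    rw [abs_neg_sub_neg]
    by_cases hxe : x = ε <;> by_cases hye : y = ε
    · rw [hxe, hye]
      simp only [sub_self, abs_zero, mul_zero]
      positivity
    · rw [hxe]
      have hy' : y ∈ Set.Ioo (0:ℝ) ε := ⟨hy.1, lt_of_le_of_ne hy.2 hye⟩
      have hind : |ind1 ε - ind1 y| = 1 := by
        simp [hind1def, hye]
      rw [hind, mul_one]
      have := hDcase y hy'
      have hh1 : 0 ≤ K1 * |Y (τ ε) - Y (τ y)| := by positivity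
      have hh2 : 0 ≤ K2 * |τ ε - τ y| := by positivity
      linarith
    · rw [hye]
      have hx' : x ∈ Set.Ioo (0:ℝ) ε := ⟨hx.1, lt_of_le_of_ne hx.2 hxe⟩
      have hind : |ind1 x - ind1 ε| = 1 := by
        simp [hind1def, hxe]
      rw [hind, mul_one]
      have := hDcase x hx'
      rw [abs_sub_comm] at this
      have hh1 : 0 ≤ K1 * |Y (τ x) - Y (τ ε)| := by positivity
      have hh2 : 0 ≤ K2 * |τ x - τ ε| := by positivity
      linarith
    · have hx' : x ∈ Set.Ioo (0:ℝ) ε := ⟨hx.1, lt_of_le_of_ne hx.2 hxe⟩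
      have hy' : y ∈ Set.Ioo (0:ℝ) ε := ⟨hy.1, lt_of_le_of_ne hy.2 hye⟩
      have hind : |ind1 x - ind1 y| = 0 := by
        simp [hind1def, hxe, hye]
      rw [hind, mul_zero, add_zero]
      exact hchain1 x hx' y hy'
  -- monotone cores on Ioc 0 ε
  have hsub1 : Set.Ioc (0:ℝ) ε ⊆ Set.Ioo (0:ℝ) R := fun x hx =>
    ⟨hx.1, lt_of_le_of_lt hx.2 hε2⟩
  have hτmem1 : ∀ x ∈ Set.Ioc (0:ℝ) ε, τ x ∈ Set.Ioo (0:ℝ) t ∧ τ ε ≤ τ x := by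
    intro x hx
    have h1 : τ ε ≤ τ x := hτanti (hsub1 hx) hεI hx.2
    exact ⟨⟨lt_of_lt_of_le hτεpos h1, (hτmem x (hsub1 hx)).2⟩, h1⟩
  have hA1mono : MonotoneOn (fun x => Y (τ x)) (Set.Ioc (0:ℝ) ε) := by
    intro x hx y hy hxy
    have hτ : τ y ≤ τ x := hτanti (hsub1 hx) (hsub1 hy) hxy
    exact hYanti (hτmem1 y hy).1 (hτmem1 x hx).1 hτ
  have hA1mem : ∀ x ∈ Set.Ioc (0:ℝ) ε, Y (τ x) ∈ Set.Icc (-M) (0:ℝ) := fun x hx =>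
    hYmem _ (hτmem1 x hx).1
  have hB1mono : MonotoneOn (fun x => -τ x) (Set.Ioc (0:ℝ) ε) := by
    intro x hx y hy hxy
    have hτ : τ y ≤ τ x := hτanti (hsub1 hx) (hsub1 hy) hxy
    simp only [neg_le_neg_iff]
    exact hτ
  have hB1mem : ∀ x ∈ Set.Ioc (0:ℝ) ε, (-τ x) ∈ Set.Icc (-t) (-(τ ε)) := by
    intro x hx
    constructor
    · simp only [neg_le_neg_iff]; exact (hτmem1 x hx).1.2.le
    · simp only [neg_le_neg_iff]; exact (hτmem1 x hx).2
  have hind1mono : MonotoneOn ind1 (Set.Ioc (0:ℝ) ε) := by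
    intro x hx y hy hxy
    simp only [hind1def]
    by_cases hxe : x = ε
    · have hye : y = ε := le_antisymm hy.2 (hxe ▸ hxy)
      simp [hxe, hye]
    · simp only [if_neg hxe]
      split <;> norm_num
  have hind1mem : ∀ x ∈ Set.Ioc (0:ℝ) ε, ind1 x ∈ Set.Icc (0:ℝ) 1 := by
    intro x hx
    simp only [hind1def]
    split <;> norm_num
  have hvar1 : eVariationOn u (Set.Ioc (0:ℝ) ε) ≤
      ENNReal.ofReal K1 * ENNReal.ofReal (0 - (-M)) +
      ENNReal.ofReal K2 * ENNReal.ofReal ((-(τ ε)) - (-t)) +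
      ENNReal.ofReal D1 * ENNReal.ofReal (1 - 0) := by
    refine le_trans (evar_le_of_dist_le u (fun x => Y (τ x)) (fun x => -τ x) ind1
      hK1.le hK2.le hD1 hdist1) ?_
    gcongr
    · exact evar_le_of_monotoneOn hA1mono hA1mem
    · exact evar_le_of_monotoneOn hB1mono hB1mem
    · exact evar_le_of_monotoneOn hind1mono hind1mem
  have hfin1 : eVariationOn u (Set.Ioc (0:ℝ) ε) ≠ ⊤ := by
    apply ne_top_of_le_ne_top _ hvar1
    exact ENNReal.add_ne_top.2 ⟨ENNReal.add_ne_top.2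
      ⟨ENNReal.mul_ne_top ENNReal.ofReal_ne_top ENNReal.ofReal_ne_top,
       ENNReal.mul_ne_top ENNReal.ofReal_ne_top ENNReal.ofReal_ne_top⟩,
      ENNReal.mul_ne_top ENNReal.ofReal_ne_top ENNReal.ofReal_ne_top⟩
  ------------------------------------------------------------------
  -- PIECE 2 : s₂ = Ico ε R
  ------------------------------------------------------------------
  have hc2 : 0 < t - τ ε := by linarith
  set pm : ℝ := ε/t with hpmdef
  have hpm : 0 < pm := div_pos hε1 ht
  set pp : ℝ := R/(t - τ ε) with hppdef
  have hpp : 0 < pp := div_pos hR hc2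
  have hp : ∀ x ∈ Set.Ioo ε R, t - τ ε ≤ t - τ x ∧ t - τ x ≤ t ∧ 0 ≤ x ∧ x ≤ R ∧
      pm ≤ x/(t - τ x) ∧ x/(t - τ x) ≤ pp := by
    intro x hx
    have hxR : x ∈ Set.Ioo (0:ℝ) R := ⟨lt_trans hε1 hx.1, hx.2⟩
    have h1 : τ x ≤ τ ε := hτanti hεI hxR hx.1.le
    have h2 : (0:ℝ) ≤ τ x := (hτmem x hxR).1
    refine ⟨by linarith, by linarith, by linarith [hxR.1], hx.2.le, ?_, ?_⟩
    · exact div_le_div₀ (by linarith [hxR.1]) hx.1.le (by linarith [(hτmem x hxR).2])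
        (by linarith)
    · exact div_le_div₀ hR.le hx.2.le (by linarith [(hτmem x hxR).2]) (by linarith)
  set m2 : ℝ := min pm σ with hm2def
  have hm2 : 0 < m2 := lt_min hpm hσ
  have hIVT := intermediate_value_Icc (show θf ≤ θf + 1 by linarith)
    hfd'.continuous.continuousOn
  have hm2mem : m2 ∈ Set.Icc (deriv f θf) (deriv f (θf + 1)) := by
    rw [hf'θf]
    exact ⟨hm2.le, min_le_right _ _⟩
  obtain ⟨L₂, hL₂mem, hL₂⟩ := hIVT hm2mem
  -- find q0 with deriv f q0 ≥ pp, via superlinear growth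
  have hTT : Tendsto (fun z => f z / |z|) atTop atTop :=
    hfsup.mono_left atTop_le_cocompact
  obtain ⟨q0, hq1, hq2⟩ := ((hTT.eventually_ge_atTop (pp * (|θf| + 2) + |f (θf+1)|)).and
    (eventually_ge_atTop (max (θf + 2) 1))).exists
  have hq0_1 : 1 ≤ q0 := le_trans (le_max_right _ _) hq2
  have hq0θ : θf + 2 ≤ q0 := le_trans (le_max_left _ _) hq2
  have habs : |q0| = q0 := abs_of_pos (by linarith)
  have hfq0 : (pp * (|θf| + 2) + |f (θf+1)|) * q0 ≤ f q0 := by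
    rw [habs] at hq1
    exact (le_div_iff₀ (by linarith)).1 hq1
  have hderivq0 : pp ≤ deriv f q0 := by
    obtain ⟨cc, hcc, hcc'⟩ := mvt_uIcc hfd (θf+1) q0
    have hccI : cc ∈ Set.Icc (θf+1) q0 := by
      rwa [Set.uIcc_of_le (by linarith)] at hcc
    have h1 : deriv f cc ≤ deriv f q0 := hf'mono.monotone hccI.2
    have habsθ2 : θf ≤ |θf| := le_abs_self θf
    have habsf1 : f (θf+1) ≤ |f (θf+1)| := le_abs_self _
    have h2 : pp * (q0 - θf - 1) ≤ f q0 - f (θf+1) := by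
      have e1 : pp * (q0 - θf - 1) ≤ pp * (q0 * (|θf| + 2)) := by
        apply mul_le_mul_of_nonneg_left _ hpp.le
        have hint := mul_le_mul_of_nonneg_right hq0_1 (show (0:ℝ) ≤ |θf| + 1 by positivity)
        have hint2 := neg_le_abs θf
        nlinarith only [hint, hint2]
      have e2 : |f (θf+1)| ≤ |f (θf+1)| * q0 := by
        have hint := mul_le_mul_of_nonneg_left hq0_1 (abs_nonneg (f (θf+1)))
        linarith only [hint]
      linarith only [hfq0, e1, e2, habsf1]
    have hd : (0:ℝ) < q0 - θf - 1 := by linarith only [hq0θ]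
    have h3 : pp ≤ deriv f cc := by
      by_contra hlt
      push_neg at hlt
      have h4 := mul_lt_mul_of_pos_right hlt hd
      have h5 : f q0 - f (θf+1) = deriv f cc * (q0 - (θf+1)) := hcc'
      linarith only [h4, h5, h2]
    exact le_trans h3 h1
  have hL₂q0 : L₂ ≤ q0 := by
    have := hL₂mem.2; linarith
  -- u x ∈ [L₂, q0] on (ε, R)
  have hbound2 : ∀ x ∈ Set.Ioo ε R, L₂ ≤ u x ∧ u x ≤ q0 := by
    intro x hx
    obtain ⟨hp1, hp2, hp3, hp4, hp5, hp6⟩ := hp x hx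
    have hder := hLO x hx
    constructor
    · apply hf'mono.le_iff_le.1
      rw [hL₂, hder]
      exact le_trans (min_le_left _ _) hp5
    · apply hf'mono.le_iff_le.1
      rw [hder]
      exact le_trans hp6 hderivq0
  obtain ⟨αf, hαf, hαfle⟩ : ∃ αf > (0:ℝ), ∀ z ∈ Set.Icc L₂ q0, αf ≤ deriv (deriv f) z := by
    rcases hfH with ⟨α, hα, hall⟩ | hH
    · exact ⟨α, hα, fun z _ => hall z⟩
    · obtain ⟨z₀, hz₀, hz₀min⟩ := isCompact_Icc.exists_isMinOn (Set.nonempty_Icc.2 hL₂q0)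
        hfc2.continuousOn
      refine ⟨deriv (deriv f) z₀, ?_, fun z hz => isMinOn_iff.1 hz₀min z hz⟩
      have h0 : 0 ≤ deriv (deriv f) z₀ :=
        deriv_nonneg_of_monotone_s2 hf'mono.monotone hfd' z₀
      rcases h0.lt_or_eq with h | h
      · exact h
      · exfalso
        have h5 := hH z₀ h.symm
        have h6 : m2 ≤ deriv f z₀ := by
          rw [← hL₂]
          exact hf'mono.monotone hz₀.1
        rw [h5] at h6
        linarith
  set K1' : ℝ := (1/αf) * (1/(t - τ ε)) with hK1'def
  set K2' : ℝ := (1/αf) * (R/(t - τ ε)^2) with hK2'def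
  have hK1' : 0 < K1' := mul_pos (by positivity) (by positivity)
  have hK2' : 0 < K2' := mul_pos (by positivity) (by positivity)
  set D2 : ℝ := |u ε - L₂| + (q0 - L₂) with hD2def
  have hD2 : 0 ≤ D2 := add_nonneg (abs_nonneg _) (by linarith)
  set ind2 : ℝ → ℝ := fun x => if x = ε then (0:ℝ) else 1 with hind2def
  have hchain2 : ∀ x ∈ Set.Ioo ε R, ∀ y ∈ Set.Ioo ε R,
      |u x - u y| ≤ K1' * |x - y| + K2' * |(t - τ x) - (t - τ y)| := by
    intro x hx y hy
    obtain ⟨ha1, ha2, ha3, ha4, ha5, ha6⟩ := hp x hx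
    obtain ⟨hb1, hb2, hb3, hb4, hb5, hb6⟩ := hp y hy
    have h1 : |u x - u y| ≤ (1/αf) * |deriv f (u x) - deriv f (u y)| :=
      abs_le_inv_mul_abs_of_le_deriv hfd' hαf hαfle
        ⟨(hbound2 x hx).1, (hbound2 x hx).2⟩ ⟨(hbound2 y hy).1, (hbound2 y hy).2⟩
    rw [hLO x hx, hLO y hy] at h1
    have h6 : |x/(t - τ x) - y/(t - τ y)| ≤
        (1/(t - τ ε)) * |x - y| + (R/(t - τ ε)^2) * |(t - τ x) - (t - τ y)| :=
      quot_diff_le hc2 ha3 ha4 hb3 hb4 ha1 hb1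
    calc |u x - u y| ≤ (1/αf) * |x/(t - τ x) - y/(t - τ y)| := h1
      _ ≤ (1/αf) * ((1/(t - τ ε)) * |x - y| + (R/(t - τ ε)^2) * |(t - τ x) - (t - τ y)|) :=
          mul_le_mul_of_nonneg_left h6 (by positivity)
      _ = K1' * |x - y| + K2' * |(t - τ x) - (t - τ y)| := by
          rw [hK1'def, hK2'def]; ring
  have hdist2 : ∀ x ∈ Set.Ico ε R, ∀ y ∈ Set.Ico ε R,
      |u x - u y| ≤ K1' * |x - y| + K2' * |(t - τ x) - (t - τ y)| +
        D2 * |ind2 x - ind2 y| := by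
    have hDcase : ∀ y ∈ Set.Ioo ε R, |u ε - u y| ≤ D2 := by
      intro y hy
      obtain ⟨hy1, hy2⟩ := hbound2 y hy
      calc |u ε - u y| = |(u ε - L₂) + (L₂ - u y)| := by congr 1; ring
        _ ≤ |u ε - L₂| + |L₂ - u y| := abs_add_le _ _
        _ ≤ D2 := by
            rw [hD2def]
            have : |L₂ - u y| = u y - L₂ := by
              rw [abs_sub_comm, abs_of_nonneg (by linarith)]
            rw [this]; gcongr
    intro x hx y hy
    by_cases hxe : x = ε <;> by_cases hye : y = ε
    · rw [hxe, hye]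
      simp only [sub_self, abs_zero, mul_zero]
      positivity
    · rw [hxe]
      have hy' : y ∈ Set.Ioo ε R := ⟨lt_of_le_of_ne hy.1 (Ne.symm hye), hy.2⟩
      have hind : |ind2 ε - ind2 y| = 1 := by
        simp [hind2def, hye]
      rw [hind, mul_one]
      have := hDcase y hy'
      have hh1 : 0 ≤ K1' * |ε - y| := by positivity
      have hh2 : 0 ≤ K2' * |(t - τ ε) - (t - τ y)| := by positivity
      linarith
    · rw [hye]
      have hx' : x ∈ Set.Ioo ε R := ⟨lt_of_le_of_ne hx.1 (Ne.symm hxe), hx.2⟩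
      have hind : |ind2 x - ind2 ε| = 1 := by
        simp [hind2def, hxe]
      rw [hind, mul_one]
      have := hDcase x hx'
      rw [abs_sub_comm] at this
      have hh1 : 0 ≤ K1' * |x - ε| := by positivity
      have hh2 : 0 ≤ K2' * |(t - τ x) - (t - τ ε)| := by positivity
      linarith
    · have hx' : x ∈ Set.Ioo ε R := ⟨lt_of_le_of_ne hx.1 (Ne.symm hxe), hx.2⟩
      have hy' : y ∈ Set.Ioo ε R := ⟨lt_of_le_of_ne hy.1 (Ne.symm hye), hy.2⟩
      have hind : |ind2 x - ind2 y| = 0 := by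
        simp [hind2def, hxe, hye]
      rw [hind, mul_zero, add_zero]
      exact hchain2 x hx' y hy'
  have hsub2 : Set.Ico ε R ⊆ Set.Ioo (0:ℝ) R := fun x hx =>
    ⟨lt_of_lt_of_le hε1 hx.1, hx.2⟩
  have hA2mono : MonotoneOn (fun x : ℝ => x) (Set.Ico ε R) := fun x _ y _ hxy => hxy
  have hA2mem : ∀ x ∈ Set.Ico ε R, x ∈ Set.Icc (0:ℝ) R := fun x hx =>
    ⟨(hsub2 hx).1.le, hx.2.le⟩
  have hB2mono : MonotoneOn (fun x => t - τ x) (Set.Ico ε R) := by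
    intro x hx y hy hxy
    have hτ : τ y ≤ τ x := hτanti (hsub2 hx) (hsub2 hy) hxy
    simp only
    linarith
  have hB2mem : ∀ x ∈ Set.Ico ε R, (t - τ x) ∈ Set.Icc (t - τ ε) t := by
    intro x hx
    have h1 : τ x ≤ τ ε := hτanti hεI (hsub2 hx) hx.1
    have h2 : (0:ℝ) ≤ τ x := (hτmem x (hsub2 hx)).1
    exact ⟨by linarith, by linarith⟩
  have hind2mono : MonotoneOn ind2 (Set.Ico ε R) := by
    intro x hx y hy hxy
    simp only [hind2def]
    by_cases hxe : x = ε
    · simp only [if_pos hxe]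
      split <;> norm_num
    · have hye : y ≠ ε := by
        intro hye
        subst hye
        exact hxe (le_antisymm hxy hx.1)
      simp [hxe, hye]
  have hind2mem : ∀ x ∈ Set.Ico ε R, ind2 x ∈ Set.Icc (0:ℝ) 1 := by
    intro x hx
    simp only [hind2def]
    split <;> norm_num
  have hvar2 : eVariationOn u (Set.Ico ε R) ≤
      ENNReal.ofReal K1' * ENNReal.ofReal (R - 0) +
      ENNReal.ofReal K2' * ENNReal.ofReal (t - (t - τ ε)) +
      ENNReal.ofReal D2 * ENNReal.ofReal (1 - 0) := by
    refine le_trans (evar_le_of_dist_le u (fun x : ℝ => x) (fun x => t - τ x) ind2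
      hK1'.le hK2'.le hD2 hdist2) ?_
    gcongr
    · exact evar_le_of_monotoneOn hA2mono hA2mem
    · exact evar_le_of_monotoneOn hB2mono hB2mem
    · exact evar_le_of_monotoneOn hind2mono hind2mem
  have hfin2 : eVariationOn u (Set.Ico ε R) ≠ ⊤ := by
    apply ne_top_of_le_ne_top _ hvar2
    exact ENNReal.add_ne_top.2 ⟨ENNReal.add_ne_top.2
      ⟨ENNReal.mul_ne_top ENNReal.ofReal_ne_top ENNReal.ofReal_ne_top,
       ENNReal.mul_ne_top ENNReal.ofReal_ne_top ENNReal.ofReal_ne_top⟩,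
      ENNReal.mul_ne_top ENNReal.ofReal_ne_top ENNReal.ofReal_ne_top⟩
  ------------------------------------------------------------------
  -- combine
  ------------------------------------------------------------------
  have hsplit : Set.Ioo (0:ℝ) R = Set.Ioc (0:ℝ) ε ∪ Set.Ico ε R :=
    (Set.Ioc_union_Ico_eq_Ioo hε1 hε2).symm
  have hGr : IsGreatest (Set.Ioc (0:ℝ) ε) ε := ⟨⟨hε1, le_rfl⟩, fun z hz => hz.2⟩
  have hLe : IsLeast (Set.Ico ε R) ε := ⟨⟨le_rfl, hε2⟩, fun z hz => hz.1⟩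
  rw [BoundedVariationOn, hsplit, eVariationOn.union u hGr hLe]
  exact ENNReal.add_ne_top.2 ⟨hfin1, hfin2⟩
end

section
/- Let f, g : ℝ → ℝ be C², strictly convex functions of superlinear growth, with unique minimizers θ_f of f and θ_g of g, satisfying f(θ_f) < g(θ_g), and assume each of f and g satisfies: either its second derivative is bounded below by a positive constant, or every zero of its second derivative is a zero of its first derivative. Fix t > 0, L < 0, M > 0. Suppose τ : (L,0) → [0,t) is nondecreasing, Z : (0,t) → [0,M] is nondecreasing, u : (L,0) → ℝ satisfies u(x) ≤ θ_g for all x, and there exists x₀ ∈ (L,0) such that: u is constant on (x₀,0); and for every x ∈ (L,x₀), g'(u(x)) = x/(t − τ(x)) with τ(x) ≤ τ(x₀) < t. Then u has bounded (total) variation on (L,0). [This is the left-of-interface content of Theorem 3.2, Case 2, Subcase II, stated with the structure established in its proof as hypotheses.] -/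
open Set

lemma bv_of_dominated {u Φ : ℝ → ℝ} {s : Set ℝ} {C : ℝ}
    (h : ∀ x ∈ s, ∀ y ∈ s, x ≤ y → |u y - u x| ≤ Φ y - Φ x)
    (hC : ∀ x ∈ s, ∀ y ∈ s, x ≤ y → Φ y - Φ x ≤ C) :
    BoundedVariationOn u s := by
  have hbound : eVariationOn u s ≤ ENNReal.ofReal C := by
    apply iSup_le _
    rintro ⟨n, ⟨p, hmono, hmem⟩⟩
    have hterm : ∀ i : ℕ, edist (u (p (i + 1))) (u (p i))
        ≤ ENNReal.ofReal (Φ (p (i + 1)) - Φ (p i)) := by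
      intro i
      rw [edist_dist, Real.dist_eq]
      exact ENNReal.ofReal_le_ofReal (h _ (hmem i) _ (hmem (i + 1)) (hmono (Nat.le_succ i)))
    calc (∑ i ∈ Finset.range n, edist (u (p (i + 1))) (u (p i)))
        ≤ ∑ i ∈ Finset.range n, ENNReal.ofReal (Φ (p (i + 1)) - Φ (p i)) :=
          Finset.sum_le_sum fun i _ => hterm i
      _ = ENNReal.ofReal (∑ i ∈ Finset.range n, (Φ (p (i + 1)) - Φ (p i))) := by
          rw [ENNReal.ofReal_sum_of_nonneg]
          intro i _
          exact le_trans (abs_nonneg _)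
            (h _ (hmem i) _ (hmem (i + 1)) (hmono (Nat.le_succ i)))
      _ = ENNReal.ofReal (Φ (p n) - Φ (p 0)) := by
          rw [show (∑ i ∈ Finset.range n, (Φ (p (i + 1)) - Φ (p i))) = Φ (p n) - Φ (p 0) from
            Finset.sum_range_sub (fun i => Φ (p i)) n]
      _ ≤ ENNReal.ofReal C :=
          ENNReal.ofReal_le_ofReal (hC _ (hmem 0) _ (hmem n) (hmono (Nat.zero_le n)))
  exact ne_top_of_le_ne_top ENNReal.ofReal_ne_top hbound

set_option maxHeartbeats 1600000 in
/-- Left-of-interface content of Theorem 3.2, Case 2, Subcase II: BV bound on `(L, 0)`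
with the structure established in the proof as hypotheses. -/
theorem bv_left_of_interface_critical
    (f g : ℝ → ℝ) (θf θg : ℝ)
    (hf : ContDiff ℝ 2 f) (hg : ContDiff ℝ 2 g)
    (hfconv : StrictConvexOn ℝ Set.univ f) (hgconv : StrictConvexOn ℝ Set.univ g)
    (hfsup : SuperlinearGrowth f) (hgsup : SuperlinearGrowth g)
    (hθf : ∀ z : ℝ, z ≠ θf → f θf < f z) (hθg : ∀ z : ℝ, z ≠ θg → g θg < g z)
    (hfg : f θf < g θg)
    (hfH : (∃ α > (0:ℝ), ∀ p : ℝ, α ≤ deriv (deriv f) p) ∨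
      (∀ p : ℝ, deriv (deriv f) p = 0 → deriv f p = 0))
    (hgH : (∃ α > (0:ℝ), ∀ p : ℝ, α ≤ deriv (deriv g) p) ∨
      (∀ p : ℝ, deriv (deriv g) p = 0 → deriv g p = 0))
    (t L M : ℝ) (ht : 0 < t) (hL : L < 0) (hM : 0 < M)
    (τ Z u : ℝ → ℝ)
    (hτmem : ∀ x ∈ Set.Ioo L (0:ℝ), τ x ∈ Set.Ico (0:ℝ) t)
    (hτmono : MonotoneOn τ (Set.Ioo L (0:ℝ)))
    (hZmem : ∀ s ∈ Set.Ioo (0:ℝ) t, Z s ∈ Set.Icc (0:ℝ) M)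
    (hZmono : MonotoneOn Z (Set.Ioo (0:ℝ) t))
    (hu₁ : ∀ x ∈ Set.Ioo L (0:ℝ), u x ≤ θg)
    (hx₀ : ∃ x₀ ∈ Set.Ioo L (0:ℝ),
      (∀ x ∈ Set.Ioo x₀ (0:ℝ), ∀ y ∈ Set.Ioo x₀ (0:ℝ), u x = u y) ∧
      τ x₀ < t ∧
      (∀ x ∈ Set.Ioo L x₀, deriv g (u x) = x / (t - τ x) ∧ τ x ≤ τ x₀)) :
    BoundedVariationOn u (Set.Ioo L (0:ℝ)) := by
  clear hf hfconv hfsup hθf hfg hfH hZmem hZmono hM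
  obtain ⟨x₀, hx₀mem, hconst, hτx₀t, hform⟩ := hx₀
  obtain ⟨hLx₀, hx₀0⟩ := hx₀mem
  set δ : ℝ := t - τ x₀ with hδdef
  clear_value δ
  have hδ : 0 < δ := by rw [hδdef]; exact sub_pos.mpr hτx₀t
  have hτx₀nn : 0 ≤ τ x₀ := (hτmem x₀ ⟨hLx₀, hx₀0⟩).1
  have hδt : δ ≤ t := by simp only [hδdef]; linarith
  set c₁ : ℝ := L / δ with hc₁def
  set c₂ : ℝ := x₀ / t with hc₂def
  clear_value c₁ c₂
  have hc₁ : c₁ < 0 := by rw [hc₁def]; exact div_neg_of_neg_of_pos hL hδ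
  have hc₂ : c₂ < 0 := by rw [hc₂def]; exact div_neg_of_neg_of_pos hx₀0 ht
  have hsub : Ioo L x₀ ⊆ Ioo L 0 := Ioo_subset_Ioo le_rfl hx₀0.le
  have hτfacts : ∀ x ∈ Ioo L x₀, 0 ≤ τ x ∧ δ ≤ t - τ x ∧ t - τ x ≤ t := by
    intro x hx
    have h1 := (hτmem x (hsub hx)).1
    have h2 := (hform x hx).2
    refine ⟨h1, ?_, by linarith⟩
    simp only [hδdef]; linarith
  have hrange : ∀ x ∈ Ioo L x₀, c₁ ≤ deriv g (u x) ∧ deriv g (u x) ≤ c₂ := by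
    intro x hx
    obtain ⟨h0, hge, hle⟩ := hτfacts x hx
    have hpos : 0 < t - τ x := lt_of_lt_of_le hδ hge
    rw [(hform x hx).1]
    constructor
    · rw [hc₁def, div_le_div_iff₀ hδ hpos]
      nlinarith [hx.1, hδ.le, hge]
    · rw [hc₂def, div_le_div_iff₀ hpos ht]
      nlinarith [hx.2, hx.1, hle, hpos.le]
  -- differentiability package for g
  have hg2 : ContDiff ℝ ((1 : ℕ) + 1) g := by exact_mod_cast hg
  have hg1 : ContDiff ℝ 1 (deriv g) := (contDiff_succ_iff_deriv.mp hg2).2.2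
  have hgdiff : Differentiable ℝ g := (contDiff_succ_iff_deriv.mp hg2).1
  have hg'diff : Differentiable ℝ (deriv g) := (contDiff_one_iff_deriv.mp hg1).1
  have hg''cont : Continuous (deriv (deriv g)) := (contDiff_one_iff_deriv.mp hg1).2
  have hg'cont : Continuous (deriv g) := hg'diff.continuous
  have hg'mono : StrictMono (deriv g) :=
    strictMonoOn_univ.mp
      (hgconv.strictMonoOn_deriv fun x _ => hgdiff.differentiableAt)
  -- midpoint of (L, x₀)
  set x₁ : ℝ := (L + x₀) / 2 with hx₁def
  clear_value x₁
  have hx₁mem : x₁ ∈ Ioo L x₀ :=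
    ⟨by simp only [hx₁def]; linarith, by simp only [hx₁def]; linarith⟩
  have hc₁c₂ : c₁ ≤ c₂ := le_trans (hrange x₁ hx₁mem).1 (hrange x₁ hx₁mem).2
  -- MVT-based slope step
  have hslopekey : ∀ β : ℝ, ∀ v w : ℝ, v < w →
      (∀ ξ ∈ Ioo v w, β ≤ deriv (deriv g) ξ) →
      β * (w - v) ≤ deriv g w - deriv g v := by
    intro β v w hvw hβ
    obtain ⟨ξ, hξmem, hξ⟩ := exists_deriv_eq_slope (deriv g) hvw
      hg'cont.continuousOn hg'diff.differentiableOn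
    have h1 : β ≤ (deriv g w - deriv g v) / (w - v) := hξ ▸ hβ ξ hξmem
    have h2 : 0 < w - v := by linarith
    calc β * (w - v) ≤ ((deriv g w - deriv g v) / (w - v)) * (w - v) :=
          mul_le_mul_of_nonneg_right h1 h2.le
      _ = deriv g w - deriv g v := div_mul_cancel₀ _ h2.ne'
  -- the key inverse-Lipschitz estimate
  have hαkey : ∃ α > (0:ℝ), ∀ x ∈ Ioo L x₀, ∀ y ∈ Ioo L x₀, u x ≤ u y →
      α * (u y - u x) ≤ deriv g (u y) - deriv g (u x) := by
    rcases hgH with ⟨α, hα, hαle⟩ | hzero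
    · refine ⟨α, hα, fun x hx y hy hxy => ?_⟩
      rcases eq_or_lt_of_le hxy with heq | hlt
      · rw [heq]; simp
      · exact hslopekey α _ _ hlt fun ξ _ => hαle ξ
    · -- Case 2: build a compact interval [a, b] containing the range of u on (L, x₀)
      -- a point far to the left where deriv g < c₁
      have hexa : ∃ a : ℝ, deriv g a < c₁ := by
        have hev : ∀ᶠ q in Filter.cocompact ℝ, |g 0| + |c₁| + 1 ≤ g q / |q| :=
          hgsup.eventually_ge_atTop _
        obtain ⟨K, hKc, hKsub⟩ := Filter.mem_cocompact.mp hev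
        obtain ⟨R, hR⟩ := hKc.isBounded.subset_closedBall 0
        set p : ℝ := -(max R 1) - 1 with hpdef
        have hp1 : 1 ≤ -p := by
          have := le_max_right R 1
          simp only [hpdef]; linarith
        have hpneg : p < 0 := by linarith
        have hpK : p ∉ K := by
          intro hmem
          have h1 := hR hmem
          rw [Metric.mem_closedBall, Real.dist_eq, sub_zero] at h1
          rw [abs_of_neg hpneg] at h1
          have := le_max_left R 1
          simp only [hpdef] at h1
          linarith
        have hpS : |g 0| + |c₁| + 1 ≤ g p / |p| := hKsub hpK
        have habs : |p| = -p := abs_of_neg hpneg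
        have habs' : (0:ℝ) < -p := by linarith
        have hgp : (|g 0| + |c₁| + 1) * (-p) ≤ g p := by
          rw [← habs] at habs' ⊢
          exact (le_div_iff₀ habs').mp hpS
        have hslope := hgconv.deriv_lt_slope (mem_univ p) (mem_univ 0) hpneg
          hgdiff.differentiableAt
        rw [slope_def_field] at hslope
        refine ⟨p, lt_of_lt_of_le hslope ?_⟩
        rw [div_le_iff₀ (by linarith : (0:ℝ) < 0 - p)]
        have h1 : g 0 ≤ |g 0| := le_abs_self _
        have h2 : -|c₁| ≤ c₁ := neg_abs_le _
        nlinarith [abs_nonneg (g 0), abs_nonneg c₁]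
      obtain ⟨a, ha⟩ := hexa
      -- deriv g vanishes at the minimizer θg
      have hθg0 : deriv g θg = 0 := by
        have hmin : IsLocalMin g θg := by
          refine Filter.Eventually.of_forall fun z => ?_
          rcases eq_or_ne z θg with rfl | hz
          · exact le_rfl
          · exact (hθg z hz).le
        exact hmin.deriv_eq_zero
      have hux₁c₂ : deriv g (u x₁) ≤ c₂ := (hrange x₁ hx₁mem).2
      have hux₁c₁ : c₁ ≤ deriv g (u x₁) := (hrange x₁ hx₁mem).1
      have hux₁θg : u x₁ ≤ θg := hu₁ x₁ (hsub hx₁mem)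
      -- a point b with deriv g b = c₂ / 2 (intermediate value)
      have hIVT : c₂ / 2 ∈ deriv g '' Icc (u x₁) θg := by
        apply intermediate_value_Icc hux₁θg hg'cont.continuousOn
        rw [hθg0]
        exact ⟨by linarith, by linarith⟩
      obtain ⟨b, _hbmem, hb⟩ := hIVT
      have hgab : deriv g a < deriv g b := by rw [hb]; linarith
      have hab : a < b := hg'mono.lt_iff_lt.mp hgab
      -- u maps (L, x₀) into [a, b]
      have huab : ∀ x ∈ Ioo L x₀, u x ∈ Icc a b := by
        intro x hx
        obtain ⟨hr1, hr2⟩ := hrange x hx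
        constructor
        · exact (hg'mono.lt_iff_lt.mp (by linarith : deriv g a < deriv g (u x))).le
        · exact (hg'mono.lt_iff_lt.mp (by rw [hb]; linarith : deriv g (u x) < deriv g b)).le
      -- second derivative is positive on [a, b]
      have hpos : ∀ q ∈ Icc a b, 0 < deriv (deriv g) q := by
        intro q hq
        have hnn : 0 ≤ deriv (deriv g) q := by
          have h' : HasDerivAt (deriv g) (deriv (deriv g) q) q := (hg'diff q).hasDerivAt
          have htend := hasDerivAt_iff_tendsto_slope.mp h'
          refine ge_of_tendsto htend ?_
          refine Filter.eventually_of_mem self_mem_nhdsWithin fun y hy => ?_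
          have hy' : y ≠ q := hy
          rw [slope_def_field]
          rcases lt_or_gt_of_ne hy' with h | h
          · apply div_nonneg_of_nonpos
            · linarith [hg'mono.le_iff_le.mpr h.le]
            · linarith
          · apply div_nonneg
            · linarith [hg'mono.le_iff_le.mpr h.le]
            · linarith
        rcases hnn.lt_or_eq with h | h
        · exact h
        · exfalso
          have h0 := hzero q h.symm
          have hqb : deriv g q ≤ deriv g b := hg'mono.le_iff_le.mpr hq.2
          rw [h0, hb] at hqb
          linarith
      obtain ⟨p₀, hp₀mem, hp₀min⟩ := isCompact_Icc.exists_isMinOn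
        (nonempty_Icc.mpr hab.le) hg''cont.continuousOn
      refine ⟨deriv (deriv g) p₀, hpos p₀ hp₀mem, ?_⟩
      intro x hx y hy hxy
      rcases eq_or_lt_of_le hxy with heq | hlt
      · rw [heq]; simp
      · refine hslopekey _ _ _ hlt fun ξ hξ => ?_
        have hξab : ξ ∈ Icc a b :=
          ⟨(huab x hx).1.trans hξ.1.le, hξ.2.le.trans (huab y hy).2⟩
        exact isMinOn_iff.mp hp₀min ξ hξab
  obtain ⟨α, hα, hkey⟩ := hαkey
  have hαinv : 0 ≤ 1 / α := (one_div_pos.mpr hα).le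
  -- absolute-value version of the key estimate
  have hkey2 : ∀ x ∈ Ioo L x₀, ∀ y ∈ Ioo L x₀,
      |u y - u x| ≤ (1 / α) * |deriv g (u y) - deriv g (u x)| := by
    have base : ∀ x ∈ Ioo L x₀, ∀ y ∈ Ioo L x₀, u x ≤ u y →
        |u y - u x| ≤ (1 / α) * |deriv g (u y) - deriv g (u x)| := by
      intro x hx y hy hle
      have h1 := hkey x hx y hy hle
      have h2 : deriv g (u y) - deriv g (u x) ≤ |deriv g (u y) - deriv g (u x)| := le_abs_self _
      rw [abs_of_nonneg (by linarith : (0:ℝ) ≤ u y - u x)]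
      rw [show (1 / α) * |deriv g (u y) - deriv g (u x)| =
        |deriv g (u y) - deriv g (u x)| / α from by ring, le_div_iff₀ hα]
      nlinarith
    intro x hx y hy
    rcases le_total (u x) (u y) with hle | hle
    · exact base x hx y hy hle
    · rw [abs_sub_comm (u y) (u x), abs_sub_comm (deriv g (u y)) (deriv g (u x))]
      exact base y hy x hx hle
  -- bound on the variation of the explicit formula x / (t - τ x)
  have hw : ∀ x ∈ Ioo L x₀, ∀ y ∈ Ioo L x₀, x ≤ y →
      |deriv g (u y) - deriv g (u x)| ≤
        (1 / δ) * (y - x) + ((-L) / δ ^ 2) * (τ y - τ x) := by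
    intro x hx y hy hxy
    obtain ⟨hτx0, hτxδ, hτxt⟩ := hτfacts x hx
    obtain ⟨hτy0, hτyδ, hτyt⟩ := hτfacts y hy
    have hA : 0 < t - τ x := lt_of_lt_of_le hδ hτxδ
    have hB : 0 < t - τ y := lt_of_lt_of_le hδ hτyδ
    have hττ : τ x ≤ τ y := hτmono (hsub hx) (hsub hy) hxy
    rw [(hform x hx).1, (hform y hy).1]
    have e1 : y / (t - τ y) - x / (t - τ x) =
        (y - x) / (t - τ y) + (x * (τ y - τ x)) / ((t - τ x) * (t - τ y)) := by
      field_simp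
      ring
    rw [e1]
    have hterm1 : |(y - x) / (t - τ y)| ≤ (1 / δ) * (y - x) := by
      rw [abs_of_nonneg (div_nonneg (by linarith) hB.le)]
      rw [show (1 / δ) * (y - x) = (y - x) / δ from by ring]
      exact div_le_div₀ (by linarith) le_rfl hδ hτyδ
    have hterm2 : |(x * (τ y - τ x)) / ((t - τ x) * (t - τ y))| ≤
        ((-L) / δ ^ 2) * (τ y - τ x) := by
      have hx0 : x < 0 := (hsub hx).2
      have hnum : x * (τ y - τ x) ≤ 0 := mul_nonpos_of_nonpos_of_nonneg hx0.le (by linarith)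
      have hden : 0 < (t - τ x) * (t - τ y) := mul_pos hA hB
      rw [abs_of_nonpos (div_nonpos_of_nonpos_of_nonneg hnum hden.le)]
      rw [show -((x * (τ y - τ x)) / ((t - τ x) * (t - τ y))) =
        ((-x) * (τ y - τ x)) / ((t - τ x) * (t - τ y)) from by ring]
      rw [show ((-L) / δ ^ 2) * (τ y - τ x) = ((-L) * (τ y - τ x)) / (δ * δ) from by ring]
      exact div_le_div₀ (mul_nonneg (by linarith) (by linarith))
        (mul_le_mul_of_nonneg_right (by linarith [hx.1]) (by linarith))
        (mul_pos hδ hδ) (mul_le_mul hτxδ hτyδ hδ.le hA.le)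
    calc |(y - x) / (t - τ y) + (x * (τ y - τ x)) / ((t - τ x) * (t - τ y))|
        ≤ |(y - x) / (t - τ y)| + |(x * (τ y - τ x)) / ((t - τ x) * (t - τ y))| := abs_add_le _ _
      _ ≤ (1 / δ) * (y - x) + ((-L) / δ ^ 2) * (τ y - τ x) := add_le_add hterm1 hterm2
  -- the constant value of u on (x₀, 0)
  set x₂ : ℝ := x₀ / 2 with hx₂def
  clear_value x₂
  have hx₂mem : x₂ ∈ Ioo x₀ (0:ℝ) :=
    ⟨by simp only [hx₂def]; linarith, by simp only [hx₂def]; linarith⟩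
  have hx₂mem' : x₂ ∈ Ioo L (0:ℝ) := ⟨by linarith [hx₂mem.1], hx₂mem.2⟩
  have huconst : ∀ z ∈ Ioo x₀ (0:ℝ), u z = u x₂ := fun z hz => hconst z hz x₂ hx₂mem
  -- uniform bound on oscillation of u over (L, 0)
  set R₀ : ℝ := (1 / α) * (c₂ - c₁) + |u x₀ - u x₁| + |u x₂ - u x₁| with hR₀def
  clear_value R₀
  have hc₂c₁nn : 0 ≤ (1 / α) * (c₂ - c₁) := mul_nonneg hαinv (by linarith)
  have hR₀nn : 0 ≤ R₀ := by
    simp only [hR₀def]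
    linarith [abs_nonneg (u x₀ - u x₁), abs_nonneg (u x₂ - u x₁)]
  have hnear : ∀ p ∈ Ioo L (0:ℝ), |u p - u x₁| ≤ R₀ := by
    intro p hp
    have habsnn : 0 ≤ |u x₀ - u x₁| := abs_nonneg _
    have habsnn2 : 0 ≤ |u x₂ - u x₁| := abs_nonneg _
    rcases lt_trichotomy p x₀ with hpx | hpx | hpx
    · have hpmem : p ∈ Ioo L x₀ := ⟨hp.1, hpx⟩
      have h1 := hkey2 x₁ hx₁mem p hpmem
      have h2 : |deriv g (u p) - deriv g (u x₁)| ≤ c₂ - c₁ := by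
        obtain ⟨ha1, ha2⟩ := hrange p hpmem
        obtain ⟨hb1, hb2⟩ := hrange x₁ hx₁mem
        rw [abs_le]
        constructor <;> linarith
      have h3 : (1 / α) * |deriv g (u p) - deriv g (u x₁)| ≤ (1 / α) * (c₂ - c₁) :=
        mul_le_mul_of_nonneg_left h2 hαinv
      simp only [hR₀def]
      linarith
    · rw [hpx]
      simp only [hR₀def]
      linarith
    · rw [huconst p ⟨hpx, hp.2⟩]
      simp only [hR₀def]
      linarith
  have hfar : ∀ p ∈ Ioo L (0:ℝ), ∀ q ∈ Ioo L (0:ℝ), |u q - u p| ≤ 2 * R₀ := by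
    intro p hp q hq
    have h1 := hnear p hp
    have h2 := hnear q hq
    calc |u q - u p| = |(u q - u x₁) + (u x₁ - u p)| := by ring_nf
      _ ≤ |u q - u x₁| + |u x₁ - u p| := abs_add_le _ _
      _ ≤ R₀ + R₀ := by
          rw [abs_sub_comm (u x₁) (u p)]
          exact add_le_add h2 h1
      _ = 2 * R₀ := by ring
  -- the dominating monotone function
  set Φ : ℝ → ℝ := fun z => (1 / α) * ((1 / δ) * z + ((-L) / δ ^ 2) * τ z) +
    (2 * R₀) * ((if x₀ ≤ z then (1:ℝ) else 0) + (if x₀ < z then (1:ℝ) else 0)) with hΦdef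
  clear_value Φ
  have hx₀memIoo : x₀ ∈ Ioo L (0:ℝ) := ⟨hLx₀, hx₀0⟩
  -- monotonicity pieces of Φ
  have hΦ1mono : ∀ x ∈ Ioo L (0:ℝ), ∀ y ∈ Ioo L (0:ℝ), x ≤ y →
      0 ≤ (1 / α) * ((1 / δ) * y + ((-L) / δ ^ 2) * τ y) -
        (1 / α) * ((1 / δ) * x + ((-L) / δ ^ 2) * τ x) := by
    intro x hx y hy hxy
    have hττ : τ x ≤ τ y := hτmono hx hy hxy
    have hmLδ : 0 ≤ (-L) / δ ^ 2 := div_nonneg (by linarith) (by positivity)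
    have h1 : 0 ≤ (1 / δ) * (y - x) := mul_nonneg (by positivity) (by linarith)
    have h2 : 0 ≤ ((-L) / δ ^ 2) * (τ y - τ x) := mul_nonneg hmLδ (by linarith)
    have h3 : 0 ≤ (1 / α) * ((1 / δ) * (y - x) + ((-L) / δ ^ 2) * (τ y - τ x)) :=
      mul_nonneg hαinv (by linarith)
    have heq : (1 / α) * ((1 / δ) * y + ((-L) / δ ^ 2) * τ y) -
        (1 / α) * ((1 / δ) * x + ((-L) / δ ^ 2) * τ x) =
        (1 / α) * ((1 / δ) * (y - x) + ((-L) / δ ^ 2) * (τ y - τ x)) := by ring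
    rw [heq]
    exact h3
  have hstepmono : ∀ x y : ℝ, x ≤ y →
      ((if x₀ ≤ x then (1:ℝ) else 0) + (if x₀ < x then (1:ℝ) else 0)) ≤
      ((if x₀ ≤ y then (1:ℝ) else 0) + (if x₀ < y then (1:ℝ) else 0)) := by
    intro x y hxy
    have h1 : (if x₀ ≤ x then (1:ℝ) else 0) ≤ (if x₀ ≤ y then (1:ℝ) else 0) := by
      by_cases h : x₀ ≤ x
      · rw [if_pos h, if_pos (h.trans hxy)]
      · rw [if_neg h]
        by_cases h' : x₀ ≤ y <;> simp [h']
    have h2 : (if x₀ < x then (1:ℝ) else 0) ≤ (if x₀ < y then (1:ℝ) else 0) := by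
      by_cases h : x₀ < x
      · rw [if_pos h, if_pos (h.trans_le hxy)]
      · rw [if_neg h]
        by_cases h' : x₀ < y <;> simp [h']
    exact add_le_add h1 h2
  have hstepbd : ∀ z : ℝ,
      0 ≤ ((if x₀ ≤ z then (1:ℝ) else 0) + (if x₀ < z then (1:ℝ) else 0)) ∧
      ((if x₀ ≤ z then (1:ℝ) else 0) + (if x₀ < z then (1:ℝ) else 0)) ≤ 2 := by
    intro z
    constructor <;> (split_ifs <;> norm_num)
  -- the domination inequality
  have hdom : ∀ x ∈ Ioo L (0:ℝ), ∀ y ∈ Ioo L (0:ℝ), x ≤ y → |u y - u x| ≤ Φ y - Φ x := by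
    intro x hx y hy hxy
    have hττ : τ x ≤ τ y := hτmono hx hy hxy
    have hΦ1 := hΦ1mono x hx y hy hxy
    have hstepd : 0 ≤ (2 * R₀) *
        (((if x₀ ≤ y then (1:ℝ) else 0) + (if x₀ < y then (1:ℝ) else 0)) -
         ((if x₀ ≤ x then (1:ℝ) else 0) + (if x₀ < x then (1:ℝ) else 0))) :=
      mul_nonneg (by linarith) (by linarith [hstepmono x y hxy])
    simp only [hΦdef]
    rcases lt_or_ge y x₀ with hyx₀ | hyx₀
    · -- both x, y in (L, x₀)
      have hxmem : x ∈ Ioo L x₀ := ⟨hx.1, lt_of_le_of_lt hxy hyx₀⟩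
      have hymem : y ∈ Ioo L x₀ := ⟨hy.1, hyx₀⟩
      have h1 := hkey2 x hxmem y hymem
      have h2 := hw x hxmem y hymem hxy
      have h3 : (1 / α) * |deriv g (u y) - deriv g (u x)| ≤
          (1 / α) * ((1 / δ) * (y - x) + ((-L) / δ ^ 2) * (τ y - τ x)) :=
        mul_le_mul_of_nonneg_left h2 hαinv
      have hsx : ¬ (x₀ ≤ x) := by linarith
      have hsx' : ¬ (x₀ < x) := by linarith
      have hsy : ¬ (x₀ ≤ y) := by linarith
      have hsy' : ¬ (x₀ < y) := by linarith
      rw [if_neg hsx, if_neg hsx', if_neg hsy, if_neg hsy']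
      have heq : (1 / α) * ((1 / δ) * y + ((-L) / δ ^ 2) * τ y) + 2 * R₀ * (0 + 0) -
          ((1 / α) * ((1 / δ) * x + ((-L) / δ ^ 2) * τ x) + 2 * R₀ * (0 + 0)) =
          (1 / α) * ((1 / δ) * (y - x) + ((-L) / δ ^ 2) * (τ y - τ x)) := by ring
      rw [heq]
      linarith
    · rcases lt_or_ge x x₀ with hxx₀ | hxx₀
      · -- x < x₀ ≤ y : use the first jump
        have h1 : |u y - u x| ≤ 2 * R₀ := hfar x hx y hy
        have hsx : ¬ (x₀ ≤ x) := by linarith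
        have hsx' : ¬ (x₀ < x) := by linarith
        rw [if_neg hsx, if_neg hsx', if_pos hyx₀]
        have h2 : (0:ℝ) ≤ (if x₀ < y then (1:ℝ) else 0) := by split <;> norm_num
        have h3 : 0 ≤ 2 * R₀ := by linarith
        have h4 : 0 ≤ 2 * R₀ * (if x₀ < y then (1:ℝ) else 0) := mul_nonneg h3 h2
        linarith [hΦ1]
      · -- x₀ ≤ x ≤ y
        rcases eq_or_lt_of_le hxx₀ with heq | hlt
        · -- x = x₀
          rcases eq_or_lt_of_le hxy with heq2 | hlt2
          · rw [heq2]
            simp only [sub_self, abs_zero]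
            linarith [hstepd, hΦ1]
          · -- x = x₀ < y : use the second jump
            have h1 : |u y - u x| ≤ 2 * R₀ := hfar x hx y hy
            have hx₀x : x₀ < y := heq ▸ hlt2
            rw [if_pos hxx₀, if_pos hyx₀, if_pos hx₀x,
              if_neg (show ¬ x₀ < x by rw [← heq]; exact lt_irrefl _)]
            linarith [hΦ1]
        · -- x₀ < x ≤ y : u is constant there
          have hux : u x = u x₂ := huconst x ⟨hlt, hx.2⟩
          have huy : u y = u x₂ := huconst y ⟨hlt.trans_le hxy, hy.2⟩
          rw [huy, hux, sub_self, abs_zero]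
          linarith [hstepd, hΦ1]
  -- and the uniform bound
  have hC : ∀ x ∈ Ioo L (0:ℝ), ∀ y ∈ Ioo L (0:ℝ), x ≤ y →
      Φ y - Φ x ≤ (1 / α) * ((1 / δ) * (-L) + ((-L) / δ ^ 2) * t) + (2 * R₀) * 2 := by
    intro x hx y hy hxy
    have hτx := hτmem x hx
    have hτy := hτmem y hy
    have h1 : (1 / δ) * (y - x) ≤ (1 / δ) * (-L) :=
      mul_le_mul_of_nonneg_left (by linarith [hx.1, hy.2]) (by positivity)
    have hmLδ : 0 ≤ (-L) / δ ^ 2 := div_nonneg (by linarith) (by positivity)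
    have h2 : ((-L) / δ ^ 2) * (τ y - τ x) ≤ ((-L) / δ ^ 2) * t :=
      mul_le_mul_of_nonneg_left (by linarith [hτx.1, hτy.2]) hmLδ
    have h3 : (1 / α) * ((1 / δ) * (y - x) + ((-L) / δ ^ 2) * (τ y - τ x)) ≤
        (1 / α) * ((1 / δ) * (-L) + ((-L) / δ ^ 2) * t) :=
      mul_le_mul_of_nonneg_left (by linarith) hαinv
    have h4 := (hstepbd x).1
    have h5 := (hstepbd y).2
    have h6 : (2 * R₀) * (((if x₀ ≤ y then (1:ℝ) else 0) + (if x₀ < y then (1:ℝ) else 0)) -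
        ((if x₀ ≤ x then (1:ℝ) else 0) + (if x₀ < x then (1:ℝ) else 0))) ≤ (2 * R₀) * 2 :=
      mul_le_mul_of_nonneg_left (by linarith) (by linarith)
    simp only [hΦdef]
    have heq' : ((1 / α) * ((1 / δ) * y + ((-L) / δ ^ 2) * τ y) +
        2 * R₀ * ((if x₀ ≤ y then (1:ℝ) else 0) + (if x₀ < y then (1:ℝ) else 0))) -
        ((1 / α) * ((1 / δ) * x + ((-L) / δ ^ 2) * τ x) +
        2 * R₀ * ((if x₀ ≤ x then (1:ℝ) else 0) + (if x₀ < x then (1:ℝ) else 0))) =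
        (1 / α) * ((1 / δ) * (y - x) + ((-L) / δ ^ 2) * (τ y - τ x)) +
        (2 * R₀) * (((if x₀ ≤ y then (1:ℝ) else 0) + (if x₀ < y then (1:ℝ) else 0)) -
        ((if x₀ ≤ x then (1:ℝ) else 0) + (if x₀ < x then (1:ℝ) else 0))) := by ring
    rw [heq']
    linarith [h3, h6]
  exact bv_of_dominated hdom hC
end

section
/- Let t > 0, 0 < a ≤ t, M ≥ 0 and ε > 0. Suppose τ : (0,ε) → [a,t] is nonincreasing and z : (0,ε) → [−M,0] is nondecreasing. Then the total variation on (0,ε) of the function x ↦ −z(x)/τ(x) is at most 2tM/a². -/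
private lemma slope_diff_bound {a t M X Y p q : ℝ} (ha : 0 < a) (haY : a ≤ Y)
    (hYX : Y ≤ X) (hXt : X ≤ t) (hpq : p ≤ q) (hq : q ≤ 0) (hp : -M ≤ p) :
    |(-q) / Y - (-p) / X| ≤ (q - p) / a + M * (X - Y) / a ^ 2 := by
  have hY0 : 0 < Y := ha.trans_le haY
  have hX0 : 0 < X := hY0.trans_le hYX
  have hp0 : p ≤ 0 := hpq.trans hq
  have hnum : 0 ≤ (-p) * (X - Y) := mul_nonneg (by linarith) (by linarith)
  have hid : (-q) / Y - (-p) / X = (p - q) / Y + (-p) * (X - Y) / (X * Y) := by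
    field_simp
    ring
  rw [hid]
  calc |(p - q) / Y + (-p) * (X - Y) / (X * Y)|
      ≤ |(p - q) / Y| + |(-p) * (X - Y) / (X * Y)| := abs_add_le _ _
    _ = (q - p) / Y + (-p) * (X - Y) / (X * Y) := by
        rw [abs_div, abs_div, abs_of_pos hY0, abs_of_pos (mul_pos hX0 hY0),
          abs_of_nonpos (sub_nonpos.2 hpq), abs_of_nonneg hnum]
        ring
    _ ≤ (q - p) / a + M * (X - Y) / a ^ 2 := by
        refine add_le_add (div_le_div₀ (by linarith) le_rfl ha haY)
          (div_le_div₀ (by nlinarith) (by nlinarith) (by positivity) ?_)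
        nlinarith

/-- Key quantitative estimate (3.38)/(3.43): variation bound for the characteristic
slope `x ↦ -z x / τ x` on `(0, ε)`. -/
theorem variation_bound_slope_interface
    (t a M ε : ℝ) (ht : 0 < t) (ha : 0 < a) (hat : a ≤ t) (hM : 0 ≤ M) (hε : 0 < ε)
    (τ z : ℝ → ℝ)
    (hτmem : ∀ x ∈ Set.Ioo (0:ℝ) ε, τ x ∈ Set.Icc a t)
    (hτanti : AntitoneOn τ (Set.Ioo (0:ℝ) ε))
    (hzmem : ∀ x ∈ Set.Ioo (0:ℝ) ε, z x ∈ Set.Icc (-M) (0:ℝ))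
    (hzmono : MonotoneOn z (Set.Ioo (0:ℝ) ε)) :
    eVariationOn (fun x => -(z x) / τ x) (Set.Ioo (0:ℝ) ε) ≤
      ENNReal.ofReal (2 * t * M / a ^ 2) := by
  set f : ℝ → ℝ := fun x => -(z x) / τ x with hf
  rw [eVariationOn]
  apply iSup_le
  rintro ⟨n, u, hu, us⟩
  set g : ℕ → ℝ := fun i => (z (u i) - z (u 0)) / a + M * (τ (u 0) - τ (u i)) / a ^ 2 with hg
  have key : ∀ i, dist (f (u (i + 1))) (f (u i)) ≤ g (i + 1) - g i := by
    intro i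
    have hx := us i
    have hy := us (i + 1)
    have hxy : u i ≤ u (i + 1) := hu (Nat.le_succ i)
    obtain ⟨hτx1, hτx2⟩ := hτmem _ hx
    obtain ⟨hzy1, hzy2⟩ := hzmem _ hy
    have hττ : τ (u (i + 1)) ≤ τ (u i) := hτanti hx hy hxy
    have hzz : z (u i) ≤ z (u (i + 1)) := hzmono hx hy hxy
    have hb := slope_diff_bound (t := t) ha ((hτmem _ hy).1) hττ hτx2 hzz hzy2
      (le_trans (hzmem _ hx).1 (hzmono hx hx le_rfl))
    rw [Real.dist_eq, hf, hg]
    simp only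
    calc |(-z (u (i + 1))) / τ (u (i + 1)) - (-z (u i)) / τ (u i)|
        ≤ (z (u (i + 1)) - z (u i)) / a + M * (τ (u i) - τ (u (i + 1))) / a ^ 2 := hb
      _ = (z (u (i + 1)) - z (u 0)) / a + M * (τ (u 0) - τ (u (i + 1))) / a ^ 2 -
            ((z (u i) - z (u 0)) / a + M * (τ (u 0) - τ (u i)) / a ^ 2) := by ring
  calc ∑ i ∈ Finset.range n, edist (f (u (i + 1))) (f (u i))
      = ENNReal.ofReal (∑ i ∈ Finset.range n, dist (f (u (i + 1))) (f (u i))) := by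
        rw [ENNReal.ofReal_sum_of_nonneg (fun i _ => dist_nonneg)]
        simp [edist_dist]
    _ ≤ ENNReal.ofReal (2 * t * M / a ^ 2) := by
        apply ENNReal.ofReal_le_ofReal
        calc ∑ i ∈ Finset.range n, dist (f (u (i + 1))) (f (u i))
            ≤ ∑ i ∈ Finset.range n, (g (i + 1) - g i) :=
              Finset.sum_le_sum fun i _ => key i
          _ = g n - g 0 := Finset.sum_range_sub g n
          _ ≤ 2 * t * M / a ^ 2 := by
              obtain ⟨hτ01, hτ02⟩ := hτmem _ (us 0)
              obtain ⟨hτn1, hτn2⟩ := hτmem _ (us n)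
              obtain ⟨hz01, hz02⟩ := hzmem _ (us 0)
              obtain ⟨hzn1, hzn2⟩ := hzmem _ (us n)
              have hgn : g n - g 0 = (z (u n) - z (u 0)) / a +
                  M * (τ (u 0) - τ (u n)) / a ^ 2 := by
                rw [hg]; simp only; ring
              rw [hgn]
              have h1 : (z (u n) - z (u 0)) / a ≤ M * t / a ^ 2 := by
                rw [div_le_div_iff₀ ha (by positivity)]
                have hA : (z (u n) - z (u 0)) * a ^ 2 ≤ M * a ^ 2 := by nlinarith [sq_nonneg a]
                have hB : M * a ^ 2 ≤ M * t * a := by nlinarith [mul_le_mul_of_nonneg_left hat hM]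
                linarith
              have h2 : M * (τ (u 0) - τ (u n)) / a ^ 2 ≤ M * t / a ^ 2 := by
                gcongr
                linarith
              linarith [h1, h2, (by ring : M * t / a ^ 2 + M * t / a ^ 2 = 2 * t * M / a ^ 2)]
end

section
/- Let 0 < ε < R, t > 0 and 0 ≤ b < t. Suppose τ : (ε,R) → [0,b] is nonincreasing. Then the total variation on (ε,R) of the function x ↦ x/(t − τ(x)) is at most 3Rt/(t − b)². -/
/-- Key quantitative estimate (3.44)/(3.50): variation bound for the characteristic
slope `x ↦ x / (t - τ x)` on `(ε, R)`. -/
theorem variation_bound_slope_away_from_interface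
    (ε R t b : ℝ) (hε : 0 < ε) (hεR : ε < R) (ht : 0 < t) (hb : 0 ≤ b) (hbt : b < t)
    (τ : ℝ → ℝ)
    (hτmem : ∀ x ∈ Set.Ioo ε R, τ x ∈ Set.Icc (0:ℝ) b)
    (hτanti : AntitoneOn τ (Set.Ioo ε R)) :
    eVariationOn (fun x => x / (t - τ x)) (Set.Ioo ε R) ≤
      ENNReal.ofReal (3 * R * t / (t - b) ^ 2) := by
  have htb : 0 < t - b := by linarith
  have hR : 0 < R := lt_trans hε hεR
  set g : ℝ → ℝ := fun x => (t - τ x)⁻¹ with hg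
  have hgpos : ∀ x ∈ Set.Ioo ε R, 0 < t - τ x := fun x hx => by
    have := (hτmem x hx).2; linarith
  have hgle : ∀ x ∈ Set.Ioo ε R, g x ≤ (t - b)⁻¹ := fun x hx => by
    have h1 := hgpos x hx
    have h2 := (hτmem x hx).2
    exact inv_anti₀ htb (by linarith)
  have hg0 : ∀ x ∈ Set.Ioo ε R, 0 ≤ g x := fun x hx =>
    le_of_lt (inv_pos.mpr (hgpos x hx))
  have hganti : ∀ x ∈ Set.Ioo ε R, ∀ y ∈ Set.Ioo ε R, x ≤ y → g y ≤ g x := by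
    intro x hx y hy hxy
    have := hτanti hx hy hxy
    exact inv_anti₀ (hgpos x hx) (by linarith)
  have key : ∀ x ∈ Set.Ioo ε R, ∀ y ∈ Set.Ioo ε R, x ≤ y →
      |y / (t - τ y) - x / (t - τ x)| ≤ (y - x) * (t - b)⁻¹ + R * (g x - g y) := by
    intro x hx y hy hxy
    have hgy0 := hg0 y hy
    have hgxy := hganti x hx y hy hxy
    have hxR : x ≤ R := le_of_lt hx.2
    have hx0 : 0 ≤ x := le_of_lt (lt_trans hε hx.1)
    have e : y / (t - τ y) - x / (t - τ x)
        = (y - x) * g y - x * (g x - g y) := by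
      simp only [hg, div_eq_mul_inv]; ring
    rw [e]
    have hA : 0 ≤ (y - x) * g y := mul_nonneg (by linarith) hgy0
    have hB : 0 ≤ x * (g x - g y) := mul_nonneg hx0 (by linarith)
    calc |(y - x) * g y - x * (g x - g y)|
        ≤ |(y - x) * g y| + |x * (g x - g y)| := abs_sub _ _
      _ = (y - x) * g y + x * (g x - g y) := by rw [abs_of_nonneg hA, abs_of_nonneg hB]
      _ ≤ (y - x) * (t - b)⁻¹ + R * (g x - g y) := by
          have t1 : (y - x) * g y ≤ (y - x) * (t - b)⁻¹ :=
            mul_le_mul_of_nonneg_left (hgle y hy) (by linarith)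
          have t2 : x * (g x - g y) ≤ R * (g x - g y) :=
            mul_le_mul_of_nonneg_right hxR (by linarith)
          linarith
  refine iSup_le ?_
  rintro ⟨n, u, hu, us⟩
  simp only
  have hedist : ∀ i, edist ((fun x => x / (t - τ x)) (u (i + 1)))
      ((fun x => x / (t - τ x)) (u i))
      = ENNReal.ofReal |u (i + 1) / (t - τ (u (i + 1))) - u i / (t - τ (u i))| := by
    intro i
    rw [edist_dist, Real.dist_eq]
  calc (∑ i ∈ Finset.range n, edist ((fun x => x / (t - τ x)) (u (i + 1)))
        ((fun x => x / (t - τ x)) (u i)))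
      = ENNReal.ofReal (∑ i ∈ Finset.range n,
          |u (i + 1) / (t - τ (u (i + 1))) - u i / (t - τ (u i))|) := by
        rw [ENNReal.ofReal_sum_of_nonneg (fun i _ => abs_nonneg _)]
        exact Finset.sum_congr rfl fun i _ => hedist i
    _ ≤ ENNReal.ofReal (3 * R * t / (t - b) ^ 2) := by
        apply ENNReal.ofReal_le_ofReal
        have step : ∀ i, |u (i + 1) / (t - τ (u (i + 1))) - u i / (t - τ (u i))|
            ≤ ((u (i+1)) * (t - b)⁻¹ - (u i) * (t - b)⁻¹)
              + (R * g (u i) - R * g (u (i+1))) := by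
          intro i
          have h := key (u i) (us i) (u (i+1)) (us (i+1)) (hu (Nat.le_succ i))
          calc |u (i + 1) / (t - τ (u (i + 1))) - u i / (t - τ (u i))|
              ≤ (u (i+1) - u i) * (t - b)⁻¹ + R * (g (u i) - g (u (i+1))) := h
            _ = ((u (i+1)) * (t - b)⁻¹ - (u i) * (t - b)⁻¹)
                + (R * g (u i) - R * g (u (i+1))) := by ring
        calc (∑ i ∈ Finset.range n,
              |u (i + 1) / (t - τ (u (i + 1))) - u i / (t - τ (u i))|)
            ≤ ∑ i ∈ Finset.range n, (((u (i+1)) * (t - b)⁻¹ - (u i) * (t - b)⁻¹)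
                + (R * g (u i) - R * g (u (i+1)))) :=
              Finset.sum_le_sum fun i _ => step i
          _ = (u n * (t - b)⁻¹ - u 0 * (t - b)⁻¹) + (R * g (u 0) - R * g (u n)) := by
              rw [Finset.sum_add_distrib, Finset.sum_range_sub (fun i => u i * (t - b)⁻¹),
                Finset.sum_range_sub' (fun i => R * g (u i))]
          _ ≤ 3 * R * t / (t - b) ^ 2 := by
              have h1 : u n ≤ R := le_of_lt (us n).2
              have h2 : 0 ≤ u 0 := le_of_lt (lt_trans hε (us 0).1)
              have h3 : g (u 0) ≤ (t - b)⁻¹ := hgle (u 0) (us 0)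
              have h4 : 0 ≤ g (u n) := hg0 (u n) (us n)
              have hinv : 0 < (t - b)⁻¹ := inv_pos.mpr htb
              have hle2 : (u n * (t - b)⁻¹ - u 0 * (t - b)⁻¹) + (R * g (u 0) - R * g (u n))
                  ≤ 2 * R * (t - b)⁻¹ := by nlinarith
              refine hle2.trans ?_
              rw [div_eq_mul_inv, ← inv_pow]
              have hkey : 2 * (t - b) ≤ 3 * t := by linarith
              have : 2 * R * (t - b)⁻¹ = (2 * R * (t - b)) * ((t-b)⁻¹)^2 := by
                field_simp
              rw [this]
              have : 3 * R * t * ((t - b)⁻¹) ^ 2 = (3 * R * t) * ((t-b)⁻¹)^2 := by ring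
              rw [this]
              apply mul_le_mul_of_nonneg_right _ (by positivity)
              nlinarith
end

section
/- Let g : ℝ → ℝ be C², strictly convex, of superlinear growth, and suppose every zero of g'' is a zero of g' (i.e., g''(p) = 0 implies g'(p) = 0). Let (g')⁻¹ : ℝ → ℝ be the inverse of the strictly increasing bijection g'. Then for any compact interval [c,d] with either 0 < c or d < 0, the restriction of (g')⁻¹ to [c,d] is Lipschitz continuous. -/
/-- If `g` is C², strictly convex, of superlinear growth, and every zero of `g''` is a
zero of `g'`, then the inverse of `g'` is Lipschitz on any compact interval `[c, d]`
bounded away from `0` (i.e. with `0 < c` or `d < 0`). -/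
theorem inv_deriv_lipschitzOn_of_away_from_zero
    (g : ℝ → ℝ) (hg : ContDiff ℝ 2 g)
    (hconv : StrictConvexOn ℝ Set.univ g) (hsup : SuperlinearGrowth g)
    (hzero : ∀ p : ℝ, deriv (deriv g) p = 0 → deriv g p = 0)
    (ginv : ℝ → ℝ)
    (hginv₁ : Function.LeftInverse ginv (deriv g))
    (hginv₂ : Function.RightInverse ginv (deriv g))
    (c d : ℝ) (hcd : c ≤ d) (hsign : 0 < c ∨ d < 0) :
    ∃ K : NNReal, LipschitzOnWith K ginv (Set.Icc c d) := by
  set f := deriv g with hf_def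
  have hdiff : Differentiable ℝ g := hg.differentiable (by norm_num)
  have hf1 : ContDiff ℝ 1 f := by
    have h2 : ContDiff ℝ (1 + 1) g := by norm_num; exact hg
    exact (contDiff_succ_iff_deriv.mp h2).2.2
  have hf'cont : Continuous (deriv f) := (contDiff_one_iff_deriv.mp hf1).2
  have hf' : ∀ p : ℝ, HasDerivAt f (deriv f p) p :=
    fun p => ((hf1.differentiable (by norm_num)) p).hasDerivAt
  have hfc : Continuous f := hf1.continuous
  have hmono : StrictMono f := by
    rw [← strictMonoOn_univ]
    exact hconv.strictMonoOn_deriv (fun x _ => hdiff x)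
  have hgm : Monotone ginv := by
    intro x y hxy
    rw [← hmono.le_iff_le, hginv₂, hginv₂]
    exact hxy
  -- second derivative is nonnegative
  have hnn : ∀ p : ℝ, 0 ≤ deriv f p := by
    intro p
    have ht : Filter.Tendsto (slope f p) (nhdsWithin p {p}ᶜ) (nhds (deriv f p)) :=
      hasDerivAt_iff_tendsto_slope.mp (hf' p)
    refine ge_of_tendsto ht ?_
    filter_upwards [self_mem_nhdsWithin] with x hx
    rcases lt_or_gt_of_ne (show x ≠ p from hx) with h | h
    · rw [slope_def_field]
      have h1 : f x ≤ f p := (hmono h).le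
      have h2 : x - p < 0 := by linarith
      rw [div_nonneg_iff]; right; exact ⟨by linarith, h2.le⟩
    · rw [slope_def_field]
      exact div_nonneg (by linarith [(hmono h).le]) (by linarith)
  set a := ginv c with ha
  set b := ginv d with hb
  have hab : a ≤ b := hgm hcd
  obtain ⟨p₀, hp₀, hmin⟩ := isCompact_Icc.exists_isMinOn (Set.nonempty_Icc.mpr hab)
    hf'cont.continuousOn
  set m := deriv f p₀ with hm_def
  have key : ∀ p ∈ Set.Icc a b, f p ∈ Set.Icc c d := by
    intro p hp
    exact ⟨by simpa [ha, hginv₂ c] using hmono.monotone hp.1,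
           by simpa [hb, hginv₂ d] using hmono.monotone hp.2⟩
  have hm : 0 < m := by
    rcases (hnn p₀).lt_or_eq with h | h
    · exact h
    · exfalso
      have hfz : f p₀ = 0 := hzero p₀ h.symm
      have := key p₀ hp₀
      rw [hfz] at this
      rcases hsign with h0 | h0
      · linarith [this.1]
      · linarith [this.2]
  refine ⟨Real.toNNReal (1 / m), LipschitzOnWith.of_dist_le_mul ?_⟩
  have hcoe : (Real.toNNReal (1 / m) : ℝ) = 1 / m :=
    Real.coe_toNNReal _ (by positivity)
  -- symmetric reduction
  have main : ∀ x ∈ Set.Icc c d, ∀ y ∈ Set.Icc c d, x ≤ y →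
      ginv y - ginv x ≤ (1 / m) * (y - x) := by
    intro x hx y hy hxy
    set u := ginv x with hu
    set v := ginv y with hv
    have huv : u ≤ v := hgm hxy
    rcases huv.lt_or_eq with hlt | heq
    · obtain ⟨ξ, hξ, hslope⟩ := exists_hasDerivAt_eq_slope f (deriv f) hlt
        hfc.continuousOn (fun z _ => hf' z)
      have hξab : ξ ∈ Set.Icc a b := by
        have h1 : a ≤ u := hgm hx.1
        have h2 : v ≤ b := hgm hy.2
        exact ⟨h1.trans hξ.1.le, hξ.2.le.trans h2⟩
      have hmle : m ≤ deriv f ξ := hmin hξab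
      have hfv : f v = y := hginv₂ y
      have hfu : f u = x := hginv₂ x
      rw [hslope, hfv, hfu] at hmle
      rw [div_mul_eq_mul_div, one_mul, le_div_iff₀ hm]
      calc (v - u) * m ≤ (v - u) * ((y - x) / (v - u)) := by
            exact mul_le_mul_of_nonneg_left hmle (by linarith)
        _ = y - x := by rw [mul_comm]; exact div_mul_cancel₀ _ (by linarith : v - u ≠ 0)
    · rw [← heq]
      have : 0 ≤ (1 / m) * (y - x) := mul_nonneg (by positivity) (by linarith)
      linarith
  intro x hx y hy
  rw [Real.dist_eq, Real.dist_eq, hcoe]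
  rcases le_total x y with h | h
  · rw [abs_of_nonpos (by linarith [hgm h] : ginv x - ginv y ≤ 0),
        abs_of_nonpos (by linarith : x - y ≤ 0)]
    have := main x hx y hy h
    linarith
  · rw [abs_of_nonneg (by linarith [hgm h] : 0 ≤ ginv x - ginv y),
        abs_of_nonneg (by linarith : 0 ≤ x - y)]
    have := main y hy x hx h
    linarith
end
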